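/- arXiv:2108.04735 — 3 statements merged into one kernel-verified Lean document; each statement's English description precedes it below -/
import Mathlib

section
/- Suppose the n×n pattern A and n×m pattern B satisfy Assumption 1, and let w_{ij} ≥ 0 be costs on the nonzero positions of B (Assumption 2). Then the minimum of ||B'||_w over all patterns B' ∈ K(B) such that (A,B') is structurally controllable equals the optimal value of the integer linear program P2^ILP: minimize Σ_{e∈E_UX} w_e y_e + Σ_{i=1}^r (1 − z_i) w_i^min over y_e ∈ {0,1} (e ∈ E_XX ∪ E_UX) and z_i ∈ {0,1} subject to (C1) for each v ∈ X_L, Σ_{edges e incident to v} y_e = 1; (C2) for each u ∈ X_R ∪ U, Σ_{edges e incident to u} y_e ≤ 1; and (C3) z_i ≤ Σ_{e∈E_i} y_e for each i; here w_{(u_j,x_i^L)} = w_{ij} and w_i^min = min_{e∈E_i} w_e. -/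
/-- `(tA, tB)` is a realization of the zero/nonzero pattern `(A, B)`:
`tA i j = 0` whenever `A i j` is a fixed zero, and similarly for `tB`. -/
def IsRealization {n m : ℕ} (A : Matrix (Fin n) (Fin n) Bool) (B : Matrix (Fin n) (Fin m) Bool)
    (tA : Matrix (Fin n) (Fin n) ℝ) (tB : Matrix (Fin n) (Fin m) ℝ) : Prop :=
  (∀ i j, A i j = false → tA i j = 0) ∧ (∀ i j, B i j = false → tB i j = 0)

/-- The pair of real matrices `(tA, tB)` is controllable: the controllability matrix
`[tB, tA * tB, …, tA ^ (n-1) * tB]` has rank `n`. -/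
def Controllable {n m : ℕ} (tA : Matrix (Fin n) (Fin n) ℝ)
    (tB : Matrix (Fin n) (Fin m) ℝ) : Prop :=
  (Matrix.of fun (i : Fin n) (p : Fin n × Fin m) => (tA ^ (p.1 : ℕ) * tB) i p.2).rank = n

/-- The pattern `(A, B)` is structurally controllable: some realization is controllable. -/
def StructCont {n m : ℕ} (A : Matrix (Fin n) (Fin n) Bool)
    (B : Matrix (Fin n) (Fin m) Bool) : Prop :=
  ∃ tA tB, IsRealization A B tA tB ∧ Controllable tA tB

/-- `B' ∈ K(B)`: the nonzero positions `N(B')` of `B'` are contained in those of `B`. -/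
def InK {n m : ℕ} (B' B : Matrix (Fin n) (Fin m) Bool) : Prop :=
  ∀ i j, B' i j = true → B i j = true

/-- `‖B'‖₀`: the number of nonzero entries of the pattern `B'`. -/
def norm0 {n m : ℕ} (B' : Matrix (Fin n) (Fin m) Bool) : ℕ :=
  (Finset.univ.filter fun p : Fin n × Fin m => B' p.1 p.2 = true).card

/-- `‖B'‖_w`: the total cost of the nonzero entries of the pattern `B'`. -/
def normw {n m : ℕ} (B' : Matrix (Fin n) (Fin m) Bool) (w : Fin n → Fin m → ℝ) : ℝ :=
  ∑ p ∈ Finset.univ.filter (fun p : Fin n × Fin m => B' p.1 p.2 = true), w p.1 p.2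

/-- Reachability in the state digraph `G(A)`, which has an edge from `x_j` to `x_i`
whenever `A i j ≠ 0` (`reach A a b` means there is a directed path from `x_a` to `x_b`). -/
def reach {n : ℕ} (A : Matrix (Fin n) (Fin n) Bool) : Fin n → Fin n → Prop :=
  Relation.ReflTransGen fun a b => A b a = true

/-- `S` is (the vertex set of) a strongly connected component of the state digraph `G(A)`:
a maximal nonempty set of mutually reachable vertices. -/
def IsSCC {n : ℕ} (A : Matrix (Fin n) (Fin n) Bool) (S : Finset (Fin n)) : Prop :=
  S.Nonempty ∧ (∀ a ∈ S, ∀ b ∈ S, reach A a b) ∧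
    (∀ a ∈ S, ∀ b, reach A a b → reach A b a → b ∈ S)

/-- `S` is (the vertex set of) a source SCC of `G(A)`: an SCC with no incoming edge
from outside (an edge from `x_b` to `x_a ∈ S`, i.e. `A a b ≠ 0`, forces `x_b ∈ S`). -/
def IsSourceSCC {n : ℕ} (A : Matrix (Fin n) (Fin n) Bool) (S : Finset (Fin n)) : Prop :=
  IsSCC A S ∧ ∀ a ∈ S, ∀ b, A a b = true → b ∈ S

/-- `X : Fin r → Finset (Fin n)` enumerates (without repetition) exactly the vertex sets
`X_1, …, X_r` of the source SCCs of `G(A)`. -/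
def SourceSCCEnum {n : ℕ} (A : Matrix (Fin n) (Fin n) Bool) {r : ℕ}
    (X : Fin r → Finset (Fin n)) : Prop :=
  Function.Injective X ∧ ∀ S : Finset (Fin n), IsSourceSCC A S ↔ ∃ i : Fin r, X i = S

/-- Feasibility for the integer linear programs `P1ILP` and `P2ILP` (constraints
(C1), (C2), (C3) together with binary variables `y` on the edges of `E_XX ∪ E_UX` and `z`
indexed by the source SCCs).  The variable `y` on the edge `(x_j^R, x_i^L) ∈ E_XX` is
`yA i j`, and on the edge `(u_j, x_i^L) ∈ E_UX` it is `yB i j`; variables are defined on all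
index pairs but forced to vanish outside the edge sets. -/
def ILPFeas {n m r : ℕ} (A : Matrix (Fin n) (Fin n) Bool) (B : Matrix (Fin n) (Fin m) Bool)
    (X : Fin r → Finset (Fin n)) (yA : Fin n → Fin n → ℤ) (yB : Fin n → Fin m → ℤ)
    (z : Fin r → ℤ) : Prop :=
  (∀ i j, A i j = false → yA i j = 0) ∧ (∀ i j, B i j = false → yB i j = 0) ∧
  (∀ i j, yA i j = 0 ∨ yA i j = 1) ∧ (∀ i j, yB i j = 0 ∨ yB i j = 1) ∧
  (∀ i, z i = 0 ∨ z i = 1) ∧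
  -- (C1): for each `v = x_v^L ∈ X_L`, the edges incident to it carry total weight 1
  (∀ v : Fin n, (∑ j, yA v j) + (∑ j, yB v j) = 1) ∧
  -- (C2) for `x_j^R ∈ X_R`
  (∀ j : Fin n, (∑ i, yA i j) ≤ 1) ∧
  -- (C2) for `u_j ∈ U`
  (∀ j : Fin m, (∑ i, yB i j) ≤ 1) ∧
  -- (C3): `z i ≤ Σ_{e ∈ E_i} y_e`
  (∀ i : Fin r, z i ≤ ∑ a ∈ X i, ∑ j, yB a j)

/-- The objective of `P1ILP`: `Σ_{e ∈ E_UX} y_e + r - Σ_i z_i`. -/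
def obj1 {n m r : ℕ} (yB : Fin n → Fin m → ℤ) (z : Fin r → ℤ) : ℤ :=
  (∑ i, ∑ j, yB i j) + (r : ℤ) - ∑ i, z i

/-- `w_i^min`: the minimum cost of the input links in `E_i`, i.e. of edges `(u_j, x_a^L)`
with `x_a` in the `i`-th source SCC. -/
noncomputable def wmin {n m r : ℕ} (B : Matrix (Fin n) (Fin m) Bool)
    (X : Fin r → Finset (Fin n)) (w : Fin n → Fin m → ℝ) (i : Fin r) : ℝ :=
  sInf {c : ℝ | ∃ a j, a ∈ X i ∧ B a j = true ∧ w a j = c}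

/-- The objective of `P2ILP` and `P3ILP`:
`Σ_{e ∈ E_UX} w_e y_e + Σ_i (1 - z_i) w_i^min`. -/
noncomputable def obj2 {n m r : ℕ} (B : Matrix (Fin n) (Fin m) Bool)
    (X : Fin r → Finset (Fin n)) (w : Fin n → Fin m → ℝ)
    (yB : Fin n → Fin m → ℤ) (z : Fin r → ℤ) : ℝ :=
  (∑ i, ∑ j, w i j * (yB i j : ℝ)) + ∑ i, (1 - (z i : ℝ)) * wmin B X w i

namespace SCtrl

open Matrix Finset

variable {K : Type*} [Field K] {n m : ℕ} {ι : Type*} [Fintype ι] [DecidableEq ι]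

lemma rank_lt_iff (M : Matrix (Fin n) ι K) :
    M.rank < n ↔ ∃ v : Fin n → K, v ≠ 0 ∧ v ᵥ* M = 0 := by
  have hr : Mᵀ.rank = Module.finrank K (LinearMap.range (Mᵀ.mulVecLin)) := rfl
  have h1 : Mᵀ.rank + Module.finrank K (LinearMap.ker (Mᵀ.mulVecLin)) = n := by
    rw [hr]
    simpa [Module.finrank_pi] using
      LinearMap.finrank_range_add_finrank_ker (Mᵀ.mulVecLin)
  rw [← Matrix.rank_transpose M]
  constructor
  · intro h
    have hne : LinearMap.ker (Mᵀ.mulVecLin) ≠ ⊥ := by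
      intro hb
      rw [hb, finrank_bot] at h1
      omega
    obtain ⟨v, hv, hv0⟩ := (Submodule.ne_bot_iff _).mp hne
    refine ⟨v, hv0, ?_⟩
    have := LinearMap.mem_ker.mp hv
    rw [Matrix.mulVecLin_apply, Matrix.mulVec_transpose] at this
    exact this
  · rintro ⟨v, hv0, hv⟩
    have hvk : v ∈ LinearMap.ker (Mᵀ.mulVecLin) := by
      rw [LinearMap.mem_ker, Matrix.mulVecLin_apply, Matrix.mulVec_transpose]
      exact hv
    have hnt : Nontrivial (LinearMap.ker (Mᵀ.mulVecLin)) :=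
      ⟨⟨v, hvk⟩, 0, by simp [Subtype.ext_iff, hv0]⟩
    have hpos : 0 < Module.finrank K (LinearMap.ker (Mᵀ.mulVecLin)) :=
      Module.finrank_pos
    omega

/-- The controllability matrix. -/
def ctrbM {n m : ℕ} (tA : Matrix (Fin n) (Fin n) ℝ) (tB : Matrix (Fin n) (Fin m) ℝ) :
    Matrix (Fin n) (Fin n × Fin m) ℝ :=
  Matrix.of fun (i : Fin n) (p : Fin n × Fin m) => (tA ^ (p.1 : ℕ) * tB) i p.2

lemma controllable_iff (tA : Matrix (Fin n) (Fin n) ℝ) (tB : Matrix (Fin n) (Fin m) ℝ) :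
    Controllable tA tB ↔ ∀ v : Fin n → ℝ, v ᵥ* (ctrbM tA tB) = 0 → v = 0 := by
  have hle : (ctrbM tA tB).rank ≤ n := by
    simpa using Matrix.rank_le_card_height (ctrbM tA tB)
  have hC : Controllable tA tB ↔ (ctrbM tA tB).rank = n := Iff.rfl
  rw [hC]
  constructor
  · intro h v hv
    by_contra hv0
    have : (ctrbM tA tB).rank < n := (rank_lt_iff _).mpr ⟨v, hv0, hv⟩
    omega
  · intro h
    by_contra hne
    have hlt : (ctrbM tA tB).rank < n := lt_of_le_of_ne hle hne
    obtain ⟨v, hv0, hv⟩ := (rank_lt_iff _).mp hlt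
    exact hv0 (h v hv)

lemma vecMul_ctrb_eq (tA : Matrix (Fin n) (Fin n) ℝ) (tB : Matrix (Fin n) (Fin m) ℝ)
    (v : Fin n → ℝ) (p : Fin n × Fin m) :
    (v ᵥ* ctrbM tA tB) p = (v ᵥ* (tA ^ (p.1 : ℕ) * tB)) p.2 := by
  simp [ctrbM, Matrix.vecMul, dotProduct]

/-- If some nonzero vector kills all `tA^k * tB` from the left, the pair is not controllable. -/
lemma not_controllable_of_left (tA : Matrix (Fin n) (Fin n) ℝ) (tB : Matrix (Fin n) (Fin m) ℝ)
    (v : Fin n → ℝ) (hv0 : v ≠ 0) (h : ∀ k : ℕ, v ᵥ* (tA ^ k * tB) = 0) :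
    ¬ Controllable tA tB := by
  intro hc
  apply hv0
  refine (controllable_iff tA tB).mp hc v ?_
  funext p
  rw [vecMul_ctrb_eq]
  rw [h (p.1 : ℕ)]
  rfl

/-- rows of `[tA | tB]`: a controllable pair has no common left null vector. -/
lemma controllable_no_left_null (tA : Matrix (Fin n) (Fin n) ℝ) (tB : Matrix (Fin n) (Fin m) ℝ)
    (hc : Controllable tA tB) (v : Fin n → ℝ) (hA : v ᵥ* tA = 0) (hB : v ᵥ* tB = 0) :
    v = 0 := by
  by_contra hv0
  refine not_controllable_of_left tA tB v hv0 ?_ hc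
  intro k
  induction k with
  | zero => simpa using hB
  | succ k ih =>
      rw [pow_succ', Matrix.mul_assoc, ← Matrix.vecMul_vecMul, hA, Matrix.zero_vecMul]

/-- invariant-set criterion for non-controllability -/
lemma not_controllable_of_invariant (tA : Matrix (Fin n) (Fin n) ℝ)
    (tB : Matrix (Fin n) (Fin m) ℝ) (S : Finset (Fin n)) (hS : S.Nonempty)
    (hA : ∀ a ∈ S, ∀ b, tA a b ≠ 0 → b ∈ S) (hB : ∀ a ∈ S, ∀ j, tB a j = 0) :
    ¬ Controllable tA tB := by
  obtain ⟨a, ha⟩ := hS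
  have key : ∀ k : ℕ, ∀ a ∈ S, ∀ j, (tA ^ k * tB) a j = 0 := by
    intro k
    induction k with
    | zero => intro a ha j; simpa using hB a ha j
    | succ k ih =>
        intro a ha j
        rw [pow_succ']   -- tA^(k+1) = tA * tA^k
        rw [Matrix.mul_assoc, Matrix.mul_apply]
        refine Finset.sum_eq_zero ?_
        intro b _
        by_cases hab : tA a b = 0
        · simp [hab]
        · rw [ih b (hA a ha b hab) j, mul_zero]
  refine not_controllable_of_left tA tB (fun i => if i = a then (1:ℝ) else 0) ?_ ?_
  · intro h
    have := congrFun h a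
    simp at this
  · intro k
    funext j
    have hz : ∀ i, (if i = a then (1:ℝ) else 0) * (tA ^ k * tB) i j = 0 := by
      intro i
      by_cases hia : i = a
      · subst hia; rw [key k i ha j, mul_zero]
      · simp [hia]
    simp only [Matrix.vecMul, dotProduct, Pi.zero_apply]
    exact Finset.sum_eq_zero (fun i _ => hz i)


/-! ### PBH over ℂ -/

lemma vecMul_sumM {α : Type*} [NonUnitalNonAssocSemiring α] [Fintype ι]
    {σ : Type*} (s : Finset σ) (w : ι → α) (f : σ → Matrix ι ι' α) [Fintype ι'] :
    w ᵥ* (∑ j ∈ s, f j) = ∑ j ∈ s, w ᵥ* (f j) := by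
  classical
  induction s using Finset.induction_on with
  | empty => simp [Matrix.vecMul_zero]
  | insert a s' h ih =>
                   simp [Finset.sum_insert h, Matrix.vecMul_add, ih]

lemma vecMul_smul_right {ι' : Type*} [Fintype ι] (w : ι → ℂ) (c : ℂ) (M : Matrix ι ι' ℂ) :
    w ᵥ* (c • M) = c • (w ᵥ* M) := by
  funext j
  simp [Matrix.vecMul, dotProduct, Finset.mul_sum]
  exact Finset.sum_congr rfl fun i _ => by ring

lemma exists_eig_of_not_controllable (tA : Matrix (Fin n) (Fin n) ℝ)
    (tB : Matrix (Fin n) (Fin m) ℝ) (h : ¬ Controllable tA tB) :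
    ∃ (μ : ℂ) (v : Fin n → ℂ), v ≠ 0 ∧
      ((tA.map Complex.ofReal)ᵀ *ᵥ v = μ • v) ∧ ((tB.map Complex.ofReal)ᵀ *ᵥ v = 0) := by
  classical
  set cA := tA.map Complex.ofReal with hcA
  set cB := tB.map Complex.ofReal with hcB
  -- a nonzero real left-null vector of the controllability matrix
  have hle : (ctrbM tA tB).rank ≤ n := by
    simpa using Matrix.rank_le_card_height (ctrbM tA tB)
  have hlt : (ctrbM tA tB).rank < n := by
    rcases lt_or_eq_of_le hle with h' | h'
    · exact h'
    · exact absurd h' h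
  obtain ⟨v₀, hv00, hv0⟩ := (rank_lt_iff _).mp hlt
  set w : Fin n → ℂ := fun i => (v₀ i : ℂ) with hw
  have hw0 : w ≠ 0 := by
    intro hcon
    apply hv00
    funext i
    have := congrFun hcon i
    simpa [hw] using this
  -- map to ℂ
  have hmapk : ∀ k : ℕ, cA ^ k * cB = (tA ^ k * tB).map Complex.ofReal := by
    intro k
    have h1 : (tA ^ k).map Complex.ofReal = cA ^ k := by
      have := map_pow (Complex.ofRealHom.mapMatrix) tA k
      simp only [RingHom.mapMatrix_apply, hcA] at this; exact this
    rw [show ((tA ^ k * tB).map Complex.ofReal = (tA ^ k).map Complex.ofReal * tB.map Complex.ofReal)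
        from Matrix.map_mul (f := Complex.ofRealHom), h1]
  have hwk : ∀ k : ℕ, k < n → w ᵥ* (cA ^ k * cB) = 0 := by
    intro k hk
    funext j
    have hreal := congrFun hv0 (⟨k, hk⟩, j)
    rw [vecMul_ctrb_eq] at hreal
    simp only [Matrix.vecMul, dotProduct, Pi.zero_apply] at hreal ⊢
    rw [hmapk k]
    simp only [Matrix.map_apply, hw]
    push_cast
    rw [show ∑ i, (v₀ i : ℂ) * ((tA ^ k * tB) i j : ℂ) = ((∑ i, v₀ i * (tA ^ k * tB) i j : ℝ) : ℂ)
        by push_cast; rfl]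
    rw [hreal]
    simp
  -- extend to all k via Cayley–Hamilton
  have hCH : cA ^ n = -∑ j ∈ Finset.range n, cA.charpoly.coeff j • cA ^ j := by
    have h0 : (Polynomial.aeval cA) cA.charpoly = 0 := Matrix.aeval_self_charpoly cA
    rw [Polynomial.aeval_eq_sum_range] at h0
    rcases Nat.eq_zero_or_pos n with hn | hn
    · subst hn
      simp only [Finset.range_zero, Finset.sum_empty, neg_zero]
      apply Subsingleton.elim
    have hdeg : cA.charpoly.natDegree = n := by
      simpa using Matrix.charpoly_natDegree_eq_dim cA
    rw [hdeg, Finset.sum_range_succ] at h0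
    have hlead : cA.charpoly.coeff n = 1 := by
      have := (Matrix.charpoly_monic cA).coeff_natDegree
      rwa [hdeg] at this
    rw [hlead, one_smul] at h0
    exact eq_neg_of_add_eq_zero_right h0
  have hall : ∀ k : ℕ, w ᵥ* (cA ^ k * cB) = 0 := by
    intro k
    induction k using Nat.strong_induction_on with
    | _ k ih =>
      by_cases hk : k < n
      · exact hwk k hk
      · push_neg at hk
        have hksplit : k = (k - n) + n := (Nat.sub_add_cancel hk).symm
        rw [hksplit, pow_add, hCH]
        have hmat : (cA ^ (k-n) * (-(∑ j ∈ Finset.range n, cA.charpoly.coeff j • cA ^ j))) * cB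
            = -∑ j ∈ Finset.range n, cA.charpoly.coeff j • (cA ^ (k - n + j) * cB) := by
          rw [Matrix.mul_neg, Matrix.neg_mul, Matrix.mul_sum, Matrix.sum_mul]
          congr 1
          refine Finset.sum_congr rfl fun j hj => ?_
          rw [Matrix.mul_smul, Matrix.smul_mul, pow_add, Matrix.mul_assoc]
        rw [hmat, Matrix.vecMul_neg, vecMul_sumM]
        have : ∀ j ∈ Finset.range n,
            w ᵥ* (cA.charpoly.coeff j • (cA ^ (k - n + j) * cB)) = 0 := by
          intro j hj
          rw [vecMul_smul_right, ih (k - n + j) (by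
            have := Finset.mem_range.mp hj
            omega)]
          simp
        rw [Finset.sum_congr rfl this]
        simp
  -- invariant subspace and eigenvector
  set Z : Submodule ℂ (Fin n → ℂ) := ⨅ k : ℕ, LinearMap.ker ((cA ^ k * cB)ᵀ.mulVecLin) with hZ
  have hmemZ : ∀ x, x ∈ Z ↔ ∀ k : ℕ, (cA ^ k * cB)ᵀ *ᵥ x = 0 := by
    intro x
    rw [hZ, Submodule.mem_iInf]
    constructor
    · intro hx k
      have := hx k
      rwa [LinearMap.mem_ker, Matrix.mulVecLin_apply] at this
    · intro hx k
      rw [LinearMap.mem_ker, Matrix.mulVecLin_apply]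
      exact hx k
  have hwZ : w ∈ Z := by
    rw [hmemZ]
    intro k
    rw [Matrix.mulVec_transpose]
    exact hall k
  have hinv : ∀ x ∈ Z, (cAᵀ.mulVecLin) x ∈ Z := by
    intro x hx
    rw [hmemZ] at hx ⊢
    intro k
    rw [Matrix.mulVecLin_apply, Matrix.mulVec_mulVec, ← Matrix.transpose_mul,
      show cA * (cA ^ k * cB) = cA ^ (k+1) * cB by rw [pow_succ', Matrix.mul_assoc]]
    exact hx (k+1)
  haveI : Nontrivial Z := ⟨⟨w, hwZ⟩, 0, by simp [Subtype.ext_iff]; exact hw0⟩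
  set e : Module.End ℂ Z := (cAᵀ.mulVecLin).restrict hinv with he
  obtain ⟨μ, hμ⟩ := Module.End.exists_eigenvalue e
  obtain ⟨vz, hvz⟩ := hμ.exists_hasEigenvector
  refine ⟨μ, (vz : Fin n → ℂ), ?_, ?_, ?_⟩
  · intro hcon
    exact hvz.right (Subtype.ext hcon)
  · have := hvz.apply_eq_smul
    have hcoe := congrArg (Subtype.val) this
    rw [he, LinearMap.restrict_apply] at hcoe
    rw [Matrix.mulVec_transpose]
    simpa [Matrix.mulVecLin_apply, Matrix.mulVec_transpose] using hcoe
  · have := (hmemZ _).mp vz.2 0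
    simpa using this

lemma controllable_of_no_common_eigvec (tA : Matrix (Fin n) (Fin n) ℝ)
    (tB : Matrix (Fin n) (Fin m) ℝ)
    (h : ∀ (μ : ℂ) (v : Fin n → ℂ), ((tA.map Complex.ofReal)ᵀ *ᵥ v = μ • v) →
      ((tB.map Complex.ofReal)ᵀ *ᵥ v = 0) → v = 0) : Controllable tA tB := by
  by_contra hc
  obtain ⟨μ, v, hv0, h1, h2⟩ := exists_eig_of_not_controllable tA tB hc
  exact hv0 (h μ v h1 h2)


/-! ### extraction of a matching from controllability -/

lemma exists_matching_of_controllable {n m : ℕ} (A : Matrix (Fin n) (Fin n) Bool)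
    (C : Matrix (Fin n) (Fin m) Bool) (tA : Matrix (Fin n) (Fin n) ℝ)
    (tB : Matrix (Fin n) (Fin m) ℝ) (hreal : IsRealization A C tA tB)
    (hc : Controllable tA tB) :
    ∃ π : Fin n → Fin n ⊕ Fin m, Function.Injective π ∧
      (∀ i j, π i = Sum.inl j → A i j = true) ∧ (∀ i j, π i = Sum.inr j → C i j = true) := by
  classical
  set r : Fin n → (Fin n ⊕ Fin m) → ℝ :=
    (fun i => Sum.elim (fun j => tA i j) (fun j => tB i j)) with hr
  set t : Fin n → Finset (Fin n ⊕ Fin m) := fun i =>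
    ((Finset.univ.filter fun j => A i j = true).image Sum.inl) ∪
    ((Finset.univ.filter fun j => C i j = true).image Sum.inr) with ht
  have hsupp : ∀ i x, x ∉ t i → r i x = 0 := by
    intro i x hx
    rcases x with j | j
    · have hAij : ¬ A i j = true := fun hA => hx (by simp [ht, hA])
      simpa [hr] using hreal.1 i j (by simpa using hAij)
    · have hCij : ¬ C i j = true := fun hC => hx (by simp [ht, hC])
      simpa [hr] using hreal.2 i j (by simpa using hCij)
  have hindep : ∀ g : Fin n → ℝ, (∑ i, g i • r i) = 0 → g = 0 := by
    intro g hg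
    have hA : g ᵥ* tA = 0 := by
      funext j
      have h1 := congrFun hg (Sum.inl j)
      simp only [Finset.sum_apply, Pi.smul_apply, smul_eq_mul, Pi.zero_apply, hr,
        Sum.elim_inl] at h1
      simpa [Matrix.vecMul, dotProduct] using h1
    have hB : g ᵥ* tB = 0 := by
      funext j
      have h1 := congrFun hg (Sum.inr j)
      simp only [Finset.sum_apply, Pi.smul_apply, smul_eq_mul, Pi.zero_apply, hr,
        Sum.elim_inr] at h1
      simpa [Matrix.vecMul, dotProduct] using h1
    exact controllable_no_left_null tA tB hc g hA hB
  have hall : ∀ s : Finset (Fin n), s.card ≤ (s.biUnion t).card := by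
    intro s
    set T := s.biUnion t with hT
    have htT : ∀ i ∈ s, t i ⊆ T := fun i hi => Finset.subset_biUnion_of_mem t hi
    set res : ((Fin n ⊕ Fin m) → ℝ) →ₗ[ℝ] ({x // x ∈ T} → ℝ) :=
      LinearMap.funLeft ℝ ℝ Subtype.val with hres
    have hli : LinearIndependent ℝ (fun i : {x // x ∈ s} => res (r i)) := by
      rw [Fintype.linearIndependent_iff]
      intro c hc0 i
      set v : Fin n → ℝ := fun i => if h : i ∈ s then c ⟨i, h⟩ else 0 with hv
      have hv0 : ∑ i, v i • r i = 0 := by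
        funext x
        simp only [Finset.sum_apply, Pi.smul_apply, smul_eq_mul, Pi.zero_apply]
        have hrestrict : ∑ i : Fin n, v i * r i x = ∑ i ∈ s, v i * r i x := by
          refine (Finset.sum_subset (Finset.subset_univ s) ?_).symm
          intro i _ hi
          simp [hv, hi]
        rw [hrestrict]
        by_cases hxT : x ∈ T
        · have h2 := congrFun hc0 ⟨x, hxT⟩
          simp only [Finset.sum_apply, Pi.smul_apply, smul_eq_mul, Pi.zero_apply] at h2
          rw [← h2, ← Finset.sum_coe_sort s]
          refine Finset.sum_congr rfl fun i _ => ?_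
          simp [hv, hres, LinearMap.funLeft, i.2]
        · refine Finset.sum_eq_zero fun i hi => ?_
          rw [hsupp i x (fun hmem => hxT (htT i hi hmem)), mul_zero]
      have hvz := hindep v hv0
      have := congrFun hvz i.1
      simpa [hv, i.2] using this
    have hcard := LinearIndependent.fintype_card_le_finrank hli
    simpa [Fintype.card_coe, Module.finrank_pi] using hcard
  obtain ⟨f, hfinj, hft⟩ := (Finset.all_card_le_biUnion_card_iff_exists_injective t).mp hall
  refine ⟨f, hfinj, ?_, ?_⟩
  · intro i j hfi
    have := hft i
    rw [hfi, ht] at this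
    simp only [Finset.mem_union, Finset.mem_image, Finset.mem_filter, Finset.mem_univ,
      true_and] at this
    rcases this with ⟨j', hj', heq⟩ | ⟨j', _, heq⟩
    · rwa [show j' = j from Sum.inl.inj heq] at hj'
    · exact absurd heq (by simp)
  · intro i j hfi
    have := hft i
    rw [hfi, ht] at this
    simp only [Finset.mem_union, Finset.mem_image, Finset.mem_filter, Finset.mem_univ,
      true_and] at this
    rcases this with ⟨j', _, heq⟩ | ⟨j', hj', heq⟩
    · exact absurd heq (by simp)
    · rwa [show j' = j from Sum.inr.inj heq] at hj'

/-! ### SCC facts -/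

lemma reach_single {n : ℕ} {A : Matrix (Fin n) (Fin n) Bool} {a b : Fin n}
    (h : A b a = true) : reach A a b := Relation.ReflTransGen.single h

lemma crossing {n : ℕ} {A : Matrix (Fin n) (Fin n) Bool} {R : Finset (Fin n)} {b v : Fin n}
    (hbv : reach A b v) (hv : v ∈ R) (hb : b ∉ R) :
    ∃ x y, x ∉ R ∧ y ∈ R ∧ A y x = true := by
  induction hbv using Relation.ReflTransGen.head_induction_on with
  | refl => exact absurd hv hb
  | head hrel _ ih =>
      rename_i a c _
      by_cases hcR : c ∈ R
      · exact ⟨a, c, hb, hcR, hrel⟩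
      · exact ih hcR

lemma exists_source_scc_reach {n : ℕ} (A : Matrix (Fin n) (Fin n) Bool) (v : Fin n) :
    ∃ S : Finset (Fin n), IsSourceSCC A S ∧ ∃ a ∈ S, reach A a v := by
  classical
  set anc : Fin n → Finset (Fin n) := fun u => Finset.univ.filter (fun b => reach A b u)
    with hanc
  have hmem_anc : ∀ u b, b ∈ anc u ↔ reach A b u := by
    intro u b; simp [hanc]
  obtain ⟨u, hu_mem, hu_min⟩ := Finset.exists_min_image (anc v) (fun u => (anc u).card)
    ⟨v, (hmem_anc v v).mpr Relation.ReflTransGen.refl⟩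
  have huv : reach A u v := (hmem_anc v u).mp hu_mem
  set S : Finset (Fin n) := Finset.univ.filter (fun b => reach A u b ∧ reach A b u) with hS
  have hmem_S : ∀ b, b ∈ S ↔ reach A u b ∧ reach A b u := by
    intro b; simp [hS]
  have huS : u ∈ S := (hmem_S u).mpr ⟨Relation.ReflTransGen.refl, Relation.ReflTransGen.refl⟩
  have hstep : ∀ c, (∀ a, a ∈ S → A a c = true → c ∈ S) := by
    intro c a haS hedge
    obtain ⟨hua, hau⟩ := (hmem_S a).mp haS
    have hca : reach A c a := reach_single hedge
    have hcu : reach A c u := hca.trans hau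
    have hcv : reach A c v := hcu.trans huv
    have hsub : anc c ⊆ anc u := by
      intro b hb
      exact (hmem_anc u b).mpr (((hmem_anc c b).mp hb).trans hcu)
    have hle : (anc u).card ≤ (anc c).card := hu_min c ((hmem_anc v c).mpr hcv)
    have heq : anc c = anc u := Finset.eq_of_subset_of_card_le hsub hle
    have huc : reach A u c := by
      have : u ∈ anc c := heq ▸ ((hmem_anc u u).mpr Relation.ReflTransGen.refl)
      exact (hmem_anc c u).mp this
    exact (hmem_S c).mpr ⟨huc, hcu⟩
  refine ⟨S, ⟨⟨⟨u, huS⟩, ?_, ?_⟩, ?_⟩, u, huS, huv⟩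
  · intro a ha b hb
    obtain ⟨_, hau⟩ := (hmem_S a).mp ha
    obtain ⟨hub, _⟩ := (hmem_S b).mp hb
    exact hau.trans hub
  · intro a ha b hab hba
    obtain ⟨hua, hau⟩ := (hmem_S a).mp ha
    exact (hmem_S b).mpr ⟨hua.trans hab, hba.trans hau⟩
  · intro a ha b hedge
    exact hstep b a ha hedge

lemma scc_eq_of_mem {n : ℕ} {A : Matrix (Fin n) (Fin n) Bool} {S T : Finset (Fin n)}
    (hS : IsSCC A S) (hT : IsSCC A T) {a : Fin n} (haS : a ∈ S) (haT : a ∈ T) : S = T := by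
  apply Finset.Subset.antisymm
  · intro b hbS
    exact hT.2.2 a haT b (hS.2.1 a haS b hbS) (hS.2.1 b hbS a haS)
  · intro b hbT
    exact hS.2.2 a haS b (hT.2.1 a haT b hbT) (hT.2.1 b hbT a haT)

/-- accessibility: if every source SCC contains a `C`-fed vertex, every vertex is
reachable from a `C`-fed vertex. -/
lemma access_of_source_edges {n m : ℕ} (A : Matrix (Fin n) (Fin n) Bool)
    (C : Matrix (Fin n) (Fin m) Bool)
    (hsrc : ∀ S : Finset (Fin n), IsSourceSCC A S → ∃ a ∈ S, ∃ j, C a j = true) :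
    ∀ v, ∃ b, (∃ j, C b j = true) ∧ reach A b v := by
  intro v
  obtain ⟨S, hS, a, haS, hav⟩ := exists_source_scc_reach A v
  obtain ⟨b, hbS, hj⟩ := hsrc S hS
  exact ⟨b, hj, (hS.1.2.1 b hbS a haS).trans hav⟩

/-- necessity of the source-SCC condition -/
lemma source_edge_of_structCont {n m : ℕ} {A : Matrix (Fin n) (Fin n) Bool}
    {C : Matrix (Fin n) (Fin m) Bool} (h : StructCont A C) :
    ∀ S : Finset (Fin n), IsSourceSCC A S → ∃ a ∈ S, ∃ j, C a j = true := by
  intro S hS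
  by_contra hno
  push_neg at hno
  obtain ⟨tA, tB, hreal, hc⟩ := h
  refine not_controllable_of_invariant tA tB S hS.1.1 ?_ ?_ hc
  · intro a ha b hab
    refine hS.2 a ha b ?_
    by_contra hA
    exact hab (hreal.1 a b (by simpa using hA))
  · intro a ha j
    refine hreal.2 a j ?_
    have := hno a ha j
    simpa using this

/-! ### sufficiency: structure of the parent map -/

section Suff

open scoped Classical

variable {n m : ℕ} (π : Fin n → Fin n ⊕ Fin m)

def gstep : Fin n ⊕ Fin m → Fin n ⊕ Fin m := Sum.elim (fun i => π i) Sum.inr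

lemma gstep_iter_inr (k : ℕ) (j : Fin m) : (gstep π)^[k] (Sum.inr j) = Sum.inr j :=
  Function.iterate_fixed rfl k

def cyclicV (i : Fin n) : Prop := ∃ k, 0 < k ∧ (gstep π)^[k] (Sum.inl i) = Sum.inl i

def sameCyc (i j : Fin n) : Prop :=
  cyclicV π i ∧ ∃ k, (gstep π)^[k] (Sum.inl i) = Sum.inl j

lemma cyc_mul {i : Fin n} {p : ℕ} (hp : (gstep π)^[p] (Sum.inl i) = Sum.inl i) :
    ∀ t, (gstep π)^[t * p] (Sum.inl i) = Sum.inl i := by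
  intro t
  induction t with
  | zero => simp
  | succ t ih =>
      have : (t + 1) * p = p + t * p := by ring
      rw [this, Function.iterate_add_apply, ih, hp]

lemma cyclic_all_inl {i : Fin n} (h : cyclicV π i) (k : ℕ) :
    ∃ s, (gstep π)^[k] (Sum.inl i) = Sum.inl s := by
  obtain ⟨p, hp0, hp⟩ := h
  rcases hs : (gstep π)^[k] (Sum.inl i) with s | j
  · exact ⟨s, rfl⟩
  · exfalso
    have hkp : k ≤ (k + 1) * p := by nlinarith
    have h1 : (gstep π)^[(k+1) * p] (Sum.inl i) = Sum.inl i := cyc_mul π hp (k+1)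
    have h2 : (gstep π)^[((k+1) * p - k) + k] (Sum.inl i) = Sum.inl i := by
      rw [Nat.sub_add_cancel hkp]; exact h1
    rw [Function.iterate_add_apply, hs, gstep_iter_inr] at h2
    exact absurd h2 (by simp)

lemma sameCyc_cyclic {i j : Fin n} (h : sameCyc π i j) :
    cyclicV π j ∧ ∃ k', (gstep π)^[k'] (Sum.inl j) = Sum.inl i := by
  obtain ⟨⟨p, hp0, hp⟩, k, hk⟩ := h
  have hkp : k ≤ (k + 1) * p := by nlinarith
  have h1 : (gstep π)^[(k+1) * p] (Sum.inl i) = Sum.inl i := cyc_mul π hp (k+1)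
  have h2 : (gstep π)^[((k+1) * p - k) + k] (Sum.inl i) = Sum.inl i := by
    rw [Nat.sub_add_cancel hkp]; exact h1
  rw [Function.iterate_add_apply, hk] at h2
  refine ⟨⟨(k + ((k+1) * p - k)), ?_, ?_⟩, (k+1) * p - k, h2⟩
  · have : k < (k+1) * p := by nlinarith
    omega
  · rw [Function.iterate_add_apply, h2, hk]

lemma sameCyc_refl {i : Fin n} (h : cyclicV π i) : sameCyc π i i := ⟨h, 0, rfl⟩

lemma sameCyc_symm {i j : Fin n} (h : sameCyc π i j) : sameCyc π j i :=
  ⟨(sameCyc_cyclic π h).1, (sameCyc_cyclic π h).2⟩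

lemma sameCyc_trans {i j k : Fin n} (h1 : sameCyc π i j) (h2 : sameCyc π j k) :
    sameCyc π i k := by
  obtain ⟨hc, a, ha⟩ := h1
  obtain ⟨_, b, hb⟩ := h2
  exact ⟨hc, b + a, by rw [Function.iterate_add_apply, ha, hb]⟩

lemma cyclic_parent {i j : Fin n} (h : cyclicV π i) (hj : π i = Sum.inl j) :
    cyclicV π j ∧ sameCyc π i j := by
  have hstep : gstep π (Sum.inl i) = Sum.inl j := by simp [gstep, hj]
  obtain ⟨p, hp0, hp⟩ := h
  constructor
  · refine ⟨p, hp0, ?_⟩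
    calc (gstep π)^[p] (Sum.inl j) = (gstep π)^[p] (gstep π (Sum.inl i)) := by rw [hstep]
      _ = (gstep π)^[p+1] (Sum.inl i) := (Function.iterate_succ_apply _ _ _).symm
      _ = gstep π ((gstep π)^[p] (Sum.inl i)) := Function.iterate_succ_apply' _ _ _
      _ = Sum.inl j := by rw [hp, hstep]
  · exact ⟨⟨p, hp0, hp⟩, 1, by simpa using hstep⟩

lemma cyclic_pi_inl {i : Fin n} (h : cyclicV π i) : ∃ j, π i = Sum.inl j := by
  obtain ⟨s, hs⟩ := cyclic_all_inl π h 1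
  exact ⟨s, by simpa [gstep] using hs⟩

lemma cyclic_child (hinj : Function.Injective π) {i j : Fin n}
    (hj : cyclicV π j) (hi : π i = Sum.inl j) : cyclicV π i := by
  obtain ⟨p, hp0, hp⟩ := hj
  obtain ⟨s, hs⟩ := cyclic_all_inl π ⟨p, hp0, hp⟩ (p - 1)
  have hps : π s = Sum.inl j := by
    have h1 : (gstep π)^[1 + (p-1)] (Sum.inl j) = Sum.inl j := by
      rw [show 1 + (p - 1) = p by omega]
      exact hp
    rw [Function.iterate_add_apply, hs] at h1
    simpa [gstep] using h1
  have hsi : s = i := hinj (hps.trans hi.symm)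
  subst hsi
  refine ⟨p, hp0, ?_⟩
  rw [show p = (p - 1) + 1 by omega, Function.iterate_succ_apply]
  rw [show gstep π (Sum.inl s) = Sum.inl j by simp [gstep, hps]]
  exact hs

noncomputable def perV (i : Fin n) : ℕ :=
  if h : cyclicV π i then Nat.find h else 1

lemma perV_pos (i : Fin n) : 0 < perV π i := by
  unfold perV
  split
  · rename_i h
    exact (Nat.find_spec h).1
  · omega

lemma perV_spec {i : Fin n} (h : cyclicV π i) :
    (gstep π)^[perV π i] (Sum.inl i) = Sum.inl i := by
  unfold perV
  rw [dif_pos h]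
  exact (Nat.find_spec h).2

lemma perV_min {i : Fin n} (h : cyclicV π i) {k : ℕ} (hk0 : 0 < k) (hk : k < perV π i) :
    (gstep π)^[k] (Sum.inl i) ≠ Sum.inl i := by
  unfold perV at hk
  rw [dif_pos h] at hk
  intro hcon
  exact (Nat.find_min h hk) ⟨hk0, hcon⟩

noncomputable def xsV (i : Fin n) (k : ℕ) : Fin n :=
  if h : ∃ s, (gstep π)^[k] (Sum.inl i) = Sum.inl s then h.choose else i

lemma xsV_spec {i : Fin n} (h : cyclicV π i) (k : ℕ) :
    (gstep π)^[k] (Sum.inl i) = Sum.inl (xsV π i k) := by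
  obtain ⟨s, hs⟩ := cyclic_all_inl π h k
  unfold xsV
  rw [dif_pos ⟨s, hs⟩]
  exact Exists.choose_spec (⟨s, hs⟩ : ∃ s, (gstep π)^[k] (Sum.inl i) = Sum.inl s)

lemma xsV_zero (i : Fin n) : xsV π i 0 = i := by
  unfold xsV
  rw [dif_pos ⟨i, rfl⟩]
  have := Exists.choose_spec (⟨i, rfl⟩ : ∃ s, (gstep π)^[0] (Sum.inl i) = Sum.inl s)
  simpa using this.symm

lemma xsV_parent {i : Fin n} (h : cyclicV π i) (k : ℕ) :
    π (xsV π i k) = Sum.inl (xsV π i (k+1)) := by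
  have h1 := xsV_spec π h k
  have h2 := xsV_spec π h (k+1)
  rw [Function.iterate_succ_apply', h1] at h2
  simpa [gstep] using h2

lemma xsV_add_per {i : Fin n} (h : cyclicV π i) (k : ℕ) :
    xsV π i (k + perV π i) = xsV π i k := by
  have h1 := xsV_spec π h (k + perV π i)
  rw [Function.iterate_add_apply, perV_spec π h] at h1
  have h2 := xsV_spec π h k
  rw [h2] at h1
  exact (Sum.inl.inj h1).symm

lemma xsV_mod {i : Fin n} (h : cyclicV π i) (k : ℕ) :
    xsV π i k = xsV π i (k % perV π i) := by
  conv_lhs => rw [show k = k % perV π i + (k / perV π i) * (perV π i) by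
    rw [Nat.mod_add_div']]
  induction (k / perV π i) with
  | zero => simp
  | succ t ih =>
      rw [show k % perV π i + (t+1) * perV π i = (k % perV π i + t * perV π i) + perV π i
        by ring, xsV_add_per π h, ih]

lemma xsV_mem {i : Fin n} (h : cyclicV π i) (k : ℕ) : sameCyc π i (xsV π i k) :=
  ⟨h, k, xsV_spec π h k⟩

lemma xsV_surj {i x : Fin n} (h : sameCyc π i x) :
    ∃ k, k < perV π i ∧ xsV π i k = x := by
  obtain ⟨hc, k, hk⟩ := h
  refine ⟨k % perV π i, Nat.mod_lt _ (perV_pos π i), ?_⟩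
  rw [← xsV_mod π hc]
  have := xsV_spec π hc k
  rw [hk] at this
  exact (Sum.inl.inj this).symm

lemma xsV_inj {i : Fin n} (h : cyclicV π i) {a b : ℕ} (ha : a < perV π i)
    (hb : b < perV π i) (heq : xsV π i a = xsV π i b) : a = b := by
  by_contra hne
  wlog hab : a < b generalizing a b
  · exact this hb ha heq.symm (Ne.symm hne) (by omega)
  have h1 := xsV_spec π h a
  have h2 := xsV_spec π h b
  rw [heq] at h1
  -- (gstep)^[a] (inl i) = (gstep)^[b] (inl i)
  have hret : (gstep π)^[(perV π i - b) + a] (Sum.inl i) = Sum.inl i := by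
    rw [Function.iterate_add_apply, h1, ← h2, ← Function.iterate_add_apply,
      Nat.sub_add_cancel (le_of_lt hb), perV_spec π h]
  exact perV_min π h (by omega) (by omega) hret

/-! ### the greedy cover plan -/

lemma cover_step {A : Matrix (Fin n) (Fin n) Bool} {C : Matrix (Fin n) (Fin m) Bool}
    (hacc : ∀ v, ∃ b, (∃ j, C b j = true) ∧ reach A b v)
    (R : Finset (Fin n)) (hne : R.Nonempty) :
    ∃ e ∈ R, (∃ j, C e j = true) ∨ ∃ w, A e w = true ∧ w ∉ R := by
  obtain ⟨v, hv⟩ := hne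
  obtain ⟨b, hbj, hbv⟩ := hacc v
  by_cases hbR : b ∈ R
  · exact ⟨b, hbR, Or.inl hbj⟩
  · obtain ⟨x, y, hx, hy, hxy⟩ := crossing hbv hv hbR
    exact ⟨y, hy, Or.inr ⟨x, hxy, hx⟩⟩

lemma plan_exists {A : Matrix (Fin n) (Fin n) Bool} {C : Matrix (Fin n) (Fin m) Bool}
    (hacc : ∀ v, ∃ b, (∃ j, C b j = true) ∧ reach A b v) :
    ∀ (N : ℕ) (R : Finset (Fin n)), R.card ≤ N →
    (∀ i ∈ R, cyclicV π i) → (∀ i ∈ R, ∀ j, sameCyc π i j → j ∈ R) →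
    ∃ (isEnt : Fin n → Prop) (cov : Fin n → Fin n ⊕ Fin m) (rk : Fin n → ℕ),
      (∀ e, isEnt e → e ∈ R) ∧
      (∀ i ∈ R, ∃ e, isEnt e ∧ sameCyc π e i) ∧
      (∀ e e', isEnt e → isEnt e' → sameCyc π e e' → e = e') ∧
      (∀ i ∈ R, n - R.card < rk i ∧ rk i ≤ n) ∧
      (∀ i j, i ∈ R → j ∈ R → sameCyc π i j → rk i = rk j) ∧
      (∀ e, isEnt e →
        ((∃ w, cov e = Sum.inl w ∧ A e w = true ∧ ¬ sameCyc π e w ∧ (w ∈ R → rk w < rk e)) ∨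
         (∃ j, cov e = Sum.inr j ∧ C e j = true))) := by
  intro N
  induction N with
  | zero =>
      intro R hcard _ _
      have hR : R = ∅ := Finset.card_eq_zero.mp (Nat.le_zero.mp hcard)
      subst hR
      exact ⟨fun _ => False, fun i => π i, fun _ => 0,
        by simp, by simp, by simp, by simp, by simp, by simp⟩
  | succ N ih =>
      intro R hcard hcyc hclosed
      rcases Finset.eq_empty_or_nonempty R with hR | hne
      · subst hR
        exact ⟨fun _ => False, fun i => π i, fun _ => 0,
          by simp, by simp, by simp, by simp, by simp, by simp⟩
      obtain ⟨e, heR, hec⟩ := cover_step hacc R hne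
      have hecyc : cyclicV π e := hcyc e heR
      -- the chosen cover
      have hcov : ∃ c : Fin n ⊕ Fin m,
          (∃ w, c = Sum.inl w ∧ A e w = true ∧ w ∉ R) ∨ (∃ j, c = Sum.inr j ∧ C e j = true) := by
        rcases hec with ⟨j, hj⟩ | ⟨w, hw, hwR⟩
        · exact ⟨Sum.inr j, Or.inr ⟨j, rfl, hj⟩⟩
        · exact ⟨Sum.inl w, Or.inl ⟨w, rfl, hw, hwR⟩⟩
      obtain ⟨c, hc⟩ := hcov
      set R' : Finset (Fin n) := R.filter (fun x => ¬ sameCyc π e x) with hR'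
      have hsubR : R' ⊆ R := Finset.filter_subset _ _
      have heR' : e ∉ R' := by simp [hR', sameCyc_refl π hecyc]
      have hcard' : R'.card < R.card := Finset.card_lt_card ⟨hsubR, fun hsub => heR' (hsub heR)⟩
      have hcyc' : ∀ i ∈ R', cyclicV π i := fun i hi => hcyc i (hsubR hi)
      have hclosed' : ∀ i ∈ R', ∀ j, sameCyc π i j → j ∈ R' := by
        intro i hi j hij
        rw [hR', Finset.mem_filter] at hi ⊢
        refine ⟨hclosed i hi.1 j hij, fun hej => hi.2 (sameCyc_trans π hej (sameCyc_symm π hij))⟩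
      obtain ⟨isEnt', cov', rk', h1', h2', h3', h4', h5', h6'⟩ :=
        ih R' (by omega) hcyc' hclosed'
      have hRn : R.card ≤ n := by
        have := Finset.card_le_univ R
        simpa using this
      refine ⟨fun x => x = e ∨ isEnt' x,
        fun x => if x = e then c else cov' x,
        fun x => if sameCyc π e x then n - R.card + 1 else rk' x,
        ?_, ?_, ?_, ?_, ?_, ?_⟩
      · rintro x (rfl | hx)
        · exact heR
        · exact hsubR (h1' x hx)
      · intro i hi
        by_cases hei : sameCyc π e i
        · exact ⟨e, Or.inl rfl, hei⟩
        · obtain ⟨e', he', hee'⟩ := h2' i (by rw [hR', Finset.mem_filter]; exact ⟨hi, hei⟩)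
          exact ⟨e', Or.inr he', hee'⟩
      · rintro x y (rfl | hx) (rfl | hy)
        · intro; rfl
        · intro hxy
          exact absurd (hclosed' _ (h1' y hy) x (sameCyc_symm π hxy)) heR'
        · intro hxy
          exact absurd (sameCyc_symm π hxy) ((Finset.mem_filter.mp (h1' x hx)).2)
        · exact h3' x y hx hy
      · intro i hi
        dsimp only
        by_cases hei : sameCyc π e i
        · rw [if_pos hei]
          omega
        · rw [if_neg hei]
          have hiR' : i ∈ R' := by rw [hR', Finset.mem_filter]; exact ⟨hi, hei⟩
          have := h4' i hiR'
          omega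
      · intro i j hi hj hij
        dsimp only
        by_cases hei : sameCyc π e i
        · rw [if_pos hei, if_pos (sameCyc_trans π hei hij)]
        · have hej : ¬ sameCyc π e j := fun hej =>
            hei (sameCyc_trans π hej (sameCyc_symm π hij))
          rw [if_neg hei, if_neg hej]
          exact h5' i j (by rw [hR', Finset.mem_filter]; exact ⟨hi, hei⟩)
            (by rw [hR', Finset.mem_filter]; exact ⟨hj, hej⟩) hij
      · rintro x (rfl | hx)
        · dsimp only
          rw [if_pos rfl]
          rcases hc with ⟨w, hcw, hAw, hwR⟩ | ⟨j, hcj, hCj⟩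
          · refine Or.inl ⟨w, hcw, hAw, ?_, fun hwR' => absurd hwR' hwR⟩
            intro hsame
            exact hwR (hclosed _ heR w hsame)
          · exact Or.inr ⟨j, hcj, hCj⟩
        · dsimp only
          have hxe : x ≠ e := fun hxe => heR' (hxe ▸ h1' x hx)
          rw [if_neg hxe]
          rcases h6' x hx with ⟨w, hcw, hAw, hnsame, hrkw⟩ | hr
          · refine Or.inl ⟨w, hcw, hAw, hnsame, ?_⟩
            intro hwR
            by_cases hew : sameCyc π e w
            · rw [if_pos hew, if_neg (fun hex : sameCyc π e x =>
                absurd ((Finset.mem_filter.mp (h1' x hx)).2) (fun h => h hex))]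
              have := (h4' x (h1' x hx)).1
              omega
            · rw [if_neg hew, if_neg (fun hex : sameCyc π e x =>
                absurd ((Finset.mem_filter.mp (h1' x hx)).2) (fun h => h hex))]
              exact hrkw (by rw [hR', Finset.mem_filter]; exact ⟨hwR, hew⟩)
          · exact Or.inr hr

/-! ### the realization built from a plan -/

noncomputable def wtV (isEnt : Fin n → Prop) (i : Fin n) : ℝ :=
  if isEnt i then ((i : ℕ) + 2 : ℝ) ^ (perV π i) else 1

lemma wtV_pos (isEnt : Fin n → Prop) (i : Fin n) : 0 < wtV π isEnt i := by
  unfold wtV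
  split
  · positivity
  · norm_num

noncomputable def tAc (isEnt : Fin n → Prop) (cov : Fin n → Fin n ⊕ Fin m) :
    Matrix (Fin n) (Fin n) ℝ :=
  Matrix.of fun i j =>
    (if π i = Sum.inl j then wtV π isEnt i else 0) +
    (if isEnt i ∧ cov i = Sum.inl j then 1 else 0)

noncomputable def tBc (isEnt : Fin n → Prop) (cov : Fin n → Fin n ⊕ Fin m) :
    Matrix (Fin n) (Fin m) ℝ :=
  Matrix.of fun i j =>
    (if π i = Sum.inr j then 1 else 0) +
    (if isEnt i ∧ cov i = Sum.inr j then 1 else 0)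

noncomputable def childF (j : Fin n) : Option (Fin n) :=
  if h : ∃ i, π i = Sum.inl j then some h.choose else none

lemma childF_some_iff (hinj : Function.Injective π) (j i : Fin n) :
    childF π j = some i ↔ π i = Sum.inl j := by
  unfold childF
  constructor
  · intro h
    split at h
    · rename_i hex
      rw [Option.some_inj] at h
      rw [← h]
      exact hex.choose_spec
    · exact absurd h (by simp)
  · intro h
    rw [dif_pos ⟨i, h⟩]
    congr 1
    exact hinj ((Exists.choose_spec (⟨i, h⟩ : ∃ i, π i = Sum.inl j)).trans h.symm)

lemma childF_none_iff (j : Fin n) :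
    childF π j = none ↔ ∀ i, π i ≠ Sum.inl j := by
  unfold childF
  constructor
  · intro h i hi
    rw [dif_pos ⟨i, hi⟩] at h
    exact absurd h (by simp)
  · intro h
    rw [dif_neg]
    rintro ⟨i, hi⟩
    exact h i hi

end Suff

section Suff2

open scoped Classical

variable {n m : ℕ} (π : Fin n → Fin n ⊕ Fin m)

noncomputable def drvC (isEnt : Fin n → Prop) (cov : Fin n → Fin n ⊕ Fin m)
    (v : Fin n → ℂ) (j : Fin n) : ℂ :=
  ∑ i ∈ Finset.univ.filter (fun i => isEnt i ∧ cov i = Sum.inl j), v i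

noncomputable def ctermC (isEnt : Fin n → Prop) (v : Fin n → ℂ) (j : Fin n) : ℂ :=
  ∑ i ∈ Finset.univ.filter (fun i => π i = Sum.inl j), ((wtV π isEnt i : ℝ) : ℂ) * v i

variable (isEnt : Fin n → Prop) (cov : Fin n → Fin n ⊕ Fin m) (lam : ℂ) (v : Fin n → ℂ)

lemma wtC_ne (i : Fin n) : ((wtV π isEnt i : ℝ) : ℂ) ≠ 0 := by
  rw [Complex.ofReal_ne_zero]
  exact ne_of_gt (wtV_pos π isEnt i)

lemma ctermC_child (hinj : Function.Injective π) {i j : Fin n} (h : π i = Sum.inl j) :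
    ctermC π isEnt v j = ((wtV π isEnt i : ℝ) : ℂ) * v i := by
  unfold ctermC
  refine Finset.sum_eq_single_of_mem i (by simp [h]) ?_
  intro i' hi' hne
  rw [Finset.mem_filter] at hi'
  exact absurd (hinj (hi'.2.trans h.symm)) hne

lemma ctermC_nochild {j : Fin n} (h : ∀ i, π i ≠ Sum.inl j) :
    ctermC π isEnt v j = 0 := by
  unfold ctermC
  refine Finset.sum_eq_zero ?_
  intro i hi
  rw [Finset.mem_filter] at hi
  exact absurd hi.2 (h i)

/-- the basic `run` formula along a cycle -/
lemma run_lemma (hinj : Function.Injective π) {e : Fin n} (he : cyclicV π e)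
    (hEq : ∀ j, ctermC π isEnt v j + drvC isEnt cov v j = lam * v j)
    (start t : ℕ)
    (hpure : ∀ s, start < s → s ≤ start + t → drvC isEnt cov v (xsV π e s) = 0) :
    lam ^ t * v (xsV π e (start + t)) =
      (∏ s ∈ Finset.Ico start (start + t), ((wtV π isEnt (xsV π e s) : ℝ) : ℂ)) *
        v (xsV π e start) := by
  induction t with
  | zero => simp
  | succ t ih =>
      have ih' := ih (fun s hs1 hs2 => hpure s hs1 (by omega))
      have heq1 : ctermC π isEnt v (xsV π e (start + t + 1)) +
          drvC isEnt cov v (xsV π e (start + t + 1)) = lam * v (xsV π e (start + t + 1)) :=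
        hEq _
      rw [hpure (start + t + 1) (by omega) (by omega), add_zero,
        ctermC_child π isEnt v hinj (xsV_parent π he (start + t))] at heq1
      have h2 : lam ^ (t+1) * v (xsV π e (start + (t+1))) =
          lam ^ t * (lam * v (xsV π e (start + t + 1))) := by
        rw [show start + (t+1) = start + t + 1 by omega]
        ring
      rw [h2, ← heq1, show start + (t+1) = (start + t) + 1 by omega,
        Finset.prod_Ico_succ_top (by omega : start ≤ start + t)]
      calc lam ^ t * (((wtV π isEnt (xsV π e (start + t)) : ℝ) : ℂ) * v (xsV π e (start + t)))
          = ((wtV π isEnt (xsV π e (start + t)) : ℝ) : ℂ) *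
              (lam ^ t * v (xsV π e (start + t))) := by ring
        _ = _ := by rw [ih']; ring

noncomputable def cycProd (e : Fin n) : ℂ :=
  ∏ s ∈ Finset.range (perV π e), ((wtV π isEnt (xsV π e s) : ℝ) : ℂ)

lemma cycProd_ne (e : Fin n) : cycProd π isEnt e ≠ 0 :=
  Finset.prod_ne_zero_iff.mpr (fun _ _ => wtC_ne π isEnt _)

lemma xsV_start_per {e : Fin n} (he : cyclicV π e) : xsV π e (0 + perV π e) = e := by
  rw [zero_add, show perV π e = 0 + perV π e by omega, xsV_add_per π he, xsV_zero]

/-- pure non-resonant cycle: the entry value vanishes -/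
lemma cyc_ve_zero (hinj : Function.Injective π) {e : Fin n} (he : cyclicV π e)
    (hEq : ∀ j, ctermC π isEnt v j + drvC isEnt cov v j = lam * v j)
    (hpure : ∀ x, sameCyc π e x → drvC isEnt cov v x = 0)
    (hres : lam ^ (perV π e) ≠ cycProd π isEnt e) : v e = 0 := by
  have hr := run_lemma π isEnt cov lam v hinj he hEq 0 (perV π e)
    (fun s _ _ => hpure _ (xsV_mem π he s))
  rw [xsV_start_per π he, xsV_zero] at hr
  simp only [zero_add] at hr
  rw [show Finset.Ico 0 (perV π e) = Finset.range (perV π e) by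
    rw [Finset.range_eq_Ico]] at hr
  by_contra hv
  exact hres (mul_right_cancel₀ hv (by rw [hr]; rfl))

/-- pure cycle with vanishing entry value: everything vanishes on the cycle -/
lemma cyc_all_zero (hinj : Function.Injective π) {e : Fin n} (he : cyclicV π e)
    (hEq : ∀ j, ctermC π isEnt v j + drvC isEnt cov v j = lam * v j)
    (hpure : ∀ x, sameCyc π e x → drvC isEnt cov v x = 0)
    (hve : v e = 0) : ∀ x, sameCyc π e x → v x = 0 := by
  intro x hx
  obtain ⟨k, hk, hkx⟩ := xsV_surj π hx
  by_cases hlam : lam = 0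
  · -- at λ = 0 each value with a parent column on the cycle vanishes
    have heq1 := hEq (xsV π e (k+1))
    rw [hpure _ (xsV_mem π he (k+1)), add_zero,
      ctermC_child π isEnt v hinj (xsV_parent π he k), hlam, zero_mul] at heq1
    rw [← hkx]
    exact (mul_eq_zero.mp heq1).resolve_left (wtC_ne π isEnt _)
  · have hr := run_lemma π isEnt cov lam v hinj he hEq 0 k
      (fun s _ _ => hpure _ (xsV_mem π he s))
    simp only [zero_add, xsV_zero] at hr
    rw [hve, mul_zero] at hr
    rw [← hkx]
    exact (mul_eq_zero.mp hr).resolve_left (pow_ne_zero k hlam)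

/-- pure cycle with non-vanishing entry value: nothing vanishes on the cycle -/
lemma cyc_all_ne (hinj : Function.Injective π) {e : Fin n} (he : cyclicV π e)
    (hEq : ∀ j, ctermC π isEnt v j + drvC isEnt cov v j = lam * v j)
    (hpure : ∀ x, sameCyc π e x → drvC isEnt cov v x = 0)
    (hlam : lam ≠ 0) (hve : v e ≠ 0) : ∀ x, sameCyc π e x → v x ≠ 0 := by
  intro x hx
  obtain ⟨k, hk, hkx⟩ := xsV_surj π hx
  have hr := run_lemma π isEnt cov lam v hinj he hEq 0 k
    (fun s _ _ => hpure _ (xsV_mem π he s))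
  simp only [zero_add, xsV_zero] at hr
  rw [← hkx]
  intro hcon
  rw [hcon, mul_zero] at hr
  exact (Finset.prod_ne_zero_iff.mpr (fun s _ => wtC_ne π isEnt _)) (by
    rcases mul_eq_zero.mp hr.symm with h | h
    · exact h
    · exact absurd h hve)

/-- a window inside one period avoids the starting vertex -/
lemma xsV_window_ne {e : Fin n} (he : cyclicV π e) {k0 d : ℕ} (hk0 : k0 < perV π e)
    (hd1 : 1 ≤ d) (hd2 : d ≤ perV π e - 1) : xsV π e (k0 + d) ≠ xsV π e k0 := by
  intro hcon
  rw [xsV_mod π he (k0 + d)] at hcon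
  have hlt : (k0 + d) % perV π e < perV π e := Nat.mod_lt _ (perV_pos π e)
  have := xsV_inj π he hlt hk0 hcon
  have hper := perV_pos π e
  rcases Nat.lt_or_ge (k0 + d) (perV π e) with h | h
  · rw [Nat.mod_eq_of_lt h] at this
    omega
  · have h2 : k0 + d - perV π e < perV π e := by omega
    have h3 : (k0 + d) % perV π e = k0 + d - perV π e := by
      rw [Nat.mod_eq_sub_mod h, Nat.mod_eq_of_lt h2]
    omega

/-- driven cycle: single nonzero drive forces all values nonzero -/
lemma cyc_driven (hinj : Function.Injective π) {e w : Fin n} (he : cyclicV π e)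
    (hEq : ∀ j, ctermC π isEnt v j + drvC isEnt cov v j = lam * v j)
    (hw : sameCyc π e w)
    (hpure : ∀ x, sameCyc π e x → x ≠ w → drvC isEnt cov v x = 0)
    (hlam : lam ≠ 0) (hxi : drvC isEnt cov v w ≠ 0) :
    ∀ x, sameCyc π e x → v x ≠ 0 := by
  obtain ⟨k0, hk0, hk0w⟩ := xsV_surj π hw
  have hper := perV_pos π e
  -- step 1 : v w ≠ 0
  have hrun := run_lemma π isEnt cov lam v hinj he hEq k0 (perV π e - 1)
    (fun s hs1 hs2 => by
      refine hpure _ (xsV_mem π he s) ?_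
      rw [← hk0w, show s = k0 + (s - k0) by omega]
      exact xsV_window_ne π he hk0 (by omega) (by omega))
  have heqw := hEq (xsV π e (k0 + perV π e))
  have hxsw : xsV π e (k0 + perV π e) = w := by rw [xsV_add_per π he, hk0w]
  have hchild : π (xsV π e (k0 + (perV π e - 1))) = Sum.inl (xsV π e (k0 + perV π e)) := by
    have := xsV_parent π he (k0 + (perV π e - 1))
    rwa [show k0 + (perV π e - 1) + 1 = k0 + perV π e by omega] at this
  rw [ctermC_child π isEnt v hinj hchild, hxsw] at heqw
  have hvw : v w ≠ 0 := by
    intro hvw0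
    rw [hk0w, hvw0, mul_zero] at hrun
    have hv' : v (xsV π e (k0 + (perV π e - 1))) = 0 :=
      (mul_eq_zero.mp hrun).resolve_left (pow_ne_zero _ hlam)
    rw [hvw0, hv', mul_zero, zero_add, mul_zero] at heqw
    exact hxi heqw
  -- step 2 : every vertex on the cycle
  intro x hx
  obtain ⟨k, hk, hkx⟩ := xsV_surj π hx
  by_cases hkk0 : k = k0
  · rw [← hkx, hkk0, hk0w]; exact hvw
  · set s : ℕ := if k0 ≤ k then k - k0 else k + perV π e - k0 with hs
    have hs1 : 1 ≤ s := by rw [hs]; split <;> omega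
    have hs2 : s ≤ perV π e - 1 := by rw [hs]; split <;> omega
    have hxss : xsV π e (k0 + s) = x := by
      rw [hs]
      split
      · rw [show k0 + (k - k0) = k by omega]; exact hkx
      · rw [show k0 + (k + perV π e - k0) = k + perV π e by omega,
          xsV_add_per π he, hkx]
    have hrun2 := run_lemma π isEnt cov lam v hinj he hEq k0 s
      (fun s' hs1' hs2' => by
        refine hpure _ (xsV_mem π he s') ?_
        rw [← hk0w, show s' = k0 + (s' - k0) by omega]
        exact xsV_window_ne π he hk0 (by omega) (by omega))
    rw [hxss, hk0w] at hrun2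
    intro hcon
    rw [hcon, mul_zero] at hrun2
    rcases mul_eq_zero.mp hrun2.symm with h | h
    · exact (Finset.prod_ne_zero_iff.mpr (fun s _ => wtC_ne π isEnt _)) h
    · exact hvw h

end Suff2

section Suff3

open scoped Classical

variable {n m : ℕ} (π : Fin n → Fin n ⊕ Fin m)

noncomputable def citer : ℕ → Fin n → Option (Fin n)
  | 0, j => some j
  | (k+1), j => (childF π j).bind (citer k)

@[simp] lemma citer_zero (j : Fin n) : citer π 0 j = some j := rfl

lemma citer_succ_child {j i : Fin n} (h : childF π j = some i) (k : ℕ) :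
    citer π (k+1) j = citer π k i := by
  simp [citer, h]

lemma citer_succ_none {j : Fin n} (h : childF π j = none) (k : ℕ) :
    citer π (k+1) j = none := by
  simp [citer, h]

lemma citer_to_g (hinj : Function.Injective π) :
    ∀ (k : ℕ) (j x : Fin n), citer π k j = some x → (gstep π)^[k] (Sum.inl x) = Sum.inl j := by
  intro k
  induction k with
  | zero =>
      intro j x h
      simp only [citer_zero, Option.some_inj] at h
      rw [h]
      rfl
  | succ k ih =>
      intro j x h
      rcases hc : childF π j with _ | i
      · rw [citer_succ_none π hc] at h
        exact absurd h (by simp)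
      · rw [citer_succ_child π hc] at h
        have hpi : π i = Sum.inl j := (childF_some_iff π hinj j i).mp hc
        rw [Function.iterate_succ_apply', ih i x h]
        simpa [gstep] using hpi

lemma g_to_citer (hinj : Function.Injective π) :
    ∀ (k : ℕ) (x j : Fin n), (gstep π)^[k] (Sum.inl x) = Sum.inl j → citer π k j = some x := by
  intro k
  induction k with
  | zero =>
      intro x j h
      simp only [Function.iterate_zero, id] at h
      rw [Sum.inl.inj h]
      rfl
  | succ k ih =>
      intro x j h
      rw [Function.iterate_succ_apply'] at h
      rcases hy : (gstep π)^[k] (Sum.inl x) with y | jm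
      · rw [hy] at h
        have hpy : π y = Sum.inl j := by simpa [gstep] using h
        rw [citer_succ_child π ((childF_some_iff π hinj j y).mpr hpy)]
        exact ih x y hy
      · rw [hy] at h
        simp [gstep] at h

lemma child_noncyclic (hinj : Function.Injective π) {j i : Fin n}
    (hnc : ¬ cyclicV π j) (h : childF π j = some i) : ¬ cyclicV π i := by
  intro hci
  exact hnc (cyclic_parent π hci ((childF_some_iff π hinj j i).mp h)).1

lemma citer_noncyclic (hinj : Function.Injective π) :
    ∀ (k : ℕ) (j x : Fin n), ¬ cyclicV π j → citer π k j = some x → ¬ cyclicV π x := by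
  intro k
  induction k with
  | zero =>
      intro j x hnc h
      simp only [citer_zero, Option.some_inj] at h
      rwa [← h]
  | succ k ih =>
      intro j x hnc h
      rcases hc : childF π j with _ | i
      · rw [citer_succ_none π hc] at h; exact absurd h (by simp)
      · rw [citer_succ_child π hc] at h
        exact ih i x (child_noncyclic π hinj hnc hc) h

lemma citer_add (a t : ℕ) : ∀ (j : Fin n), citer π (a + t) j =
    match citer π a j with
    | some y => citer π t y
    | none => none := by
  induction a with
  | zero => intro j; simp
  | succ a ih =>
      intro j
      rcases hc : childF π j with _ | i
      · rw [show a + 1 + t = (a + t) + 1 by omega, citer_succ_none π hc,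
          citer_succ_none π hc]
      · rw [show a + 1 + t = (a + t) + 1 by omega, citer_succ_child π hc,
          citer_succ_child π hc, ih i]

lemma citer_eventually_none (hinj : Function.Injective π) {j : Fin n}
    (hnc : ¬ cyclicV π j) : ∃ k, citer π k j = none := by
  by_contra hcon
  push_neg at hcon
  have hsome : ∀ k : ℕ, ∃ x, citer π k j = some x := by
    intro k
    rcases h : citer π k j with _ | x
    · exact absurd h (hcon k)
    · exact ⟨x, rfl⟩
  have hcard : Fintype.card (Fin n) < Fintype.card (Fin (n+1)) := by simp
  obtain ⟨a, b, hab, heq⟩ := Fintype.exists_ne_map_eq_of_card_lt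
    (fun k : Fin (n+1) => (hsome k).choose) hcard
  wlog hlt : (a : ℕ) < (b : ℕ) generalizing a b
  · exact this b a (Ne.symm hab) heq.symm (by omega)
  set x := (hsome (a : ℕ)).choose with hx
  have hxa : citer π (a : ℕ) j = some x := (hsome (a : ℕ)).choose_spec
  have hxb : citer π (b : ℕ) j = some x := by
    rw [heq]; exact (hsome (b : ℕ)).choose_spec
  have hloop : citer π ((b : ℕ) - (a : ℕ)) x = some x := by
    have := citer_add π (a : ℕ) ((b : ℕ) - (a : ℕ)) j
    rw [hxa, show (a:ℕ) + ((b:ℕ) - (a:ℕ)) = (b:ℕ) by omega, hxb] at this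
    exact this.symm
  have hcyc : cyclicV π x :=
    ⟨(b : ℕ) - (a : ℕ), by omega, citer_to_g π hinj _ x x hloop⟩
  exact citer_noncyclic π hinj (a : ℕ) j x hnc hxa hcyc

noncomputable def depthC (j : Fin n) : ℕ :=
  if h : ∃ k, citer π k j = none then Nat.find h else 0

lemma depthC_pos {j : Fin n} (h : ∃ k, citer π k j = none) : 0 < depthC π j := by
  unfold depthC
  rw [dif_pos h]
  rcases Nat.eq_zero_or_pos (Nat.find h) with h0 | h0
  · exact absurd (h0 ▸ Nat.find_spec h) (by simp)
  · exact h0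

lemma depthC_child {j i : Fin n} (hj : ∃ k, citer π k j = none)
    (hc : childF π j = some i) : depthC π i < depthC π j := by
  have hi : ∃ k, citer π k i = none := by
    obtain ⟨k, hk⟩ := hj
    rcases k with _ | k
    · exact absurd hk (by simp)
    · rw [citer_succ_child π hc] at hk
      exact ⟨k, hk⟩
  unfold depthC
  rw [dif_pos hj, dif_pos hi]
  have h1 : citer π (Nat.find hj - 1) i = none := by
    have hspec := Nat.find_spec hj
    have hpos : 0 < Nat.find hj := by
      rcases Nat.eq_zero_or_pos (Nat.find hj) with h0 | h0
      · exact absurd (h0 ▸ hspec) (by simp)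
      · exact h0
    rw [show Nat.find hj = (Nat.find hj - 1) + 1 by omega, citer_succ_child π hc] at hspec
    exact hspec
  have hle := Nat.find_min' hi h1
  have hpos : 0 < Nat.find hj := by
    rcases Nat.eq_zero_or_pos (Nat.find hj) with h0 | h0
    · exact absurd (h0 ▸ Nat.find_spec hj) (by simp)
    · exact h0
  omega

variable (isEnt : Fin n → Prop) (cov : Fin n → Fin n ⊕ Fin m) (lam : ℂ) (v : Fin n → ℂ)

/-- pure descent: a noncyclic vertex whose descendants all have vanishing drive
has vanishing value (λ ≠ 0). -/
lemma path_zero (hinj : Function.Injective π) (hlam : lam ≠ 0)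
    (hEq : ∀ j, ctermC π isEnt v j + drvC isEnt cov v j = lam * v j) :
    ∀ (d : ℕ) (j : Fin n), depthC π j ≤ d → ¬ cyclicV π j →
    (∀ k x, citer π k j = some x → drvC isEnt cov v x = 0) → v j = 0 := by
  intro d
  induction d with
  | zero =>
      intro j hd hnc _
      exact absurd hd (by
        have := depthC_pos π (citer_eventually_none π hinj hnc)
        omega)
  | succ d ih =>
      intro j hd hnc hpure
      have heq := hEq j
      rw [hpure 0 j rfl, add_zero] at heq
      rcases hc : childF π j with _ | i
      · rw [ctermC_nochild π isEnt v (fun i hi =>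
          (by simp [(childF_some_iff π hinj j i).mpr hi] : childF π j ≠ none)
            ((childF_none_iff π j).mpr (fun i' hi' => by
              rw [(childF_some_iff π hinj j i').mpr hi'] at hc
              exact absurd hc (by simp)) ▸ hc))] at heq
        · exact ((mul_eq_zero.mp heq.symm).resolve_left hlam)
      · rw [ctermC_child π isEnt v hinj ((childF_some_iff π hinj j i).mp hc)] at heq
        have hvi : v i = 0 := by
          refine ih i ?_ (child_noncyclic π hinj hnc hc) ?_
          · have := depthC_child π (citer_eventually_none π hinj hnc) hc
            omega
          · intro k x hk
            exact hpure (k+1) x (by rw [citer_succ_child π hc]; exact hk)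
        rw [hvi, mul_zero] at heq
        exact ((mul_eq_zero.mp heq.symm).resolve_left hlam)

/-- driven descent: a noncyclic vertex with exactly one nonzero drive on its
descendant chain has nonzero value (λ ≠ 0). -/
lemma path_nonzero (hinj : Function.Injective π) (hlam : lam ≠ 0)
    (hEq : ∀ j, ctermC π isEnt v j + drvC isEnt cov v j = lam * v j) (sx : Fin n)
    (hxi : drvC isEnt cov v sx ≠ 0) :
    ∀ (K : ℕ) (j : Fin n), ¬ cyclicV π j → citer π K j = some sx →
    (∀ k x, citer π k j = some x → x ≠ sx → drvC isEnt cov v x = 0) → v j ≠ 0 := by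
  intro K
  induction K with
  | zero =>
      intro j hnc hK hpure
      simp only [citer_zero, Option.some_inj] at hK
      rw [← hK] at hxi
      replace hpure : ∀ k x, citer π k j = some x → x ≠ j → drvC isEnt cov v x = 0 := by
        intro k x h1 h2
        exact hpure k x h1 (by rw [← hK]; exact h2)
      have heq := hEq j
      have hcterm : ctermC π isEnt v j = 0 := by
        rcases hc : childF π j with _ | i
        · exact ctermC_nochild π isEnt v (fun i hi => by
            rw [(childF_some_iff π hinj j i).mpr hi] at hc
            exact absurd hc (by simp))
        · rw [ctermC_child π isEnt v hinj ((childF_some_iff π hinj j i).mp hc)]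
          have hvi : v i = 0 := by
            refine path_zero π isEnt cov lam v hinj hlam hEq (depthC π i) i le_rfl
              (child_noncyclic π hinj hnc hc) ?_
            intro k x hk
            refine hpure (k+1) x (by rw [citer_succ_child π hc]; exact hk) ?_
            intro hxeq
            rw [hxeq] at hk
            have := citer_to_g π hinj (k+1) j j (by rw [citer_succ_child π hc]; exact hk)
            exact hnc ⟨k+1, by omega, this⟩
          rw [hvi, mul_zero]
      rw [hcterm, zero_add] at heq
      intro hcon
      rw [hcon, mul_zero] at heq
      exact hxi heq
  | succ K ih =>
      intro j hnc hK hpure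
      rcases hc : childF π j with _ | i
      · rw [citer_succ_none π hc] at hK
        exact absurd hK (by simp)
      · rw [citer_succ_child π hc] at hK
        have hji : π i = Sum.inl j := (childF_some_iff π hinj j i).mp hc
        have hvi : v i ≠ 0 := by
          refine ih i (child_noncyclic π hinj hnc hc) hK ?_
          intro k x hk hxne
          exact hpure (k+1) x (by rw [citer_succ_child π hc]; exact hk) hxne
        have heq := hEq j
        have hjne : j ≠ sx := by
          intro hjeq
          rw [← hjeq] at hK
          have := citer_to_g π hinj (K+1) j j (by rw [citer_succ_child π hc]; exact hK)
          exact hnc ⟨K+1, by omega, this⟩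
        rw [hpure 0 j rfl hjne, add_zero, ctermC_child π isEnt v hinj hji] at heq
        intro hcon
        rw [hcon, mul_zero] at heq
        exact (mul_ne_zero (wtC_ne π isEnt i) hvi) heq

lemma cyclic_pullback (hinj : Function.Injective π) :
    ∀ (a : ℕ) (s x : Fin n), (gstep π)^[a] (Sum.inl s) = Sum.inl x → cyclicV π x →
      cyclicV π s := by
  intro a
  induction a with
  | zero =>
      intro s x h hc
      simp only [Function.iterate_zero, id] at h
      rwa [Sum.inl.inj h]
  | succ a ih =>
      intro s x h hc
      rw [Function.iterate_succ_apply] at h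
      rcases hy : gstep π (Sum.inl s) with y | jm
      · rw [hy] at h
        exact cyclic_child π hinj (ih y x h hc) (by simpa [gstep] using hy)
      · rw [hy, gstep_iter_inr] at h
        exact absurd h (by simp)

lemma exists_root (hinj : Function.Injective π) {s : Fin n} (hnc : ¬ cyclicV π s) :
    ∃ (K : ℕ) (r : Fin n) (jr : Fin m), citer π K r = some s ∧ π r = Sum.inr jr ∧
      ¬ cyclicV π r := by
  have hup : ∃ k, ∃ jm : Fin m, (gstep π)^[k] (Sum.inl s) = Sum.inr jm := by
    by_contra hcon
    push_neg at hcon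
    have hsome : ∀ k : ℕ, ∃ x, (gstep π)^[k] (Sum.inl s) = Sum.inl x := by
      intro k
      rcases h : (gstep π)^[k] (Sum.inl s) with x | jm
      · exact ⟨x, rfl⟩
      · exact absurd h (hcon k jm)
    have hcard : Fintype.card (Fin n) < Fintype.card (Fin (n+1)) := by simp
    obtain ⟨a, b, hab, heq⟩ := Fintype.exists_ne_map_eq_of_card_lt
      (fun k : Fin (n+1) => (hsome k).choose) hcard
    wlog hlt : (a : ℕ) < (b : ℕ) generalizing a b
    · exact this b a (Ne.symm hab) heq.symm (by omega)
    set x := (hsome (a:ℕ)).choose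
    have hxa : (gstep π)^[(a:ℕ)] (Sum.inl s) = Sum.inl x := (hsome (a:ℕ)).choose_spec
    have hxb : (gstep π)^[(b:ℕ)] (Sum.inl s) = Sum.inl x := by
      rw [heq]; exact (hsome (b:ℕ)).choose_spec
    have hloop : (gstep π)^[(b:ℕ) - (a:ℕ)] (Sum.inl x) = Sum.inl x := by
      have : (gstep π)^[((b:ℕ) - (a:ℕ)) + (a:ℕ)] (Sum.inl s) = Sum.inl x := by
        rw [show ((b:ℕ) - (a:ℕ)) + (a:ℕ) = (b:ℕ) by omega]; exact hxb
      rw [Function.iterate_add_apply, hxa] at this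
      exact this
    exact hnc (cyclic_pullback π hinj (a:ℕ) s x hxa ⟨(b:ℕ)-(a:ℕ), by omega, hloop⟩)
  classical
  obtain ⟨jm, hk1⟩ := Nat.find_spec hup
  set k1 := Nat.find hup with hk1def
  have hk1pos : 0 < k1 := by
    rcases Nat.eq_zero_or_pos k1 with h0 | h0
    · rw [h0] at hk1
      simp only [Function.iterate_zero, id] at hk1
      exact absurd hk1 (by simp)
    · exact h0
  have hr : ∃ r, (gstep π)^[k1 - 1] (Sum.inl s) = Sum.inl r := by
    rcases h : (gstep π)^[k1 - 1] (Sum.inl s) with r | jm'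
    · exact ⟨r, rfl⟩
    · exact absurd ⟨jm', h⟩ (Nat.find_min hup (by omega))
  obtain ⟨r, hrr⟩ := hr
  have hpr : π r = Sum.inr jm := by
    have : (gstep π)^[k1] (Sum.inl s) = Sum.inr jm := hk1
    rw [show k1 = (k1 - 1) + 1 by omega, Function.iterate_succ_apply', hrr] at this
    simpa [gstep] using this
  refine ⟨k1 - 1, r, jm, g_to_citer π hinj _ s r hrr, hpr, ?_⟩
  intro hcyc
  obtain ⟨j', hj'⟩ := cyclic_pi_inl π hcyc
  rw [hpr] at hj'
  exact absurd hj' (by simp)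

end Suff3

section Cascade

open scoped Classical

variable {n m : ℕ}

lemma pow_base_eq {p q : ℕ} (hp : 0 < p) (hq : 0 < q) {a b : ℝ} (ha : 0 ≤ a) (hb : 0 ≤ b)
    (lam : ℂ) (h1 : lam ^ p = ((a : ℝ) : ℂ) ^ p) (h2 : lam ^ q = ((b : ℝ) : ℂ) ^ q) :
    a = b := by
  have habs1 : ‖lam‖ ^ p = a ^ p := by
    rw [← norm_pow, h1, norm_pow, Complex.norm_of_nonneg ha]
  have habs2 : ‖lam‖ ^ q = b ^ q := by
    rw [← norm_pow, h2, norm_pow, Complex.norm_of_nonneg hb]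
  have hmem : ‖lam‖ ∈ {x : ℝ | 0 ≤ x} := by
    simp [norm_nonneg]
  have h1' : ‖lam‖ = a :=
    (pow_left_strictMonoOn₀ (by omega : p ≠ 0)).injOn hmem (by simpa using ha) habs1
  have h2' : ‖lam‖ = b :=
    (pow_left_strictMonoOn₀ (by omega : q ≠ 0)).injOn hmem (by simpa using hb) habs2
  rw [← h1', h2']

lemma cycProd_entry (π : Fin n → Fin n ⊕ Fin m) (isEnt : Fin n → Prop) {e : Fin n}
    (he : cyclicV π e) (hE : isEnt e)
    (hUniq : ∀ x, sameCyc π e x → isEnt x → x = e) :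
    cycProd π isEnt e = (((e : ℕ) + 2 : ℝ) : ℂ) ^ (perV π e) := by
  unfold cycProd
  rw [Finset.prod_eq_single 0 (fun s hs hs0 => ?_) (fun h0 => absurd (Finset.mem_range.mpr
    (perV_pos π e)) h0)]
  · rw [xsV_zero]
    unfold wtV
    rw [if_pos hE]
    push_cast
    rfl
  · have hne : ¬ isEnt (xsV π e s) := by
      intro hent
      have := hUniq (xsV π e s) (xsV_mem π he s) hent
      have h0 := xsV_inj π he (Finset.mem_range.mp hs) (perV_pos π e)
        (this.trans (xsV_zero π e).symm)
      exact hs0 h0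
    unfold wtV
    rw [if_neg hne]
    norm_num


theorem cascade (π : Fin n → Fin n ⊕ Fin m) (hinj : Function.Injective π)
    (isEnt : Fin n → Prop) (cov : Fin n → Fin n ⊕ Fin m) (rk : Fin n → ℕ)
    (hEntCyc : ∀ e, isEnt e → cyclicV π e)
    (hCover : ∀ i, cyclicV π i → ∃ e, isEnt e ∧ sameCyc π e i)
    (hUnique : ∀ e e', isEnt e → isEnt e' → sameCyc π e e' → e = e')
    (hRkConst : ∀ i j, cyclicV π i → cyclicV π j → sameCyc π i j → rk i = rk j)
    (hRkBound : ∀ e, isEnt e → rk e ≤ n)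
    (hCovSrc : ∀ e w, isEnt e → cov e = Sum.inl w →
      ¬ sameCyc π e w ∧ (cyclicV π w → rk w < rk e))
    (lam : ℂ) (v : Fin n → ℂ)
    (hEq : ∀ j, ctermC π isEnt v j + drvC isEnt cov v j = lam * v j)
    (hOrth : ∀ jm : Fin m,
      (∑ i ∈ Finset.univ.filter (fun i => π i = Sum.inr jm), v i) +
      (∑ i ∈ Finset.univ.filter (fun i => isEnt i ∧ cov i = Sum.inr jm), v i) = 0) :
    v = 0 := by
  classical
  have hUniqIn : ∀ e, isEnt e → ∀ x, sameCyc π e x → isEnt x → x = e := by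
    intro e he x hx hxE
    exact hUnique x e hxE he (sameCyc_symm π hx)
  have hres_eq : ∀ e, isEnt e → cycProd π isEnt e = (((e : ℕ) + 2 : ℝ) : ℂ) ^ perV π e :=
    fun e he => cycProd_entry π isEnt (hEntCyc e he) he (hUniqIn e he)
  have hResUnique : ∀ e e', isEnt e → isEnt e' →
      lam ^ perV π e = cycProd π isEnt e → lam ^ perV π e' = cycProd π isEnt e' →
      e = e' := by
    intro e e' he he' h1 h2
    rw [hres_eq e he] at h1
    rw [hres_eq e' he'] at h2
    have hbase := pow_base_eq (perV_pos π e) (perV_pos π e') (by positivity) (by positivity)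
      lam h1 h2
    have hval : ((e : ℕ) : ℝ) = ((e' : ℕ) : ℝ) := by linarith
    exact Fin.val_injective (by exact_mod_cast hval)
  set eOf : Fin n → Fin n := fun i => if h : cyclicV π i then (hCover i h).choose else i
    with heOfdef
  have heOfE : ∀ i, cyclicV π i → isEnt (eOf i) ∧ sameCyc π (eOf i) i := by
    intro i h
    rw [heOfdef]
    dsimp only
    rw [dif_pos h]
    exact (hCover i h).choose_spec
  have heOfUniq : ∀ i, cyclicV π i → ∀ e, isEnt e → sameCyc π e i → e = eOf i := by
    intro i h e hE hsame
    exact hUnique e (eOf i) hE (heOfE i h).1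
      (sameCyc_trans π hsame (sameCyc_symm π (heOfE i h).2))
  have hdrv0 : ∀ x, (∀ e, isEnt e → cov e = Sum.inl x → v e = 0) →
      drvC isEnt cov v x = 0 := by
    intro x h
    refine Finset.sum_eq_zero ?_
    intro e hemem
    rw [Finset.mem_filter] at hemem
    exact h e hemem.2.1 hemem.2.2
  have hdrv1 : ∀ x e0, isEnt e0 → cov e0 = Sum.inl x →
      (∀ e, isEnt e → cov e = Sum.inl x → e ≠ e0 → v e = 0) →
      drvC isEnt cov v x = v e0 := by
    intro x e0 h0 hc0 h
    refine Finset.sum_eq_single_of_mem e0 (by simp [h0, hc0]) ?_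
    intro e hemem hne
    rw [Finset.mem_filter] at hemem
    exact h e hemem.2.1 hemem.2.2 hne
  have hdriver_rk : ∀ e e' x, isEnt e → isEnt e' → sameCyc π e x → cov e' = Sum.inl x →
      rk e < rk e' := by
    intro e e' x hE hE' hx hcov
    have hxc : cyclicV π x := (sameCyc_cyclic π hx).1
    have h1 := (hCovSrc e' x hE' hcov).2 hxc
    have h2 : rk e = rk x := hRkConst e x (hEntCyc e hE) hxc hx
    omega
  by_cases hPOS : ∃ e, isEnt e ∧ lam ^ perV π e = cycProd π isEnt e ∧ v e ≠ 0
  · -- the resonant chain case : contradiction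
    exfalso
    obtain ⟨et, hetE, hetRes, hetv⟩ := hPOS
    have hlam : lam ≠ 0 := by
      intro h0
      rw [h0, zero_pow (by have := perV_pos π et; omega)] at hetRes
      exact cycProd_ne π isEnt et hetRes.symm
    set chainNext : Fin n → Option (Fin n) := fun e =>
      match cov e with
      | Sum.inl w => if cyclicV π w then some (eOf w) else none
      | Sum.inr _ => none with hchainNext
    set cseq : ℕ → Option (Fin n) := fun k =>
      Nat.rec (some et) (fun _ ih => ih.bind chainNext) k with hcseqdef
    have hcseq0 : cseq 0 = some et := rfl
    have hcseqS : ∀ k, cseq (k+1) = (cseq k).bind chainNext := fun k => rfl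
    set CH : Fin n → Prop := fun e => ∃ k, cseq k = some e with hCHdef
    have hcnext : ∀ e e', chainNext e = some e' →
        ∃ w, cov e = Sum.inl w ∧ cyclicV π w ∧ e' = eOf w := by
      intro e e' h
      rw [hchainNext] at h
      dsimp only at h
      rcases hcov : cov e with w | j
      · rw [hcov] at h
        dsimp only at h
        by_cases hw : cyclicV π w
        · rw [if_pos hw] at h
          exact ⟨w, rfl, hw, (Option.some_inj.mp h).symm⟩
        · rw [if_neg hw] at h
          exact absurd h (by simp)
      · rw [hcov] at h
        dsimp only at h
        exact absurd h (by simp)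
    have hcnext_of : ∀ e w, cov e = Sum.inl w → cyclicV π w →
        chainNext e = some (eOf w) := by
      intro e w hcov hw
      rw [hchainNext]
      dsimp only
      rw [hcov]
      dsimp only
      rw [if_pos hw]
    have hcseq_ent : ∀ k e, cseq k = some e → isEnt e := by
      intro k
      induction k with
      | zero =>
          intro e h
          rw [hcseq0, Option.some_inj] at h
          rwa [← h]
      | succ k ih =>
          intro e h
          rw [hcseqS] at h
          rcases hk : cseq k with _ | e'
          · rw [hk] at h; exact absurd h (by simp)
          · rw [hk, Option.bind_some] at h
            obtain ⟨w, _, hw, he'⟩ := hcnext e' e h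
            rw [he']
            exact (heOfE w hw).1
    have hcnext_rk : ∀ e e', isEnt e → chainNext e = some e' → rk e' < rk e := by
      intro e e' hE h
      obtain ⟨w, hcov, hw, he'⟩ := hcnext e e' h
      have h1 := (hCovSrc e w hE hcov).2 hw
      have h2 : rk (eOf w) = rk w :=
        hRkConst (eOf w) w (hEntCyc _ (heOfE w hw).1) hw (heOfE w hw).2
      rw [he']
      omega
    have hcseq_rk : ∀ k e, cseq k = some e → rk e + k ≤ rk et := by
      intro k
      induction k with
      | zero =>
          intro e h
          rw [hcseq0, Option.some_inj] at h
          rw [← h]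
          omega
      | succ k ih =>
          intro e h
          rw [hcseqS] at h
          rcases hk : cseq k with _ | e'
          · rw [hk] at h; exact absurd h (by simp)
          · rw [hk, Option.bind_some] at h
            have h1 := hcnext_rk e' e (hcseq_ent k e' hk) h
            have h2 := ih e' hk
            omega
    have hcseq_somelt : ∀ k e, cseq k = some e → ∀ j, j ≤ k → ∃ e', cseq j = some e' := by
      intro k e hk j hj
      rcases h : cseq j with _ | e'
      · exfalso
        have hall : ∀ t, cseq (j + t) = none := by
          intro t
          induction t with
          | zero => simpa using h
          | succ t ih =>
              rw [show j + (t+1) = (j+t)+1 by omega, hcseqS, ih]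
              rfl
        have h2 := hall (k - j)
        rw [show j + (k - j) = k by omega, hk] at h2
        exact absurd h2 (by simp)
      · exact ⟨e', rfl⟩
    have hcseq_inj : ∀ k1 k2 e, cseq k1 = some e → cseq k2 = some e → k1 = k2 := by
      have haux : ∀ t k e e', cseq k = some e → cseq (k + t) = some e' → 0 < t →
          rk e' < rk e := by
        intro t
        induction t with
        | zero => intro k e e' _ _ h0; omega
        | succ t ih =>
            intro k e e' hk hk' _
            obtain ⟨e'', he''⟩ := hcseq_somelt (k + (t+1)) e' hk' (k+t) (by omega)
            have hstep : chainNext e'' = some e' := by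
              have hS := hcseqS (k+t)
              rw [he'', Option.bind_some] at hS
              rw [show k + (t+1) = (k+t)+1 by omega, hS] at hk'
              exact hk'
            have hlt := hcnext_rk e'' e' (hcseq_ent _ _ he'') hstep
            rcases Nat.eq_zero_or_pos t with rfl | ht
            · have he2 : e'' = e := by
                rw [show k + 0 = k by omega, hk] at he''
                exact Option.some_inj.mp he''.symm
              rw [he2] at hlt
              omega
            · have := ih k e e'' hk he'' ht
              omega
      intro k1 k2 e h1 h2
      by_contra hne
      rcases Nat.lt_or_ge k1 k2 with h | h
      · have := haux (k2 - k1) k1 e e h1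
          (by rw [show k1 + (k2-k1) = k2 by omega]; exact h2) (by omega)
        omega
      · have hlt : k2 < k1 := by omega
        have := haux (k1 - k2) k2 e e h2
          (by rw [show k2 + (k1-k2) = k1 by omega]; exact h1) (by omega)
        omega
    have hterm : ∃ q eq0, cseq q = some eq0 ∧ chainNext eq0 = none := by
      have hnone : ∃ k, cseq k = none := by
        rcases h : cseq (rk et + 1) with _ | e
        · exact ⟨rk et + 1, h⟩
        · have := hcseq_rk (rk et + 1) e h
          omega
      have hk0spec : cseq (Nat.find hnone) = none := Nat.find_spec hnone
      have hk0pos : 0 < Nat.find hnone := by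
        rcases Nat.eq_zero_or_pos (Nat.find hnone) with h0 | h0
        · rw [h0, hcseq0] at hk0spec
          exact absurd hk0spec (by simp)
        · exact h0
      obtain ⟨eq0, heq0⟩ : ∃ e, cseq (Nat.find hnone - 1) = some e := by
        rcases h : cseq (Nat.find hnone - 1) with _ | e
        · exact absurd h (Nat.find_min hnone (by omega))
        · exact ⟨e, rfl⟩
      refine ⟨Nat.find hnone - 1, eq0, heq0, ?_⟩
      have hS := hcseqS (Nat.find hnone - 1)
      rw [show Nat.find hnone - 1 + 1 = Nat.find hnone by omega, hk0spec, heq0,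
        Option.bind_some] at hS
      exact hS.symm
    obtain ⟨q, eq0, hq, hqnext⟩ := hterm
    have hCHet : CH et := ⟨0, hcseq0⟩
    have hCHeq : CH eq0 := ⟨q, hq⟩
    have hCHterm : ∀ e, CH e → chainNext e = none → e = eq0 := by
      rintro e ⟨k, hk⟩ hnext
      have hknone : cseq (k+1) = none := by
        rw [hcseqS, hk, Option.bind_some, hnext]
      have hqnone : cseq (q+1) = none := by
        rw [hcseqS, hq, Option.bind_some, hqnext]
      have hkq : k = q := by
        by_contra hne
        rcases Nat.lt_or_ge k q with h | h
        · obtain ⟨e', he'⟩ := hcseq_somelt q eq0 hq (k+1) (by omega)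
          rw [hknone] at he'
          exact absurd he' (by simp)
        · have hlt : q < k := by omega
          obtain ⟨e', he'⟩ := hcseq_somelt k e hk (q+1) (by omega)
          rw [hqnone] at he'
          exact absurd he' (by simp)
      rw [hkq] at hk
      exact Option.some_inj.mp (hk.symm.trans hq)
    have hCHsucc : ∀ e e', CH e → chainNext e = some e' → CH e' := by
      rintro e e' ⟨k, hk⟩ hnext
      exact ⟨k+1, by rw [hcseqS, hk, Option.bind_some, hnext]⟩
    have hCHpred : ∀ e, CH e → e ≠ et → ∃ e'', CH e'' ∧ chainNext e'' = some e := by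
      rintro e ⟨k, hk⟩ hne
      rcases k with _ | k
      · rw [hcseq0, Option.some_inj] at hk
        exact absurd hk.symm hne
      · obtain ⟨e'', he''⟩ := hcseq_somelt (k+1) e hk k (by omega)
        refine ⟨e'', ⟨k, he''⟩, ?_⟩
        have hS := hcseqS k
        rw [he'', Option.bind_some] at hS
        rw [hS] at hk
        exact hk
    have hCHpred_uniq : ∀ e1 e2 e, CH e1 → CH e2 → chainNext e1 = some e →
        chainNext e2 = some e → e1 = e2 := by
      rintro e1 e2 e ⟨k1, hk1⟩ ⟨k2, hk2⟩ h1 h2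
      have ha : cseq (k1+1) = some e := by rw [hcseqS, hk1, Option.bind_some, h1]
      have hb : cseq (k2+1) = some e := by rw [hcseqS, hk2, Option.bind_some, h2]
      have h12 := hcseq_inj (k1+1) (k2+1) e ha hb
      have hk12 : k1 = k2 := by omega
      rw [hk12] at hk1
      exact Option.some_inj.mp (hk1.symm.trans hk2)
    -- core step of the rank induction
    have hstep : ∀ e, isEnt e →
        (∀ e', isEnt e' → rk e < rk e' →
          ((CH e' → ∀ x, sameCyc π e' x → v x ≠ 0) ∧
           (¬ CH e' → ∀ x, sameCyc π e' x → v x = 0))) →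
        ((CH e → ∀ x, sameCyc π e x → v x ≠ 0) ∧
         (¬ CH e → ∀ x, sameCyc π e x → v x = 0)) := by
      intro e hE hlater
      by_cases hdr : ∃ e', isEnt e' ∧ CH e' ∧ ∃ w, cov e' = Sum.inl w ∧ sameCyc π e w
      · obtain ⟨e', hE', hCH', w, hcov', hw⟩ := hdr
        have hwc : cyclicV π w := (sameCyc_cyclic π hw).1
        have heOfw : eOf w = e := (heOfUniq w hwc e hE hw).symm
        have hnext' : chainNext e' = some e := by
          rw [hcnext_of e' w hcov' hwc, heOfw]
        have hCHe : CH e := hCHsucc e' e hCH' hnext'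
        have hrk' : rk e < rk e' := hdriver_rk e e' w hE hE' hw hcov'
        have hve' : v e' ≠ 0 :=
          ((hlater e' hE' hrk').1 hCH') e' (sameCyc_refl π (hEntCyc e' hE'))
        have hpure : ∀ x, sameCyc π e x → x ≠ w → drvC isEnt cov v x = 0 := by
          intro x hx hxw
          apply hdrv0
          intro e'' hE'' hcov''
          have hrk'' : rk e < rk e'' := hdriver_rk e e'' x hE hE'' hx hcov''
          by_cases hCH'' : CH e''
          · exfalso
            have hxc : cyclicV π x := (sameCyc_cyclic π hx).1
            have hnext'' : chainNext e'' = some e := by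
              rw [hcnext_of e'' x hcov'' hxc, (heOfUniq x hxc e hE hx).symm]
            have he2 : e'' = e' := hCHpred_uniq e'' e' e hCH'' hCH' hnext'' hnext'
            rw [he2, hcov'] at hcov''
            exact hxw (Sum.inl.inj hcov'').symm
          · exact (hlater e'' hE'' hrk'').2 hCH'' e'' (sameCyc_refl π (hEntCyc e'' hE''))
        have hdw : drvC isEnt cov v w = v e' := by
          apply hdrv1 w e' hE' hcov'
          intro e'' hE'' hcov'' hne
          have hrk'' := hdriver_rk e e'' w hE hE'' hw hcov''
          by_cases hCH'' : CH e''
          · exfalso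
            have hnext'' : chainNext e'' = some e := by
              rw [hcnext_of e'' w hcov'' hwc, heOfw]
            exact hne (hCHpred_uniq e'' e' e hCH'' hCH' hnext'' hnext')
          · exact (hlater e'' hE'' hrk'').2 hCH'' e'' (sameCyc_refl π (hEntCyc e'' hE''))
        have hall := cyc_driven π isEnt cov lam v hinj (hEntCyc e hE) hEq hw hpure hlam
          (by rw [hdw]; exact hve')
        exact ⟨fun _ => hall, fun hnCH => absurd hCHe hnCH⟩
      · have hpure : ∀ x, sameCyc π e x → drvC isEnt cov v x = 0 := by
          intro x hx
          apply hdrv0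
          intro e'' hE'' hcov''
          have hrk'' := hdriver_rk e e'' x hE hE'' hx hcov''
          by_cases hCH'' : CH e''
          · exact absurd ⟨e'', hE'', hCH'', x, hcov'', hx⟩ hdr
          · exact (hlater e'' hE'' hrk'').2 hCH'' e'' (sameCyc_refl π (hEntCyc e'' hE''))
        by_cases heet : e = et
        · subst heet
          exact ⟨fun _ => cyc_all_ne π isEnt cov lam v hinj (hEntCyc e hE) hEq hpure hlam hetv,
            fun hnCH => absurd hCHet hnCH⟩
        · have hnCH : ¬ CH e := by
            intro hCHe
            obtain ⟨e'', hCH'', hnext''⟩ := hCHpred e hCHe heet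
            obtain ⟨w, hcov'', hwcyc, heof⟩ := hcnext e'' e hnext''
            have hw : sameCyc π e w := by
              have h2 := (heOfE w hwcyc).2
              rw [← heof] at h2
              exact h2
            obtain ⟨k'', hk''⟩ := hCH''
            exact hdr ⟨e'', hcseq_ent k'' e'' hk'', ⟨k'', hk''⟩, w, hcov'', hw⟩
          have hres : ¬ (lam ^ perV π e = cycProd π isEnt e) := by
            intro hres
            exact heet (hResUnique e et hE hetE hres hetRes)
          have hve := cyc_ve_zero π isEnt cov lam v hinj (hEntCyc e hE) hEq hpure hres
          exact ⟨fun hCHe => absurd hCHe hnCH,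
            fun _ => cyc_all_zero π isEnt cov lam v hinj (hEntCyc e hE) hEq hpure hve⟩
    have hInv : ∀ d e, isEnt e → n ≤ rk e + d →
        ((CH e → ∀ x, sameCyc π e x → v x ≠ 0) ∧
         (¬ CH e → ∀ x, sameCyc π e x → v x = 0)) := by
      intro d
      induction d with
      | zero =>
          intro e hE hrk
          refine hstep e hE ?_
          intro e' hE' hgt
          exfalso
          have := hRkBound e' hE'
          omega
      | succ d ih =>
          intro e hE hrk
          refine hstep e hE ?_
          intro e' hE' hgt
          exact ih e' hE' (by omega)
    have hInvTop : ∀ e, isEnt e →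
        ((CH e → ∀ x, sameCyc π e x → v x ≠ 0) ∧
         (¬ CH e → ∀ x, sameCyc π e x → v x = 0)) :=
      fun e hE => hInv n e hE (by omega)
    have hnonCH_zero : ∀ x, isEnt x → ¬ CH x → v x = 0 :=
      fun x hx hnCH => ((hInvTop x hx).2 hnCH) x (sameCyc_refl π (hEntCyc x hx))
    have hvq : v eq0 ≠ 0 :=
      ((hInvTop eq0 (hcseq_ent q eq0 hq)).1 hCHeq) eq0
        (sameCyc_refl π (hEntCyc eq0 (hcseq_ent q eq0 hq)))
    have hchain_cov_inl : ∀ e, CH e → e ≠ eq0 → ∃ w, cov e = Sum.inl w ∧ cyclicV π w := by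
      intro e hCHe hne
      rcases hnext : chainNext e with _ | e'
      · exact absurd (hCHterm e hCHe hnext) hne
      · obtain ⟨w, hcov, hw, _⟩ := hcnext e e' hnext
        exact ⟨w, hcov, hw⟩
    rcases hcovq : cov eq0 with s | jq
    · -- terminal edge cover with noncyclic source
      have hsnc : ¬ cyclicV π s := by
        intro hsc
        have h2 := hcnext_of eq0 s hcovq hsc
        rw [hqnext] at h2
        exact absurd h2 (by simp)
      have hdrvnc : ∀ x, ¬ cyclicV π x → x ≠ s → drvC isEnt cov v x = 0 := by
        intro x hxnc hxs
        apply hdrv0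
        intro e'' hE'' hcov''
        by_cases hCH'' : CH e''
        · exfalso
          by_cases he''q : e'' = eq0
          · rw [he''q, hcovq] at hcov''
            exact hxs (Sum.inl.inj hcov'').symm
          · obtain ⟨w, hcovw, hwc⟩ := hchain_cov_inl e'' hCH'' he''q
            rw [hcovw] at hcov''
            exact hxnc ((Sum.inl.inj hcov'') ▸ hwc)
        · exact hnonCH_zero e'' hE'' hCH''
      have hdrvs : drvC isEnt cov v s = v eq0 := by
        apply hdrv1 s eq0 (hcseq_ent q eq0 hq) hcovq
        intro e'' hE'' hcov'' hne
        by_cases hCH'' : CH e''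
        · exfalso
          obtain ⟨w, hcovw, hwc⟩ := hchain_cov_inl e'' hCH'' hne
          rw [hcovw] at hcov''
          exact hsnc ((Sum.inl.inj hcov'') ▸ hwc)
        · exact hnonCH_zero e'' hE'' hCH''
      obtain ⟨K, r, jr, hKr, hpr, hrnc⟩ := exists_root π hinj hsnc
      have hvr : v r ≠ 0 := by
        refine path_nonzero π isEnt cov lam v hinj hlam hEq s
          (by rw [hdrvs]; exact hvq) K r hrnc hKr ?_
        intro k x hk hxs
        exact hdrvnc x (citer_noncyclic π hinj k r x hrnc hk) hxs
      have horth := hOrth jr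
      have hsum1 : (∑ i ∈ Finset.univ.filter (fun i => π i = Sum.inr jr), v i) = v r := by
        refine Finset.sum_eq_single_of_mem r (by simp [hpr]) ?_
        intro x hx hne
        rw [Finset.mem_filter] at hx
        exact absurd (hinj (hx.2.trans hpr.symm)) hne
      have hsum2 : (∑ i ∈ Finset.univ.filter
          (fun i => isEnt i ∧ cov i = Sum.inr jr), v i) = 0 := by
        refine Finset.sum_eq_zero ?_
        intro x hx
        rw [Finset.mem_filter] at hx
        refine hnonCH_zero x hx.2.1 ?_
        intro hCHx
        by_cases hxq : x = eq0
        · rw [hxq, hcovq] at hx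
          exact absurd hx.2.2 (by simp)
        · obtain ⟨w, hcovw, _⟩ := hchain_cov_inl x hCHx hxq
          rw [hcovw] at hx
          exact absurd hx.2.2 (by simp)
      rw [hsum1, hsum2, add_zero] at horth
      exact hvr horth
    · -- terminal input cover
      have hdrvnc : ∀ x, ¬ cyclicV π x → drvC isEnt cov v x = 0 := by
        intro x hxnc
        apply hdrv0
        intro e'' hE'' hcov''
        by_cases hCH'' : CH e''
        · exfalso
          by_cases he''q : e'' = eq0
          · rw [he''q, hcovq] at hcov''
            exact absurd hcov'' (by simp)
          · obtain ⟨w, hcovw, hwc⟩ := hchain_cov_inl e'' hCH'' he''q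
            rw [hcovw] at hcov''
            exact hxnc ((Sum.inl.inj hcov'') ▸ hwc)
        · exact hnonCH_zero e'' hE'' hCH''
      have hncz : ∀ x, ¬ cyclicV π x → v x = 0 := by
        intro x hxnc
        refine path_zero π isEnt cov lam v hinj hlam hEq (depthC π x) x le_rfl hxnc ?_
        intro k y hk
        exact hdrvnc y (citer_noncyclic π hinj k x y hxnc hk)
      have horth := hOrth jq
      have hsum1 : (∑ i ∈ Finset.univ.filter (fun i => π i = Sum.inr jq), v i) = 0 := by
        refine Finset.sum_eq_zero ?_
        intro x hx
        rw [Finset.mem_filter] at hx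
        refine hncz x ?_
        intro hxc
        obtain ⟨j', hj'⟩ := cyclic_pi_inl π hxc
        rw [hx.2] at hj'
        exact absurd hj' (by simp)
      have hsum2 : (∑ i ∈ Finset.univ.filter
          (fun i => isEnt i ∧ cov i = Sum.inr jq), v i) = v eq0 := by
        refine Finset.sum_eq_single_of_mem eq0
          (by simp [hcseq_ent q eq0 hq, hcovq]) ?_
        intro x hx hne
        rw [Finset.mem_filter] at hx
        refine hnonCH_zero x hx.2.1 ?_
        intro hCHx
        obtain ⟨w, hcovw, _⟩ := hchain_cov_inl x hCHx hne
        rw [hcovw] at hx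
        exact absurd hx.2.2 (by simp)
      rw [hsum1, hsum2, zero_add] at horth
      exact hvq horth
  · -- no live resonance : everything vanishes
    push_neg at hPOS
    have hcyc0' : ∀ d e, isEnt e → n ≤ rk e + d → ∀ x, sameCyc π e x → v x = 0 := by
      intro d
      induction d with
      | zero =>
          intro e hE hrk x hx
          have hpure : ∀ y, sameCyc π e y → drvC isEnt cov v y = 0 := by
            intro y hy
            apply hdrv0
            intro e'' hE'' hcov''
            exfalso
            have h1 := hdriver_rk e e'' y hE hE'' hy hcov''
            have h2 := hRkBound e'' hE''
            omega
          by_cases hres : lam ^ perV π e = cycProd π isEnt e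
          · exact cyc_all_zero π isEnt cov lam v hinj (hEntCyc e hE) hEq hpure
              (hPOS e hE hres) x hx
          · exact cyc_all_zero π isEnt cov lam v hinj (hEntCyc e hE) hEq hpure
              (cyc_ve_zero π isEnt cov lam v hinj (hEntCyc e hE) hEq hpure hres) x hx
      | succ d ih =>
          intro e hE hrk x hx
          have hpure : ∀ y, sameCyc π e y → drvC isEnt cov v y = 0 := by
            intro y hy
            apply hdrv0
            intro e'' hE'' hcov''
            have h1 := hdriver_rk e e'' y hE hE'' hy hcov''
            exact ih e'' hE'' (by omega) e'' (sameCyc_refl π (hEntCyc e'' hE''))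
          by_cases hres : lam ^ perV π e = cycProd π isEnt e
          · exact cyc_all_zero π isEnt cov lam v hinj (hEntCyc e hE) hEq hpure
              (hPOS e hE hres) x hx
          · exact cyc_all_zero π isEnt cov lam v hinj (hEntCyc e hE) hEq hpure
              (cyc_ve_zero π isEnt cov lam v hinj (hEntCyc e hE) hEq hpure hres) x hx
    have hcyc0 : ∀ x, cyclicV π x → v x = 0 := by
      intro x hx
      obtain ⟨e, hE, hsame⟩ := hCover x hx
      exact hcyc0' n e hE (by omega) x hsame
    have hdrvall : ∀ x, drvC isEnt cov v x = 0 := by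
      intro x
      apply hdrv0
      intro e'' hE'' _
      exact hcyc0 e'' (hEntCyc e'' hE'')
    funext i
    show v i = 0
    by_cases hic : cyclicV π i
    · exact hcyc0 i hic
    · by_cases hlam : lam = 0
      · rcases hpi : π i with p | jm
        · have heqp := hEq p
          rw [ctermC_child π isEnt v hinj hpi, hdrvall p, add_zero, hlam, zero_mul] at heqp
          exact (mul_eq_zero.mp heqp).resolve_left (wtC_ne π isEnt i)
        · have horth := hOrth jm
          have hsum2 : (∑ x ∈ Finset.univ.filter
              (fun x => isEnt x ∧ cov x = Sum.inr jm), v x) = 0 :=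
            Finset.sum_eq_zero (fun x hx =>
              hcyc0 x (hEntCyc x (Finset.mem_filter.mp hx).2.1))
          have hsum1 : (∑ x ∈ Finset.univ.filter (fun x => π x = Sum.inr jm), v x) = v i :=
            Finset.sum_eq_single_of_mem i (by simp [hpi]) (fun x hx hne =>
              absurd (hinj ((Finset.mem_filter.mp hx).2.trans hpi.symm)) hne)
          rw [hsum1, hsum2, add_zero] at horth
          exact horth
      · exact path_zero π isEnt cov lam v hinj hlam hEq (depthC π i) i le_rfl hic
          (fun k y _ => hdrvall y)

end Cascade

section SuffMain

open scoped Classical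

variable {n m : ℕ}

theorem suff_main (A : Matrix (Fin n) (Fin n) Bool) (C : Matrix (Fin n) (Fin m) Bool)
    (π : Fin n → Fin n ⊕ Fin m) (hinj : Function.Injective π)
    (hπA : ∀ i j, π i = Sum.inl j → A i j = true)
    (hπC : ∀ i j, π i = Sum.inr j → C i j = true)
    (hacc : ∀ v, ∃ b, (∃ j, C b j = true) ∧ reach A b v) :
    StructCont A C := by
  classical
  obtain ⟨isEnt, cov, rk, h1, h2, h3, h4, h5, h6⟩ := plan_exists π hacc
    (Finset.univ.filter (fun i => cyclicV π i)).card
    (Finset.univ.filter (fun i => cyclicV π i)) le_rfl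
    (fun i hi => (Finset.mem_filter.mp hi).2)
    (fun i hi j hij => Finset.mem_filter.mpr ⟨Finset.mem_univ _, (sameCyc_cyclic π hij).1⟩)
  have hEntCyc : ∀ e, isEnt e → cyclicV π e := fun e he => (Finset.mem_filter.mp (h1 e he)).2
  have hCover : ∀ i, cyclicV π i → ∃ e, isEnt e ∧ sameCyc π e i := fun i hi =>
    h2 i (Finset.mem_filter.mpr ⟨Finset.mem_univ _, hi⟩)
  have hRkConst : ∀ i j, cyclicV π i → cyclicV π j → sameCyc π i j → rk i = rk j :=
    fun i j hi hj hij => h5 i j (Finset.mem_filter.mpr ⟨Finset.mem_univ _, hi⟩)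
      (Finset.mem_filter.mpr ⟨Finset.mem_univ _, hj⟩) hij
  have hRkBound : ∀ e, isEnt e → rk e ≤ n := fun e he => (h4 e (h1 e he)).2
  have hCovSrcA : ∀ e w, isEnt e → cov e = Sum.inl w →
      A e w = true ∧ ¬ sameCyc π e w ∧ (cyclicV π w → rk w < rk e) := by
    intro e w he hcov
    rcases h6 e he with ⟨w', hw', hA, hns, hrk⟩ | ⟨j, hj, _⟩
    · have hww : w' = w := Sum.inl.inj (hw'.symm.trans hcov)
      subst hww
      exact ⟨hA, hns, fun hc => hrk (Finset.mem_filter.mpr ⟨Finset.mem_univ _, hc⟩)⟩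
    · rw [hj] at hcov
      exact absurd hcov (by simp)
  have hCovC : ∀ e j, isEnt e → cov e = Sum.inr j → C e j = true := by
    intro e j he hcov
    rcases h6 e he with ⟨w', hw', _, _, _⟩ | ⟨j', hj', hC⟩
    · rw [hw'] at hcov
      exact absurd hcov (by simp)
    · have hjj : j' = j := Sum.inr.inj (hj'.symm.trans hcov)
      rwa [← hjj]
  refine ⟨tAc π isEnt cov, tBc π isEnt cov, ⟨?_, ?_⟩, ?_⟩
  · intro i j hA
    show (if π i = Sum.inl j then wtV π isEnt i else 0) +
      (if isEnt i ∧ cov i = Sum.inl j then (1:ℝ) else 0) = 0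
    rw [if_neg, if_neg, add_zero]
    · rintro ⟨hE, hcov⟩
      have := (hCovSrcA i j hE hcov).1
      rw [hA] at this
      exact absurd this (by simp)
    · intro hpi
      have := hπA i j hpi
      rw [hA] at this
      exact absurd this (by simp)
  · intro i j hB
    show (if π i = Sum.inr j then (1:ℝ) else 0) +
      (if isEnt i ∧ cov i = Sum.inr j then (1:ℝ) else 0) = 0
    rw [if_neg, if_neg, add_zero]
    · rintro ⟨hE, hcov⟩
      have := hCovC i j hE hcov
      rw [hB] at this
      exact absurd this (by simp)
    · intro hpi
      have := hπC i j hpi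
      rw [hB] at this
      exact absurd this (by simp)
  · apply controllable_of_no_common_eigvec
    intro μ v hvA hvB
    have hEq : ∀ j, ctermC π isEnt v j + drvC isEnt cov v j = μ * v j := by
      intro j
      have h := congrFun hvA j
      simp only [Matrix.mulVec, dotProduct, Matrix.transpose_apply, Matrix.map_apply,
        Pi.smul_apply, smul_eq_mul] at h
      rw [← h]
      have hterm : ∀ i, ((tAc π isEnt cov i j : ℝ) : ℂ) * v i =
          (if π i = Sum.inl j then ((wtV π isEnt i : ℝ) : ℂ) * v i else 0) +
          (if isEnt i ∧ cov i = Sum.inl j then v i else 0) := by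
        intro i
        show (((if π i = Sum.inl j then wtV π isEnt i else 0) +
          (if isEnt i ∧ cov i = Sum.inl j then (1:ℝ) else 0) : ℝ) : ℂ) * v i = _
        split_ifs with hc1 hc2
        · push_cast; ring
        · push_cast; ring
        · push_cast; ring
        · push_cast; ring
      unfold ctermC drvC
      rw [Finset.sum_filter, Finset.sum_filter, ← Finset.sum_add_distrib]
      exact (Finset.sum_congr rfl (fun i _ => hterm i)).symm
    have hOrth : ∀ jm : Fin m,
        (∑ i ∈ Finset.univ.filter (fun i => π i = Sum.inr jm), v i) +
        (∑ i ∈ Finset.univ.filter (fun i => isEnt i ∧ cov i = Sum.inr jm), v i) = 0 := by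
      intro jm
      have h := congrFun hvB jm
      simp only [Matrix.mulVec, dotProduct, Matrix.transpose_apply, Matrix.map_apply,
        Pi.zero_apply] at h
      rw [← h]
      have hterm : ∀ i, ((tBc π isEnt cov i jm : ℝ) : ℂ) * v i =
          (if π i = Sum.inr jm then v i else 0) +
          (if isEnt i ∧ cov i = Sum.inr jm then v i else 0) := by
        intro i
        show (((if π i = Sum.inr jm then (1:ℝ) else 0) +
          (if isEnt i ∧ cov i = Sum.inr jm then (1:ℝ) else 0) : ℝ) : ℂ) * v i = _
        split_ifs with hc1 hc2
        · push_cast; ring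
        · push_cast; ring
        · push_cast; ring
        · push_cast; ring
      rw [Finset.sum_filter, Finset.sum_filter, ← Finset.sum_add_distrib]
      exact (Finset.sum_congr rfl (fun i _ => hterm i)).symm
    exact cascade π hinj isEnt cov rk hEntCyc hCover h3 hRkConst hRkBound
      (fun e w he hc => ⟨(hCovSrcA e w he hc).2.1, (hCovSrcA e w he hc).2.2⟩) μ v hEq hOrth

end SuffMain

section Assembly

open scoped Classical

variable {n m r : ℕ}

lemma sccX_inj {A : Matrix (Fin n) (Fin n) Bool} {X : Fin r → Finset (Fin n)}
    (hX : SourceSCCEnum A X) {i i' : Fin r} {a : Fin n}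
    (ha : a ∈ X i) (ha' : a ∈ X i') : i = i' := by
  have hS : IsSourceSCC A (X i) := (hX.2 (X i)).mpr ⟨i, rfl⟩
  have hS' : IsSourceSCC A (X i') := (hX.2 (X i')).mpr ⟨i', rfl⟩
  exact hX.1 (scc_eq_of_mem hS.1 hS'.1 ha ha')

lemma wmin_bddBelow (B : Matrix (Fin n) (Fin m) Bool) (X : Fin r → Finset (Fin n))
    (w : Fin n → Fin m → ℝ) (hw : ∀ i j, B i j = true → 0 ≤ w i j) (i : Fin r) :
    BddBelow {c : ℝ | ∃ a j, a ∈ X i ∧ B a j = true ∧ w a j = c} := by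
  refine ⟨0, ?_⟩
  rintro c ⟨a, j, _, hBaj, rfl⟩
  exact hw a j hBaj

/-- from a structurally controllable subpattern to a feasible ILP point -/
lemma ilp_of_Bp (A : Matrix (Fin n) (Fin n) Bool) (B B' : Matrix (Fin n) (Fin m) Bool)
    (X : Fin r → Finset (Fin n)) (w : Fin n → Fin m → ℝ)
    (hX : SourceSCCEnum A X) (hw : ∀ i j, B i j = true → 0 ≤ w i j)
    (hK : InK B' B) (hsc' : StructCont A B') :
    ∃ yA yB z, ILPFeas A B X yA yB z ∧ obj2 B X w yB z ≤ normw B' w := by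
  classical
  obtain ⟨tA, tB, hreal, hctrl⟩ := hsc'
  obtain ⟨π, hinj, hπA, hπB⟩ := exists_matching_of_controllable A B' tA tB hreal hctrl
  have hsrc : ∀ i : Fin r, ∃ a ∈ X i, ∃ j, B' a j = true := fun i =>
    source_edge_of_structCont ⟨tA, tB, hreal, hctrl⟩ (X i) ((hX.2 (X i)).mpr ⟨i, rfl⟩)
  choose aF haF jF hBF using hsrc
  set yA : Fin n → Fin n → ℤ := fun i j => if π i = Sum.inl j then 1 else 0 with hyA
  set yB : Fin n → Fin m → ℤ := fun i j => if π i = Sum.inr j then 1 else 0 with hyB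
  set z : Fin r → ℤ := fun i => if ∃ a ∈ X i, ∃ j, π a = Sum.inr j then 1 else 0 with hz
  have hsumA1 : ∀ v j0, π v = Sum.inl j0 → (∑ j, yA v j) = 1 := by
    intro v j0 h
    rw [Finset.sum_eq_single j0 (fun b _ hb => if_neg (fun hc => hb (Sum.inl.inj
      (hc.symm.trans h)))) (fun hb => absurd (Finset.mem_univ j0) hb)]
    exact if_pos h
  have hsumA0 : ∀ v, (∀ j0, π v ≠ Sum.inl j0) → (∑ j, yA v j) = 0 :=
    fun v h => Finset.sum_eq_zero (fun j _ => if_neg (h j))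
  have hsumB1 : ∀ v j0, π v = Sum.inr j0 → (∑ j, yB v j) = 1 := by
    intro v j0 h
    rw [Finset.sum_eq_single j0 (fun b _ hb => if_neg (fun hc => hb (Sum.inr.inj
      (hc.symm.trans h)))) (fun hb => absurd (Finset.mem_univ j0) hb)]
    exact if_pos h
  have hsumB0 : ∀ v, (∀ j0, π v ≠ Sum.inr j0) → (∑ j, yB v j) = 0 :=
    fun v h => Finset.sum_eq_zero (fun j _ => if_neg (h j))
  have hfeas : ILPFeas A B X yA yB z := by
    refine ⟨?_, ?_, ?_, ?_, ?_, ?_, ?_, ?_, ?_⟩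
    · intro i j hAij
      refine if_neg (fun hc => ?_)
      have := hπA i j hc
      rw [hAij] at this
      exact absurd this (by simp)
    · intro i j hBij
      refine if_neg (fun hc => ?_)
      have := hK i j (hπB i j hc)
      rw [hBij] at this
      exact absurd this (by simp)
    · intro i j
      by_cases h : π i = Sum.inl j
      · right; exact if_pos h
      · left; exact if_neg h
    · intro i j
      by_cases h : π i = Sum.inr j
      · right; exact if_pos h
      · left; exact if_neg h
    · intro i
      by_cases h : ∃ a ∈ X i, ∃ j, π a = Sum.inr j
      · right; exact if_pos h
      · left; exact if_neg h
    · intro v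
      rcases hv : π v with j0 | j0
      · rw [hsumA1 v j0 hv, hsumB0 v (fun j0' hc => by rw [hv] at hc; exact absurd hc (by simp))]
        omega
      · rw [hsumA0 v (fun j0' hc => by rw [hv] at hc; exact absurd hc (by simp)),
          hsumB1 v j0 hv]
        omega
    · intro j
      by_cases h : ∃ i0, π i0 = Sum.inl j
      · obtain ⟨i0, hi0⟩ := h
        rw [Finset.sum_eq_single i0 (fun b _ hb => if_neg (fun hc => hb (hinj
          (hc.trans hi0.symm)))) (fun hb => absurd (Finset.mem_univ i0) hb), if_pos hi0]
      · push_neg at h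
        rw [Finset.sum_eq_zero (fun i _ => if_neg (h i))]
        omega
    · intro j
      by_cases h : ∃ i0, π i0 = Sum.inr j
      · obtain ⟨i0, hi0⟩ := h
        rw [Finset.sum_eq_single i0 (fun b _ hb => if_neg (fun hc => hb (hinj
          (hc.trans hi0.symm)))) (fun hb => absurd (Finset.mem_univ i0) hb), if_pos hi0]
      · push_neg at h
        rw [Finset.sum_eq_zero (fun i _ => if_neg (h i))]
        omega
    · intro i
      have hnonneg : ∀ a ∈ X i, (0:ℤ) ≤ ∑ j, yB a j :=
        fun a _ => Finset.sum_nonneg (fun j _ => by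
          rw [hyB]; dsimp only; split <;> omega)
      rw [hz]
      dsimp only
      split
      · rename_i hex
        obtain ⟨a, haX, j0, hj0⟩ := hex
        calc (1:ℤ) = ∑ j, yB a j := (hsumB1 a j0 hj0).symm
          _ ≤ ∑ a' ∈ X i, ∑ j, yB a' j := Finset.single_le_sum hnonneg haX
      · exact Finset.sum_nonneg hnonneg
  refine ⟨yA, yB, z, hfeas, ?_⟩
  -- the objective bound
  set Mf : Finset (Fin n × Fin m) := Finset.univ.filter (fun p => π p.1 = Sum.inr p.2)
    with hMf
  set Z0 : Finset (Fin r) := Finset.univ.filter (fun i => z i = 0) with hZ0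
  have hterm1 : (∑ i, ∑ j, w i j * (yB i j : ℝ)) = ∑ p ∈ Mf, w p.1 p.2 := by
    rw [hMf, Finset.sum_filter, ← Finset.sum_product']
    refine Finset.sum_congr rfl ?_
    rintro ⟨a, j⟩ _
    rw [hyB]
    dsimp only
    split <;> simp
  have hwmin_le : ∀ i : Fin r, wmin B X w i ≤ w (aF i) (jF i) := by
    intro i
    exact csInf_le (wmin_bddBelow B X w hw i)
      ⟨aF i, jF i, haF i, hK _ _ (hBF i), rfl⟩
  have hzval : ∀ i : Fin r, z i = 0 ∨ z i = 1 := hfeas.2.2.2.2.1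
  have hterm2 : (∑ i, (1 - (z i : ℝ)) * wmin B X w i) ≤ ∑ i ∈ Z0, w (aF i) (jF i) := by
    rw [show (∑ i, (1 - (z i : ℝ)) * wmin B X w i) = ∑ i ∈ Z0, wmin B X w i by
      rw [hZ0, Finset.sum_filter]
      refine Finset.sum_congr rfl ?_
      intro i _
      rcases hzval i with h | h <;> rw [h] <;> simp]
    exact Finset.sum_le_sum (fun i _ => hwmin_le i)
  have hobj : obj2 B X w yB z ≤ ∑ p ∈ Mf, w p.1 p.2 + ∑ i ∈ Z0, w (aF i) (jF i) := by
    unfold obj2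
    rw [hterm1]
    exact add_le_add (le_refl _) hterm2
  -- the right-hand side is a sum over distinct B'-positions
  have haFinj : ∀ i i' : Fin r, aF i = aF i' → i = i' := by
    intro i i' h
    exact sccX_inj hX (haF i) (h ▸ haF i')
  set img : Finset (Fin n × Fin m) := Z0.image (fun i => (aF i, jF i)) with himg
  have himgsum : ∑ p ∈ img, w p.1 p.2 = ∑ i ∈ Z0, w (aF i) (jF i) := by
    rw [himg, Finset.sum_image]
    intro i _ i' _ h
    exact haFinj i i' (congrArg Prod.fst h)
  have hdisj : Disjoint Mf img := by
    rw [Finset.disjoint_right]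
    intro p hp hpMf
    rw [himg, Finset.mem_image] at hp
    obtain ⟨i, hiZ0, hpi⟩ := hp
    rw [hMf, Finset.mem_filter] at hpMf
    rw [hZ0, Finset.mem_filter, hz] at hiZ0
    have : π (aF i) = Sum.inr (jF i) := by
      rw [← hpi] at hpMf
      exact hpMf.2
    have hex : ∃ a ∈ X i, ∃ j, π a = Sum.inr j := ⟨aF i, haF i, jF i, this⟩
    have := hiZ0.2
    dsimp only at this
    rw [if_pos hex] at this
    exact absurd this (by simp)
  have hsubset : Mf ∪ img ⊆ Finset.univ.filter
      (fun p : Fin n × Fin m => B' p.1 p.2 = true) := by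
    intro p hp
    rw [Finset.mem_union] at hp
    rw [Finset.mem_filter]
    refine ⟨Finset.mem_univ _, ?_⟩
    rcases hp with hp | hp
    · rw [hMf, Finset.mem_filter] at hp
      exact hπB p.1 p.2 hp.2
    · rw [himg, Finset.mem_image] at hp
      obtain ⟨i, _, hpi⟩ := hp
      rw [← hpi]
      exact hBF i
  calc obj2 B X w yB z ≤ ∑ p ∈ Mf, w p.1 p.2 + ∑ i ∈ Z0, w (aF i) (jF i) := hobj
    _ = ∑ p ∈ Mf ∪ img, w p.1 p.2 := by rw [Finset.sum_union hdisj, himgsum]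
    _ ≤ normw B' w := by
        unfold normw
        refine Finset.sum_le_sum_of_subset_of_nonneg hsubset ?_
        intro p hp _
        rw [Finset.mem_filter] at hp
        exact hw p.1 p.2 (hK p.1 p.2 hp.2)


/-- from a feasible ILP point to a structurally controllable subpattern -/
lemma Bp_of_ilp (A : Matrix (Fin n) (Fin n) Bool) (B : Matrix (Fin n) (Fin m) Bool)
    (X : Fin r → Finset (Fin n)) (w : Fin n → Fin m → ℝ)
    (hX : SourceSCCEnum A X) (hw : ∀ i j, B i j = true → 0 ≤ w i j)
    (hsc : StructCont A B) (yA : Fin n → Fin n → ℤ) (yB : Fin n → Fin m → ℤ)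
    (z : Fin r → ℤ) (hfeas : ILPFeas A B X yA yB z) :
    ∃ B', InK B' B ∧ StructCont A B' ∧ normw B' w ≤ obj2 B X w yB z := by
  classical
  obtain ⟨hA0, hB0, h01A, h01B, h01z, hC1, hC2A, hC2B, hC3⟩ := hfeas
  have hyAnn : ∀ i j, (0:ℤ) ≤ yA i j := fun i j => by rcases h01A i j with h | h <;> omega
  have hyBnn : ∀ i j, (0:ℤ) ≤ yB i j := fun i j => by rcases h01B i j with h | h <;> omega
  have hsumAnn : ∀ v, (0:ℤ) ≤ ∑ j, yA v j :=
    fun v => Finset.sum_nonneg (fun j _ => hyAnn v j)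
  have hsumBnn : ∀ v, (0:ℤ) ≤ ∑ j, yB v j :=
    fun v => Finset.sum_nonneg (fun j _ => hyBnn v j)
  have hsumAle : ∀ v, (∑ j, yA v j) ≤ 1 := by
    intro v
    have h1 := hC1 v
    have h2 := hsumBnn v
    omega
  have hsumBle : ∀ v, (∑ j, yB v j) ≤ 1 := by
    intro v
    have h1 := hC1 v
    have h2 := hsumAnn v
    omega
  have hrow_uniqueA : ∀ v j j', yA v j = 1 → yA v j' = 1 → j = j' := by
    intro v j j' h h'
    by_contra hne
    have hj' : yA v j' ≤ ∑ jj ∈ Finset.univ.erase j, yA v jj :=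
      Finset.single_le_sum (fun x _ => hyAnn v x)
        (Finset.mem_erase.mpr ⟨Ne.symm hne, Finset.mem_univ _⟩)
    have hsplit := Finset.add_sum_erase Finset.univ (yA v) (Finset.mem_univ j)
    have := hsumAle v
    omega
  have hrow_uniqueB : ∀ v j j', yB v j = 1 → yB v j' = 1 → j = j' := by
    intro v j j' h h'
    by_contra hne
    have hj' : yB v j' ≤ ∑ jj ∈ Finset.univ.erase j, yB v jj :=
      Finset.single_le_sum (fun x _ => hyBnn v x)
        (Finset.mem_erase.mpr ⟨Ne.symm hne, Finset.mem_univ _⟩)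
    have hsplit := Finset.add_sum_erase Finset.univ (yB v) (Finset.mem_univ j)
    have := hsumBle v
    omega
  have hrow_mix : ∀ v j j', yA v j = 1 → yB v j' = 1 → False := by
    intro v j j' h h'
    have h1 : (1:ℤ) ≤ ∑ jj, yA v jj := by
      have := Finset.single_le_sum (fun x _ => hyAnn v x) (Finset.mem_univ j)
      omega
    have h2 : (1:ℤ) ≤ ∑ jj, yB v jj := by
      have := Finset.single_le_sum (fun x _ => hyBnn v x) (Finset.mem_univ j')
      omega
    have := hC1 v
    omega
  have hchoice : ∀ v, ∃ x : Fin n ⊕ Fin m,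
      (∀ j, x = Sum.inl j → yA v j = 1) ∧ (∀ j, x = Sum.inr j → yB v j = 1) := by
    intro v
    by_cases h : ∃ j, yA v j = 1
    · obtain ⟨j, hj⟩ := h
      exact ⟨Sum.inl j, fun j' hj' => (Sum.inl.inj hj') ▸ hj, fun j' hj' => absurd hj' (by simp)⟩
    · push_neg at h
      have hzeroA : ∑ j, yA v j = 0 := Finset.sum_eq_zero (fun j _ => by
        rcases h01A v j with h0 | h1
        · exact h0
        · exact absurd h1 (h j))
      have hsB : ∑ j, yB v j = 1 := by
        have := hC1 v
        omega
      obtain ⟨j, _, hj⟩ := Finset.exists_ne_zero_of_sum_ne_zero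
        (by rw [hsB]; exact one_ne_zero)
      have hj1 : yB v j = 1 := by
        rcases h01B v j with h0 | h1
        · exact absurd h0 hj
        · exact h1
      exact ⟨Sum.inr j, fun j' hj' => absurd hj' (by simp),
        fun j' hj' => (Sum.inr.inj hj') ▸ hj1⟩
  choose π hπ1 hπ2 using hchoice
  have hyAπ : ∀ v j, yA v j = 1 → π v = Sum.inl j := by
    intro v j h
    rcases hv : π v with j' | j'
    · rw [hrow_uniqueA v j j' h (hπ1 v j' hv)]
    · exact absurd (hrow_mix v j j' h (hπ2 v j' hv)) (by simp)
  have hyBπ : ∀ v j, yB v j = 1 → π v = Sum.inr j := by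
    intro v j h
    rcases hv : π v with j' | j'
    · exact absurd (hrow_mix v j' j (hπ1 v j' hv) h) (by simp)
    · rw [hrow_uniqueB v j j' h (hπ2 v j' hv)]
  have hinj : Function.Injective π := by
    intro u v huv
    by_contra hne
    rcases hu : π u with j | j
    · have h1 : yA u j = 1 := hπ1 u j hu
      have h2 : yA v j = 1 := hπ1 v j (by rw [← huv]; exact hu)
      have hv' : yA v j ≤ ∑ i ∈ Finset.univ.erase u, (fun i => yA i j) i :=
        Finset.single_le_sum (fun x _ => hyAnn x j)
          (Finset.mem_erase.mpr ⟨Ne.symm hne, Finset.mem_univ _⟩)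
      have hsplit := Finset.add_sum_erase Finset.univ (fun i => yA i j) (Finset.mem_univ u)
      have := hC2A j
      simp only at hsplit hv'
      omega
    · have h1 : yB u j = 1 := hπ2 u j hu
      have h2 : yB v j = 1 := hπ2 v j (by rw [← huv]; exact hu)
      have hv' : yB v j ≤ ∑ i ∈ Finset.univ.erase u, (fun i => yB i j) i :=
        Finset.single_le_sum (fun x _ => hyBnn x j)
          (Finset.mem_erase.mpr ⟨Ne.symm hne, Finset.mem_univ _⟩)
      have hsplit := Finset.add_sum_erase Finset.univ (fun i => yB i j) (Finset.mem_univ u)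
      have := hC2B j
      simp only at hsplit hv'
      omega
  have hattain : ∀ i : Fin r, ∃ a j, a ∈ X i ∧ B a j = true ∧ w a j = wmin B X w i := by
    intro i
    obtain ⟨a0, ha0, j0, hBa0⟩ := source_edge_of_structCont hsc (X i)
      ((hX.2 (X i)).mpr ⟨i, rfl⟩)
    have hSine : ((Finset.univ.filter (fun p : Fin n × Fin m =>
        p.1 ∈ X i ∧ B p.1 p.2 = true)).image (fun p => w p.1 p.2)).Nonempty :=
      ⟨w a0 j0, Finset.mem_image.mpr ⟨(a0, j0),
        Finset.mem_filter.mpr ⟨Finset.mem_univ _, ha0, hBa0⟩, rfl⟩⟩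
    have hseteq : {c : ℝ | ∃ a j, a ∈ X i ∧ B a j = true ∧ w a j = c} =
        ↑((Finset.univ.filter (fun p : Fin n × Fin m =>
          p.1 ∈ X i ∧ B p.1 p.2 = true)).image (fun p => w p.1 p.2)) := by
      ext c
      simp only [Set.mem_setOf_eq, Finset.coe_image, Set.mem_image, Finset.mem_coe,
        Finset.mem_filter, Finset.mem_univ, true_and]
      constructor
      · rintro ⟨a, j, h1, h2, h3⟩
        exact ⟨(a, j), ⟨h1, h2⟩, h3⟩
      · rintro ⟨⟨a, j⟩, ⟨h1, h2⟩, h3⟩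
        exact ⟨a, j, h1, h2, h3⟩
    have hmem : wmin B X w i ∈ (Finset.univ.filter (fun p : Fin n × Fin m =>
        p.1 ∈ X i ∧ B p.1 p.2 = true)).image (fun p => w p.1 p.2) := by
      unfold wmin
      rw [hseteq]
      exact hSine.csInf_mem
    rw [Finset.mem_image] at hmem
    obtain ⟨⟨a, j⟩, hpmem, hpw⟩ := hmem
    rw [Finset.mem_filter] at hpmem
    exact ⟨a, j, hpmem.2.1, hpmem.2.2, hpw⟩
  choose aW jW haW hBW hwW using hattain
  set B' : Matrix (Fin n) (Fin m) Bool := Matrix.of (fun a j =>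
    if (π a = Sum.inr j) ∨ (∃ i, z i = 0 ∧ aW i = a ∧ jW i = j) then true else false)
    with hB'def
  have hB'iff : ∀ a j, B' a j = true ↔
      ((π a = Sum.inr j) ∨ (∃ i, z i = 0 ∧ aW i = a ∧ jW i = j)) := by
    intro a j
    rw [hB'def]
    by_cases h : (π a = Sum.inr j) ∨ (∃ i, z i = 0 ∧ aW i = a ∧ jW i = j)
    · simpa [h] using h
    · simpa [h] using h
  have hK' : InK B' B := by
    intro a j hab
    rw [hB'iff] at hab
    rcases hab with h | ⟨i, _, ha, hj⟩
    · have h1 := hπ2 a j h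
      by_contra hBf
      have h2 := hB0 a j (by simpa using hBf)
      omega
    · rw [← ha, ← hj]
      exact hBW i
  have hsc' : StructCont A B' := by
    refine suff_main A B' π hinj ?_ ?_ ?_
    · intro i j h
      have h1 := hπ1 i j h
      by_contra hAf
      have h2 := hA0 i j (by simpa using hAf)
      omega
    · intro i j h
      exact (hB'iff i j).mpr (Or.inl h)
    · refine access_of_source_edges A B' ?_
      intro S hS
      obtain ⟨i, hXi⟩ := (hX.2 S).mp hS
      rcases h01z i with hz0 | hz1
      · exact ⟨aW i, by rw [← hXi]; exact haW i, jW i,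
          (hB'iff _ _).mpr (Or.inr ⟨i, hz0, rfl, rfl⟩)⟩
      · have h3 := hC3 i
        rw [hz1] at h3
        have hpos : (∑ a ∈ X i, ∑ j, yB a j) ≠ 0 := by omega
        obtain ⟨a, haXi, hane⟩ := Finset.exists_ne_zero_of_sum_ne_zero hpos
        obtain ⟨j, _, hjne⟩ := Finset.exists_ne_zero_of_sum_ne_zero hane
        have hj1 : yB a j = 1 := by
          rcases h01B a j with h0 | h1
          · exact absurd h0 hjne
          · exact h1
        exact ⟨a, by rw [← hXi]; exact haXi, j,
          (hB'iff _ _).mpr (Or.inl (hyBπ a j hj1))⟩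
  refine ⟨B', hK', hsc', ?_⟩
  set Mf : Finset (Fin n × Fin m) := Finset.univ.filter (fun p => π p.1 = Sum.inr p.2)
    with hMf
  set Z0 : Finset (Fin r) := Finset.univ.filter (fun i => z i = 0) with hZ0
  set img : Finset (Fin n × Fin m) := Z0.image (fun i => (aW i, jW i)) with himg
  have hterm1 : (∑ i, ∑ j, w i j * (yB i j : ℝ)) = ∑ p ∈ Mf, w p.1 p.2 := by
    rw [hMf, Finset.sum_filter, ← Finset.sum_product']
    refine Finset.sum_congr rfl ?_
    rintro ⟨a, j⟩ _
    by_cases h : π a = Sum.inr j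
    · rw [if_pos h, hπ2 a j h]
      norm_num
    · rw [if_neg h]
      have hz' : yB a j = 0 := by
        rcases h01B a j with h0 | h1
        · exact h0
        · exact absurd (hyBπ a j h1) h
      rw [hz']
      norm_num
  have haWinj : ∀ i i' : Fin r, aW i = aW i' → i = i' :=
    fun i i' h => sccX_inj hX (haW i) (h ▸ haW i')
  have himgsum : (∑ p ∈ img, w p.1 p.2) = ∑ i ∈ Z0, w (aW i) (jW i) := by
    rw [himg, Finset.sum_image]
    intro i _ i' _ h
    exact haWinj i i' (congrArg Prod.fst h)
  have hterm2 : (∑ i, (1 - (z i : ℝ)) * wmin B X w i) = ∑ i ∈ Z0, w (aW i) (jW i) := by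
    rw [hZ0, Finset.sum_filter]
    refine Finset.sum_congr rfl ?_
    intro i _
    rcases h01z i with h | h
    · rw [if_pos h, h, ← hwW i]
      norm_num
    · rw [if_neg (by omega), h]
      norm_num
  have hsubset : Finset.univ.filter (fun p : Fin n × Fin m => B' p.1 p.2 = true)
      ⊆ Mf ∪ img := by
    intro p hp
    rw [Finset.mem_filter] at hp
    rw [hB'iff] at hp
    rcases hp.2 with h | ⟨i, hz0, ha, hj⟩
    · exact Finset.mem_union_left _ (by
        rw [hMf]
        exact Finset.mem_filter.mpr ⟨Finset.mem_univ _, h⟩)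
    · refine Finset.mem_union_right _ ?_
      rw [himg, Finset.mem_image]
      refine ⟨i, by rw [hZ0]; exact Finset.mem_filter.mpr ⟨Finset.mem_univ _, hz0⟩, ?_⟩
      rw [ha, hj]
  have hunion_nonneg : ∀ p ∈ Mf ∪ img, 0 ≤ w p.1 p.2 := by
    intro p hp
    rw [Finset.mem_union] at hp
    rcases hp with hp | hp
    · rw [hMf, Finset.mem_filter] at hp
      refine hw p.1 p.2 ?_
      have h1 := hπ2 p.1 p.2 hp.2
      by_contra hBf
      have h2 := hB0 p.1 p.2 (by simpa using hBf)
      omega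
    · rw [himg, Finset.mem_image] at hp
      obtain ⟨i, _, hpi⟩ := hp
      rw [← hpi]
      exact hw _ _ (hBW i)
  calc normw B' w
      = ∑ p ∈ Finset.univ.filter (fun p : Fin n × Fin m => B' p.1 p.2 = true),
          w p.1 p.2 := rfl
    _ ≤ ∑ p ∈ Mf ∪ img, w p.1 p.2 :=
        Finset.sum_le_sum_of_subset_of_nonneg hsubset (fun p hp _ => hunion_nonneg p hp)
    _ ≤ (∑ p ∈ Mf, w p.1 p.2) + ∑ p ∈ img, w p.1 p.2 := by
        have hui := Finset.sum_union_inter (s₁ := Mf) (s₂ := img)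
          (f := fun p : Fin n × Fin m => w p.1 p.2)
        have hnn : 0 ≤ ∑ p ∈ Mf ∩ img, w p.1 p.2 :=
          Finset.sum_nonneg (fun p hp =>
            hunion_nonneg p (Finset.mem_union_left _ (Finset.mem_inter.mp hp).1))
        linarith
    _ = obj2 B X w yB z := by
        unfold obj2
        rw [hterm1, hterm2, himgsum]

end Assembly

end SCtrl

/-- Theorem 2 for `P2` (constrained minimum cost input selection): under Assumptions 1-2,
the minimum of `‖B'‖_w` over all patterns `B' ∈ K(B)` with `(A, B')` structurally
controllable equals the optimal value of the integer linear program `P2ILP`. -/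
theorem P2_eq_P2ILP {n m r : ℕ} (A : Matrix (Fin n) (Fin n) Bool)
    (B : Matrix (Fin n) (Fin m) Bool) (X : Fin r → Finset (Fin n))
    (w : Fin n → Fin m → ℝ)
    (hX : SourceSCCEnum A X) (hsc : StructCont A B)
    (hw : ∀ i j, B i j = true → 0 ≤ w i j) :
    ∃ v : ℝ,
      IsLeast {c : ℝ | ∃ B' : Matrix (Fin n) (Fin m) Bool,
        InK B' B ∧ StructCont A B' ∧ normw B' w = c} v ∧
      IsLeast {c : ℝ | ∃ yA yB z, ILPFeas A B X yA yB z ∧ obj2 B X w yB z = c} v := by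
  classical
  set F : Finset (Matrix (Fin n) (Fin m) Bool) :=
    Finset.univ.filter (fun B' => InK B' B ∧ StructCont A B') with hF
  have hBF : B ∈ F := Finset.mem_filter.mpr ⟨Finset.mem_univ _, fun i j h => h, hsc⟩
  obtain ⟨B₀, hB₀F, hB₀min⟩ := Finset.exists_min_image F (fun B' => normw B' w) ⟨B, hBF⟩
  have hB₀ := Finset.mem_filter.mp hB₀F
  refine ⟨normw B₀ w, ⟨⟨B₀, hB₀.2.1, hB₀.2.2, rfl⟩, ?_⟩, ?_, ?_⟩
  · rintro c ⟨B', hK', hsc', rfl⟩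
    exact hB₀min B' (Finset.mem_filter.mpr ⟨Finset.mem_univ _, hK', hsc'⟩)
  · obtain ⟨yA, yB, z, hfeas, hle⟩ :=
      SCtrl.ilp_of_Bp A B B₀ X w hX hw hB₀.2.1 hB₀.2.2
    obtain ⟨B'', hK'', hsc'', hge⟩ :=
      SCtrl.Bp_of_ilp A B X w hX hw hsc yA yB z hfeas
    have h1 : normw B₀ w ≤ normw B'' w :=
      hB₀min B'' (Finset.mem_filter.mpr ⟨Finset.mem_univ _, hK'', hsc''⟩)
    exact ⟨yA, yB, z, hfeas, le_antisymm hle (by linarith)⟩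
  · rintro c ⟨yA, yB, z, hfeas, rfl⟩
    obtain ⟨B', hK', hsc', hle⟩ :=
      SCtrl.Bp_of_ilp A B X w hX hw hsc yA yB z hfeas
    have := hB₀min B' (Finset.mem_filter.mpr ⟨Finset.mem_univ _, hK', hsc'⟩)
    linarith
end

section
/- Suppose (A,B) satisfies Assumptions 1 and 2. Then there exists an optimal solution B' to the constrained minimum cost input selection problem P2 (minimizing ||B'||_w over B' ∈ K(B) with (A,B') structurally controllable) satisfying ||B'||_0 ≤ n. Consequently, for every k ≥ n, the optimal value of problem P3 (the same minimization with the additional constraint ||B'||_0 ≤ k) equals the optimal value of problem P2. -/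
open MvPolynomial Matrix Finset

namespace P2Aux

/-- variable index type: one variable per (possible) entry of A and of B -/
abbrev Idx (n m : ℕ) : Type := (Fin n × Fin n) ⊕ (Fin n × Fin m)

abbrev Rg (n m : ℕ) : Type := MvPolynomial (Idx n m) ℝ

variable {n m : ℕ}

noncomputable def PA (m : ℕ) (A : Matrix (Fin n) (Fin n) Bool) : Matrix (Fin n) (Fin n) (Rg n m) :=
  Matrix.of fun i j => if A i j then X (Sum.inl (i, j)) else 0

noncomputable def PB (B : Matrix (Fin n) (Fin m) Bool) : Matrix (Fin n) (Fin m) (Rg n m) :=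
  Matrix.of fun i j => if B i j then X (Sum.inr (i, j)) else 0

/-- the controllability matrix -/
abbrev ctrb {α : Type*} [CommRing α] (tA : Matrix (Fin n) (Fin n) α)
    (tB : Matrix (Fin n) (Fin m) α) : Matrix (Fin n) (Fin n × Fin m) α :=
  Matrix.of fun (i : Fin n) (p : Fin n × Fin m) => (tA ^ (p.1 : ℕ) * tB) i p.2

lemma ctrb_map {α β : Type*} [CommRing α] [CommRing β] (f : α →+* β)
    (tA : Matrix (Fin n) (Fin n) α) (tB : Matrix (Fin n) (Fin m) α) :
    (ctrb tA tB).map f = ctrb (tA.map f) (tB.map f) := by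
  ext i p
  have h1 : (tA ^ (p.1 : ℕ)).map f = (tA.map f) ^ (p.1 : ℕ) := by
    simpa using map_pow f.mapMatrix tA (p.1 : ℕ)
  have : ((tA ^ (p.1 : ℕ) * tB).map f) = (tA.map f) ^ (p.1 : ℕ) * tB.map f := by
    rw [Matrix.map_mul, h1]
  calc ((ctrb tA tB).map f) i p = ((tA ^ (p.1 : ℕ) * tB).map f) i p.2 := rfl
    _ = ((tA.map f) ^ (p.1 : ℕ) * tB.map f) i p.2 := by rw [this]

lemma PA_map_eval (A : Matrix (Fin n) (Fin n) Bool) (θ : Idx n m → ℝ) :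
    (PA m A).map (eval θ) = Matrix.of fun i j => if A i j then θ (Sum.inl (i, j)) else 0 := by
  ext i j
  by_cases h : A i j <;> simp [PA, Matrix.map_apply, h]

lemma PB_map_eval (B : Matrix (Fin n) (Fin m) Bool) (θ : Idx n m → ℝ) :
    (PB B).map (eval θ) = Matrix.of fun i j => if B i j then θ (Sum.inr (i, j)) else 0 := by
  ext i j
  by_cases h : B i j <;> simp [PB, Matrix.map_apply, h]

lemma rank_submatrix_id_le {k : ℕ} {κ : Type*} [Fintype κ] (M : Matrix (Fin k) κ ℝ)
    (c : Fin k → κ) : (M.submatrix id c).rank ≤ M.rank := by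
  rw [Matrix.rank_eq_finrank_span_cols, Matrix.rank_eq_finrank_span_cols]
  apply Submodule.finrank_mono
  apply Submodule.span_mono
  rintro _ ⟨j, rfl⟩
  exact ⟨c j, rfl⟩

lemma isWH_prod {σ' α : Type*} (w : σ' → ℕ) (s : Finset α) (f : α → MvPolynomial σ' ℝ)
    (g : α → ℕ) (h : ∀ a ∈ s, IsWeightedHomogeneous w (f a) (g a)) :
    IsWeightedHomogeneous w (∏ a ∈ s, f a) (∑ a ∈ s, g a) := by
  induction s using Finset.cons_induction with
  | empty => simpa using isWeightedHomogeneous_one ℝ w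
  | cons a s ha ih =>
    rw [Finset.prod_cons, Finset.sum_cons]
    exact (h a (Finset.mem_cons_self a s)).mul (ih fun b hb => h b (Finset.mem_cons_of_mem hb))



variable {n m : ℕ}

theorem sparse_exists (A : Matrix (Fin n) (Fin n) Bool) (B' : Matrix (Fin n) (Fin m) Bool)
    (h : StructCont A B') :
    ∃ B'' : Matrix (Fin n) (Fin m) Bool, InK B'' B' ∧ StructCont A B'' ∧ norm0 B'' ≤ n := by
  classical
  obtain ⟨tA, tB, hre, hct⟩ := h
  have hrank : (ctrb tA tB).rank = n := hct
  set C : Matrix (Fin n) (Fin n × Fin m) ℝ := ctrb tA tB with hCdef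
  -- columns of C span ℝⁿ
  have hspan : Submodule.span ℝ (Set.range Cᵀ) = ⊤ := by
    apply Submodule.eq_top_of_finrank_eq
    exact (Matrix.rank_eq_finrank_span_cols C).symm.trans (hrank.trans (Module.finrank_fin_fun ℝ).symm)
  obtain ⟨s, hs_sub, hs_span, hs_ind⟩ := exists_linearIndependent ℝ (Set.range Cᵀ)
  have hsspan : ⊤ ≤ Submodule.span ℝ (Set.range ((↑) : s → (Fin n → ℝ))) := by
    rw [Subtype.range_coe, hs_span, hspan]
  let b : Module.Basis s ℝ (Fin n → ℝ) := Module.Basis.mk hs_ind hsspan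
  let e : s ≃ Fin n := b.indexEquiv (Pi.basisFun ℝ (Fin n))
  choose c hc using fun k : Fin n => hs_sub (e.symm k).2
  set N : Matrix (Fin n) (Fin n) ℝ := C.submatrix id c with hNdef
  have hNcols : (fun k => Nᵀ k) = (((↑) : s → (Fin n → ℝ)) ∘ e.symm) := by
    funext k; ext i; exact congrFun (hc k) i
  have hNind : LinearIndependent ℝ (fun k => Nᵀ k) := by
    rw [hNcols]; exact hs_ind.comp e.symm e.symm.injective
  have hNdet : N.det ≠ 0 := by
    have hu : IsUnit N := Matrix.linearIndependent_cols_iff_isUnit.mp hNind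
    exact ((Matrix.isUnit_iff_isUnit_det N).mp hu).ne_zero
  -- polynomial side
  set P : Matrix (Fin n) (Fin n × Fin m) (Rg n m) := ctrb (PA m A) (PB B') with hPdef
  set PM : Matrix (Fin n) (Fin n) (Rg n m) := P.submatrix id c with hPMdef
  set φ : Idx n m → ℝ := Sum.elim (fun q => tA q.1 q.2) (fun q => tB q.1 q.2) with hφdef
  have hmapA : (PA m A).map (eval φ) = tA := by
    rw [PA_map_eval]
    ext i j
    by_cases h : A i j
    · simp [h, hφdef]
    · simp only [Bool.not_eq_true] at h
      simp [h, (hre.1 i j h).symm]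
  have hmapB : (PB B').map (eval φ) = tB := by
    rw [PB_map_eval]
    ext i j
    by_cases h : B' i j
    · simp [h, hφdef]
    · simp only [Bool.not_eq_true] at h
      simp [h, (hre.2 i j h).symm]
  have hevaldet : eval φ PM.det = N.det := by
    have : PM.map (eval φ) = N := by
      rw [hPMdef, ← Matrix.submatrix_map, hPdef,
        show ((ctrb (PA m A) (PB B')).map (eval φ) : Matrix (Fin n) (Fin n × Fin m) ℝ)
          = ctrb ((PA m A).map (eval φ)) ((PB B').map (eval φ)) from ctrb_map (eval φ) _ _,
        hmapA, hmapB]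
    rw [show (eval φ) PM.det = ((eval φ : Rg n m →+* ℝ).mapMatrix PM).det from
      RingHom.map_det _ _]
    congr 1
  have hp0 : PM.det ≠ 0 := fun h0 => hNdet (by rw [← hevaldet, h0, map_zero])
  obtain ⟨d, hd⟩ : PM.det.support.Nonempty :=
    Finset.nonempty_iff_ne_empty.mpr fun h0 => hp0 (MvPolynomial.support_eq_empty.mp h0)
  -- the sparse pattern
  set B'' : Matrix (Fin n) (Fin m) Bool :=
    Matrix.of (fun i j => decide ((Sum.inr (i, j) : Idx n m) ∈ d.support)) with hB''def
  -- variables occurring in PM.det are confined to the pattern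
  set V : Set (Idx n m) := fun v =>
    match v with
    | Sum.inl q => A q.1 q.2 = true
    | Sum.inr q => B' q.1 q.2 = true
    with hVdef
  have hsuppA : ∀ i j, (PA m A) i j ∈ MvPolynomial.supported ℝ V := by
    intro i j
    by_cases h : A i j
    · show (if A i j then (X (Sum.inl (i, j)) : Rg n m) else 0) ∈ _
      rw [if_pos h]
      exact MvPolynomial.X_mem_supported.mpr h
    · show (if A i j then (X (Sum.inl (i, j)) : Rg n m) else 0) ∈ _
      rw [if_neg h]
      exact zero_mem _
  have hsuppB : ∀ i j, (PB B') i j ∈ MvPolynomial.supported ℝ V := by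
    intro i j
    by_cases h : B' i j
    · show (if B' i j then (X (Sum.inr (i, j)) : Rg n m) else 0) ∈ _
      rw [if_pos h]
      exact MvPolynomial.X_mem_supported.mpr h
    · show (if B' i j then (X (Sum.inr (i, j)) : Rg n m) else 0) ∈ _
      rw [if_neg h]
      exact zero_mem _
  have hsuppApow : ∀ (k : ℕ) i j, ((PA m A) ^ k) i j ∈ MvPolynomial.supported ℝ V := by
    intro k
    induction k with
    | zero =>
      intro i j
      rw [pow_zero]
      by_cases h : i = j
      · rw [show ((1 : Matrix (Fin n) (Fin n) (Rg n m)) i j) = 1 from by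
          rw [h]; exact Matrix.one_apply_eq j]
        exact one_mem _
      · rw [Matrix.one_apply_ne h]
        exact zero_mem _
    | succ k ih =>
      intro i j
      rw [pow_succ, Matrix.mul_apply]
      exact Subalgebra.sum_mem _ fun l _ => Subalgebra.mul_mem _ (ih i l) (hsuppA l j)
  have hsuppP : ∀ i p, P i p ∈ MvPolynomial.supported ℝ V := by
    intro i p
    show ((PA m A) ^ (p.1 : ℕ) * (PB B')) i p.2 ∈ _
    rw [Matrix.mul_apply]
    exact Subalgebra.sum_mem _ fun l _ => Subalgebra.mul_mem _ (hsuppApow _ i l) (hsuppB l p.2)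
  have hdet_supp : PM.det ∈ MvPolynomial.supported ℝ V := by
    rw [Matrix.det_apply]
    refine Subalgebra.sum_mem _ fun σ _ => ?_
    rw [Units.smul_def]
    refine zsmul_mem ?_ _
    exact Subalgebra.prod_mem _ fun i _ => hsuppP _ _
  have hmemvar : ∀ i j, (Sum.inr (i, j) : Idx n m) ∈ d.support → B' i j = true := by
    intro i j hmem
    have hv : (Sum.inr (i, j) : Idx n m) ∈ PM.det.vars :=
      (MvPolynomial.mem_vars _).mpr ⟨d, hd, hmem⟩
    exact (MvPolynomial.mem_supported.mp hdet_supp) hv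
  have hInK : InK B'' B' := by
    intro i j hij
    apply hmemvar i j
    simpa [hB''def] using hij
  -- weighted homogeneity of degree n in the B-variables
  set wt : Idx n m → ℕ := Sum.elim (fun _ => 0) (fun _ => 1) with hwtdef
  have hWA : ∀ i j, IsWeightedHomogeneous wt ((PA m A) i j) 0 := by
    intro i j
    by_cases h : A i j
    · show IsWeightedHomogeneous wt (if A i j then (X (Sum.inl (i, j)) : Rg n m) else 0) 0
      rw [if_pos h]
      exact isWeightedHomogeneous_X ℝ wt (Sum.inl (i, j))
    · show IsWeightedHomogeneous wt (if A i j then (X (Sum.inl (i, j)) : Rg n m) else 0) 0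
      rw [if_neg h]
      exact isWeightedHomogeneous_zero ℝ wt 0
  have hWB : ∀ i j, IsWeightedHomogeneous wt ((PB B') i j) 1 := by
    intro i j
    by_cases h : B' i j
    · show IsWeightedHomogeneous wt (if B' i j then (X (Sum.inr (i, j)) : Rg n m) else 0) 1
      rw [if_pos h]
      exact isWeightedHomogeneous_X ℝ wt (Sum.inr (i, j))
    · show IsWeightedHomogeneous wt (if B' i j then (X (Sum.inr (i, j)) : Rg n m) else 0) 1
      rw [if_neg h]
      exact isWeightedHomogeneous_zero ℝ wt 1
  have hWApow : ∀ (k : ℕ) i j, IsWeightedHomogeneous wt (((PA m A) ^ k) i j) 0 := by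
    intro k
    induction k with
    | zero =>
      intro i j
      rw [pow_zero]
      by_cases h : i = j
      · rw [show ((1 : Matrix (Fin n) (Fin n) (Rg n m)) i j) = 1 from by
          rw [h]; exact Matrix.one_apply_eq j]
        exact isWeightedHomogeneous_one ℝ wt
      · rw [Matrix.one_apply_ne h]
        exact isWeightedHomogeneous_zero ℝ wt 0
    | succ k ih =>
      intro i j
      rw [pow_succ, Matrix.mul_apply]
      have : ∀ l ∈ Finset.univ, ((PA m A) ^ k) i l * (PA m A) l j ∈
          weightedHomogeneousSubmodule ℝ wt 0 := fun l _ =>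
        (mem_weightedHomogeneousSubmodule _ _ _ _).mpr
          (by simpa using (ih i l).mul (hWA l j))
      simpa [mem_weightedHomogeneousSubmodule] using
        Submodule.sum_mem (weightedHomogeneousSubmodule ℝ wt 0) this
  have hWP : ∀ i p, IsWeightedHomogeneous wt (P i p) 1 := by
    intro i p
    show IsWeightedHomogeneous wt (((PA m A) ^ (p.1 : ℕ) * (PB B')) i p.2) 1
    rw [Matrix.mul_apply]
    have : ∀ l ∈ Finset.univ, ((PA m A) ^ (p.1 : ℕ)) i l * (PB B') l p.2 ∈
        weightedHomogeneousSubmodule ℝ wt 1 := fun l _ =>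
      (mem_weightedHomogeneousSubmodule _ _ _ _).mpr
        (by simpa using (hWApow _ i l).mul (hWB l p.2))
    simpa [mem_weightedHomogeneousSubmodule] using
      Submodule.sum_mem (weightedHomogeneousSubmodule ℝ wt 1) this
  have hWdet : IsWeightedHomogeneous wt PM.det n := by
    rw [Matrix.det_apply]
    have : ∀ σ ∈ Finset.univ, Equiv.Perm.sign σ • ∏ i, PM (σ i) i ∈
        weightedHomogeneousSubmodule ℝ wt n := by
      intro σ _
      rw [Units.smul_def]
      refine zsmul_mem ?_ _
      refine (mem_weightedHomogeneousSubmodule _ _ _ _).mpr ?_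
      have := isWH_prod wt Finset.univ (fun i => PM (σ i) i) (fun _ => 1)
        (fun i _ => hWP _ _)
      simpa using this
    simpa [mem_weightedHomogeneousSubmodule] using
      Submodule.sum_mem (weightedHomogeneousSubmodule ℝ wt n) this
  have hdeg : (Finsupp.weight wt) d = n :=
    hWdet (MvPolynomial.mem_support_iff.mp hd)
  -- the norm0 bound
  have hn0 : norm0 B'' ≤ n := by
    have hcard1 : norm0 B'' ≤ (d.support.filter fun v => wt v ≠ 0).card := by
      apply Finset.card_le_card_of_injOn (fun p : Fin n × Fin m => (Sum.inr p : Idx n m))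
      · intro p hp
        simp only [Finset.mem_coe, norm0, Finset.mem_filter, Finset.mem_univ, true_and] at hp
        have hmem : (Sum.inr (p.1, p.2) : Idx n m) ∈ d.support := by
          simpa [hB''def] using hp
        rw [Finset.mem_coe, Finset.mem_filter]
        constructor
        · simpa using hmem
        · simp [hwtdef]
      · intro p _ q _ hpq
        exact Sum.inr_injective hpq
    have hcard2 : (d.support.filter fun v => wt v ≠ 0).card ≤ (Finsupp.weight wt) d := by
      rw [Finsupp.weight_apply, Finsupp.sum]
      calc (d.support.filter fun v => wt v ≠ 0).card
          = ∑ v ∈ d.support.filter fun v => wt v ≠ 0, 1 := by simp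
        _ ≤ ∑ v ∈ d.support.filter fun v => wt v ≠ 0, d v • wt v := by
            apply Finset.sum_le_sum
            intro v hv
            rw [Finset.mem_filter] at hv
            have h1 : 1 ≤ d v := Nat.one_le_iff_ne_zero.mpr (Finsupp.mem_support_iff.mp hv.1)
            have h2 : 1 ≤ wt v := Nat.one_le_iff_ne_zero.mpr hv.2
            calc 1 = 1 * 1 := (one_mul 1).symm
              _ ≤ d v * wt v := Nat.mul_le_mul h1 h2
              _ = d v • wt v := (smul_eq_mul ..).symm
        _ ≤ ∑ v ∈ d.support, d v • wt v :=
            Finset.sum_le_sum_of_subset (Finset.filter_subset _ _)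
    calc norm0 B'' ≤ _ := hcard1
      _ ≤ _ := hcard2
      _ = n := hdeg
  -- structural controllability of the sparse pattern
  refine ⟨B'', hInK, ?_, hn0⟩
  -- the substitution killing the unused B-variables
  set g : Idx n m → Rg n m := fun v =>
    match v with
    | Sum.inl q => X (Sum.inl q)
    | Sum.inr q => if (Sum.inr q : Idx n m) ∈ d.support then X (Sum.inr q) else 0
    with hgdef
  set ψ : Rg n m →+* Rg n m := eval₂Hom MvPolynomial.C g with hψdef
  have hψX : ∀ v, ψ (X v) = g v := fun v => eval₂Hom_X' MvPolynomial.C g v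
  have hψA : (PA m A).map ψ = PA m A := by
    apply Matrix.ext
    intro i j
    show ψ (if A i j then (X (Sum.inl (i, j)) : Rg n m) else 0) =
      (if A i j then (X (Sum.inl (i, j)) : Rg n m) else 0)
    by_cases h : A i j
    · rw [if_pos h, hψX]
    · rw [if_neg h, map_zero]
  have hψB : (PB B').map ψ = PB B'' := by
    apply Matrix.ext
    intro i j
    show ψ (if B' i j then (X (Sum.inr (i, j)) : Rg n m) else 0) =
      (if B'' i j then (X (Sum.inr (i, j)) : Rg n m) else 0)
    by_cases h : B' i j
    · rw [if_pos h, hψX]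
      show (if (Sum.inr (i, j) : Idx n m) ∈ d.support then (X (Sum.inr (i, j)) : Rg n m) else 0)
        = _
      by_cases hm : (Sum.inr (i, j) : Idx n m) ∈ d.support
      · rw [if_pos hm, if_pos (by simpa [hB''def] using hm)]
      · rw [if_neg hm, if_neg (by simpa [hB''def] using hm)]
    · have hB''f : B'' i j = false := by
        rw [Bool.eq_false_iff]
        intro htrue
        exact h (hInK i j htrue)
      rw [if_neg h, map_zero, if_neg (by simp [hB''f])]
  set P2 : Matrix (Fin n) (Fin n × Fin m) (Rg n m) := ctrb (PA m A) (PB B'') with hP2def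
  have hq : ψ PM.det = ((P2.submatrix id c)).det := by
    rw [show ψ PM.det = (ψ.mapMatrix PM).det from RingHom.map_det _ _]
    congr 1
    show PM.map ψ = P2.submatrix id c
    rw [hPMdef, ← Matrix.submatrix_map, hPdef, ctrb_map ψ, hψA, hψB]
  -- the coefficient of d survives
  have hkeep : ∀ e : Idx n m →₀ ℕ, (∀ v ∈ e.support, g v = X v) →
      ψ ((monomial e) (MvPolynomial.coeff e PM.det)) =
        (monomial e) (MvPolynomial.coeff e PM.det) := by
    intro e hk
    rw [hψdef]
    show eval₂ MvPolynomial.C g ((monomial e) _) = _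
    rw [MvPolynomial.eval₂_monomial, MvPolynomial.monomial_eq]
    congr 1
    apply Finsupp.prod_congr
    intro v hv
    rw [hk v hv]
  have hcoeff : MvPolynomial.coeff d (ψ PM.det) = MvPolynomial.coeff d PM.det := by
    conv_lhs => rw [PM.det.as_sum, map_sum]
    rw [MvPolynomial.coeff_sum]
    rw [Finset.sum_eq_single_of_mem d hd]
    · rw [hkeep d (fun v hv => by
        rcases v with q | q
        · rfl
        · show (if (Sum.inr q : Idx n m) ∈ d.support then (X (Sum.inr q) : Rg n m) else 0) = _
          rw [if_pos hv])]
      rw [MvPolynomial.coeff_monomial, if_pos rfl]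
    · intro e _ hne
      by_cases hk : ∀ v ∈ e.support, g v = X v
      · rw [hkeep e hk]
        rw [MvPolynomial.coeff_monomial, if_neg hne]
      · push_neg at hk
        obtain ⟨v, hv, hvne⟩ := hk
        have hg0 : g v = 0 := by
          rcases v with q | q
          · exact absurd rfl hvne
          · show (if (Sum.inr q : Idx n m) ∈ d.support then (X (Sum.inr q) : Rg n m) else 0) = 0
            by_cases hm : (Sum.inr q : Idx n m) ∈ d.support
            · exact absurd (if_pos hm) hvne
            · exact if_neg hm
        have : ψ ((monomial e) (MvPolynomial.coeff e PM.det)) = 0 := by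
          rw [hψdef]
          show eval₂ MvPolynomial.C g ((monomial e) _) = 0
          rw [MvPolynomial.eval₂_monomial]
          rw [Finsupp.prod]
          rw [Finset.prod_eq_zero hv (by
            rw [hg0]
            exact zero_pow (Finsupp.mem_support_iff.mp hv))]
          rw [mul_zero]
        rw [this, MvPolynomial.coeff_zero]
  have hp2ne : (P2.submatrix id c).det ≠ 0 := by
    intro h0
    have : MvPolynomial.coeff d PM.det = 0 := by
      rw [← hcoeff, hq, h0, MvPolynomial.coeff_zero]
    exact (MvPolynomial.mem_support_iff.mp hd) this
  -- a nonvanishing real point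
  obtain ⟨θ, hθ⟩ : ∃ θ : Idx n m → ℝ, eval θ ((P2.submatrix id c).det) ≠ 0 := by
    by_contra hall
    push_neg at hall
    exact hp2ne (MvPolynomial.funext fun x => by rw [hall x, map_zero])
  set tA'' : Matrix (Fin n) (Fin n) ℝ :=
    Matrix.of fun i j => if A i j then θ (Sum.inl (i, j)) else 0 with htA''
  set tB'' : Matrix (Fin n) (Fin m) ℝ :=
    Matrix.of fun i j => if B'' i j then θ (Sum.inr (i, j)) else 0 with htB''
  have hevr : ((ctrb tA'' tB'').submatrix id c).det ≠ 0 := by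
    have hmap : (P2.submatrix id c).map (eval θ) = (ctrb tA'' tB'').submatrix id c := by
      rw [← Matrix.submatrix_map, hP2def, ctrb_map (eval θ), PA_map_eval, PB_map_eval]
    have : eval θ ((P2.submatrix id c).det) = ((ctrb tA'' tB'').submatrix id c).det := by
      rw [show (eval θ) (P2.submatrix id c).det =
        ((eval θ : Rg n m →+* ℝ).mapMatrix (P2.submatrix id c)).det from RingHom.map_det _ _]
      congr 1
    rw [← this]
    exact hθ
  refine ⟨tA'', tB'', ⟨fun i j h => by simp [htA'', h], fun i j h => by simp [htB'', h]⟩, ?_⟩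
  show (ctrb tA'' tB'').rank = n
  have hle : (ctrb tA'' tB'').rank ≤ n := by
    simpa using (ctrb tA'' tB'').rank_le_card_height
  have hge : n ≤ (ctrb tA'' tB'').rank := by
    have hu : IsUnit ((ctrb tA'' tB'').submatrix id c) :=
      (Matrix.isUnit_iff_isUnit_det _).mpr (isUnit_iff_ne_zero.mpr hevr)
    have := Matrix.rank_of_isUnit _ hu
    calc n = ((ctrb tA'' tB'').submatrix id c).rank := by rw [this, Fintype.card_fin]
      _ ≤ (ctrb tA'' tB'').rank := rank_submatrix_id_le _ c
  exact le_antisymm hle hge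

end P2Aux

/-- Under Assumptions 1-2, there exists an optimal solution `B'` to the constrained minimum
cost input selection problem `P2` (minimizing `‖B'‖_w` over `B' ∈ K(B)` with `(A, B')`
structurally controllable) satisfying `‖B'‖₀ ≤ n`.  Consequently, for every `k ≥ n`, the
optimal value of problem `P3` (the same minimization with the additional constraint
`‖B'‖₀ ≤ k`) equals the optimal value of problem `P2`. -/
theorem P2_has_sparse_optimal_and_P3_eq_P2 {n m : ℕ} (A : Matrix (Fin n) (Fin n) Bool)
    (B : Matrix (Fin n) (Fin m) Bool) (w : Fin n → Fin m → ℝ)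
    (hsc : StructCont A B) (hw : ∀ i j, B i j = true → 0 ≤ w i j) :
    (∃ B' : Matrix (Fin n) (Fin m) Bool,
      InK B' B ∧ StructCont A B' ∧ norm0 B' ≤ n ∧
      IsLeast {c : ℝ | ∃ B'' : Matrix (Fin n) (Fin m) Bool,
        InK B'' B ∧ StructCont A B'' ∧ normw B'' w = c} (normw B' w)) ∧
    (∀ k : ℕ, n ≤ k → ∃ v : ℝ,
      IsLeast {c : ℝ | ∃ B'' : Matrix (Fin n) (Fin m) Bool,
        InK B'' B ∧ StructCont A B'' ∧ normw B'' w = c} v ∧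
      IsLeast {c : ℝ | ∃ B'' : Matrix (Fin n) (Fin m) Bool,
        InK B'' B ∧ StructCont A B'' ∧ norm0 B'' ≤ k ∧ normw B'' w = c} v) := by
  classical
  set Feas : Finset (Matrix (Fin n) (Fin m) Bool) :=
    Finset.univ.filter (fun B'' => InK B'' B ∧ StructCont A B'') with hFeas
  have hBF : B ∈ Feas := by
    rw [hFeas, Finset.mem_filter]
    exact ⟨Finset.mem_univ _, fun i j h => h, hsc⟩
  obtain ⟨Bo, hBo, hmin⟩ := Feas.exists_min_image (normw · w) ⟨B, hBF⟩
  rw [hFeas, Finset.mem_filter] at hBo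
  obtain ⟨-, hBoK, hBoSC⟩ := hBo
  obtain ⟨B', hInK', hSC', hn0'⟩ := P2Aux.sparse_exists A Bo hBoSC
  have hB'K : InK B' B := fun i j h => hBoK i j (hInK' i j h)
  have hB'F : B' ∈ Feas := by
    rw [hFeas, Finset.mem_filter]
    exact ⟨Finset.mem_univ _, hB'K, hSC'⟩
  -- normw B' w ≤ normw Bo w
  have hle : normw B' w ≤ normw Bo w := by
    apply Finset.sum_le_sum_of_subset_of_nonneg
    · intro p hp
      rw [Finset.mem_filter] at hp ⊢
      exact ⟨hp.1, hInK' p.1 p.2 hp.2⟩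
    · intro p hp _
      rw [Finset.mem_filter] at hp
      exact hw p.1 p.2 (hBoK p.1 p.2 hp.2)
  have hge : normw Bo w ≤ normw B' w := hmin B' hB'F
  have heq : normw B' w = normw Bo w := le_antisymm hle hge
  have hleast : IsLeast {c : ℝ | ∃ B'' : Matrix (Fin n) (Fin m) Bool,
      InK B'' B ∧ StructCont A B'' ∧ normw B'' w = c} (normw B' w) := by
    constructor
    · exact ⟨B', hB'K, hSC', rfl⟩
    · rintro c ⟨B'', hK'', hSC'', rfl⟩
      have : B'' ∈ Feas := by
        rw [hFeas, Finset.mem_filter]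
        exact ⟨Finset.mem_univ _, hK'', hSC''⟩
      calc normw B' w = normw Bo w := heq
        _ ≤ normw B'' w := hmin B'' this
  refine ⟨⟨B', hB'K, hSC', hn0', hleast⟩, fun k hk => ⟨normw B' w, hleast, ?_, ?_⟩⟩
  · exact ⟨B', hB'K, hSC', le_trans hn0' hk, rfl⟩
  · rintro c ⟨B'', hK'', hSC'', -, rfl⟩
    exact hleast.2 ⟨B'', hK'', hSC'', rfl⟩
end

section
/- Suppose (A,B) satisfies Assumptions 1 and 2 with w_max = max_{(i,j)∈N(B)} w_{ij} > 0, and let γ = n·w_max. Let N* be the minimum of ||B'||_0 over B' ∈ K(B) with (A,B') structurally controllable. Then every B* minimizing ||B'||_w + γ·||B'||_0 over all B' ∈ K(B) with (A,B') structurally controllable satisfies ||B*||_0 = N* and ||B*||_w = min{||B'||_w : B' ∈ K(B), (A,B') structurally controllable, ||B'||_0 = N*}; i.e., the γ-penalized problem solves the problem of finding a sparsest structurally controllable input pattern of minimum total cost among the sparsest ones. -/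
/-- The index type of allowed entries of a pattern. -/
abbrev PIdx {n m : ℕ} (B' : Matrix (Fin n) (Fin m) Bool) : Type :=
  {v : Fin n × Fin m // B' v.1 v.2 = true}

/-- Fill a pattern with given real values (zero outside the pattern). -/
def fill {n m : ℕ} (B' : Matrix (Fin n) (Fin m) Bool) (t : PIdx B' → ℝ) :
    Matrix (Fin n) (Fin m) ℝ :=
  Matrix.of fun a j => if h : B' a j = true then t ⟨(a, j), h⟩ else 0

lemma fill_pos {n m : ℕ} {B' : Matrix (Fin n) (Fin m) Bool} (t : PIdx B' → ℝ)
    {a : Fin n} {j : Fin m} (h : B' a j = true) : fill B' t a j = t ⟨(a, j), h⟩ :=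
  dif_pos h

lemma fill_neg {n m : ℕ} {B' : Matrix (Fin n) (Fin m) Bool} (t : PIdx B' → ℝ)
    {a : Fin n} {j : Fin m} (h : ¬ B' a j = true) : fill B' t a j = 0 :=
  dif_neg h

lemma fill_key {n m : ℕ} (B' : Matrix (Fin n) (Fin m) Bool) (t : PIdx B' → ℝ)
    (tA : Matrix (Fin n) (Fin n) ℝ) (k : ℕ) (j : Fin m) (i : Fin n) :
    (tA ^ k * fill B' t) i j
      = ∑ v : PIdx B' , (if (v : Fin n × Fin m).2 = j
          then (tA ^ k) i (v : Fin n × Fin m).1 else 0) * t v := by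
  classical
  rw [Matrix.mul_apply]
  have h1 : ∀ v : PIdx B', (if (v : Fin n × Fin m).2 = j
          then (tA ^ k) i (v : Fin n × Fin m).1 else 0) * t v
      = (if (v : Fin n × Fin m).2 = j then (tA ^ k) i (v : Fin n × Fin m).1 else 0)
          * fill B' t (v : Fin n × Fin m).1 (v : Fin n × Fin m).2 := by
    intro v
    rw [fill_pos t v.2]
  rw [Finset.sum_congr rfl fun v _ => h1 v]
  rw [← Finset.sum_subtype (p := fun p : Fin n × Fin m => B' p.1 p.2 = true)
      (Finset.univ.filter fun p : Fin n × Fin m => B' p.1 p.2 = true)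
      (fun x => by simp)
      (fun p => (if p.2 = j then (tA ^ k) i p.1 else 0) * fill B' t p.1 p.2)]
  rw [Finset.sum_subset (Finset.filter_subset _ _) (by
    intro p _ hp
    simp only [Finset.mem_filter, Finset.mem_univ, true_and] at hp
    rw [fill_neg t hp, mul_zero])]
  rw [Fintype.sum_prod_type]
  refine Finset.sum_congr rfl fun a _ => ?_
  simp only [ite_mul, zero_mul]
  rw [Finset.sum_ite_eq' Finset.univ j fun b => (tA ^ k) i a * fill B' t a b]
  simp

open Matrix in
lemma exists_sub_det {n : ℕ} {κ : Type*} [Fintype κ] (M : Matrix (Fin n) κ ℝ)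
    (h : M.rank = n) : ∃ σ : Fin n → κ, (M.submatrix id σ).det ≠ 0 := by
  have hspan : Submodule.span ℝ (Set.range Mᵀ) = ⊤ := by
    apply Submodule.eq_top_of_finrank_eq
    rw [show Set.range Mᵀ = Set.range M.col from rfl, ← Matrix.rank_eq_finrank_span_cols, h, Module.finrank_pi]
    simp
  obtain ⟨s, hs_sub, hs_span, hs_li⟩ := exists_linearIndependent ℝ (Set.range Mᵀ)
  rw [hspan] at hs_span
  have hfin : s.Finite := hs_li.setFinite
  haveI := hfin.fintype
  have hcard : Fintype.card s = n := by
    have b : Module.Basis s ℝ (Fin n → ℝ) := Module.Basis.mk hs_li (by rw [Subtype.range_coe, hs_span])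
    have := Module.finrank_eq_card_basis b
    rw [Module.finrank_pi] at this
    simpa using this.symm
  obtain ⟨e⟩ : Nonempty (Fin n ≃ s) :=
    ⟨(Fintype.equivFinOfCardEq hcard).symm⟩
  have hg : ∀ x : s, ∃ c : κ, Mᵀ c = (x : Fin n → ℝ) := fun x => hs_sub x.2
  choose g hgspec using hg
  refine ⟨fun l => g (e l), ?_⟩
  have hli : LinearIndependent ℝ fun l : Fin n => (M.submatrix id fun l => g (e l))ᵀ l := by
    have : (fun l : Fin n => (M.submatrix id fun l => g (e l))ᵀ l)
        = (fun x : s => (x : Fin n → ℝ)) ∘ e := by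
      funext l
      simp [Matrix.transpose, Matrix.submatrix, ← hgspec (e l)]
      rfl
    rw [this]
    exact hs_li.comp e e.injective
  have := Matrix.linearIndependent_cols_iff_isUnit.mp hli
  rw [Matrix.isUnit_iff_isUnit_det, isUnit_iff_ne_zero] at this
  exact this

open MvPolynomial in
lemma reduce {n m : ℕ} (A : Matrix (Fin n) (Fin n) Bool) (B' : Matrix (Fin n) (Fin m) Bool)
    (h : StructCont A B') : ∃ B'', InK B'' B' ∧ StructCont A B'' ∧ norm0 B'' ≤ n := by
  classical
  obtain ⟨tA, tB, ⟨hA, hB⟩, hc⟩ := h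
  obtain ⟨σ, hσ⟩ := exists_sub_det
    (Matrix.of fun (i : Fin n) (p : Fin n × Fin m) => (tA ^ (p.1 : ℕ) * tB) i p.2) hc
  -- the determinant polynomial
  set Q : Matrix (Fin n) (Fin n) (MvPolynomial (PIdx B') ℝ) :=
    Matrix.of fun i l => ∑ v : PIdx B',
      C (if (v : Fin n × Fin m).2 = (σ l).2
          then (tA ^ ((σ l).1 : ℕ)) i (v : Fin n × Fin m).1 else 0) * X v with hQ
  have hQeval : ∀ t : PIdx B' → ℝ, ∀ i l,
      eval t (Q i l) = (tA ^ ((σ l).1 : ℕ) * fill B' t) i (σ l).2 := by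
    intro t i l
    rw [fill_key, hQ]
    simp [Matrix.of_apply]
  have heval : ∀ t : PIdx B' → ℝ,
      eval t Q.det = ((Matrix.of fun i (p : Fin n × Fin m) =>
        (tA ^ (p.1 : ℕ) * fill B' t) i p.2).submatrix id σ).det := by
    intro t
    rw [show eval t Q.det = (Q.map (eval t)).det from RingHom.map_det _ _]
    congr 1
    ext i l
    simp only [Matrix.map_apply, Matrix.submatrix_apply, Matrix.of_apply, id_eq]
    exact hQeval t i l
  -- evaluating at the entries of tB recovers tB
  have hfill_tB : fill B' (fun v => tB (v : Fin n × Fin m).1 (v : Fin n × Fin m).2) = tB := by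
    ext a j
    by_cases hb : B' a j = true
    · rw [fill_pos _ hb]
    · rw [fill_neg _ hb, hB a j (Bool.not_eq_true _ ▸ hb)]
  have hP0 : Q.det ≠ 0 := by
    intro h0
    apply hσ
    have := heval (fun v => tB (v : Fin n × Fin m).1 (v : Fin n × Fin m).2)
    rw [hfill_tB, h0, map_zero] at this
    exact this.symm
  -- total degree bound
  have hdeg : Q.det.totalDegree ≤ n := by
    rw [Matrix.det_apply]
    refine le_trans (totalDegree_finset_sum _ _) ?_
    refine Finset.sup_le fun π _ => ?_
    refine le_trans (totalDegree_smul_le _ _) ?_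
    refine le_trans (totalDegree_finset_prod _ _) ?_
    have hone : ∀ i : Fin n, (Q (π i) i).totalDegree ≤ 1 := by
      intro i
      rw [hQ]
      simp only [Matrix.of_apply]
      refine le_trans (totalDegree_finset_sum _ _) ?_
      refine Finset.sup_le fun v _ => ?_
      refine le_trans (totalDegree_mul _ _) ?_
      simp [totalDegree_C, totalDegree_X]
    calc (∑ i, (Q (π i) i).totalDegree) ≤ ∑ _i : Fin n, 1 :=
          Finset.sum_le_sum fun i _ => hone i
      _ = n := by simp
  obtain ⟨d, hd⟩ := support_nonempty.mpr hP0
  have hdcard : d.support.card ≤ n := by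
    have h1 : d.support.card ≤ d.sum fun _ e => e := by
      rw [Finsupp.sum]
      calc d.support.card = ∑ _v ∈ d.support, 1 := by simp
        _ ≤ ∑ v ∈ d.support, d v :=
          Finset.sum_le_sum fun v hv => Nat.one_le_iff_ne_zero.mpr (Finsupp.mem_support_iff.mp hv)
    exact le_trans h1 (le_trans (le_totalDegree hd) hdeg)
  -- restrict the polynomial to the variables of the monomial d
  set g : PIdx B' → MvPolynomial (PIdx B') ℝ := fun v => if v ∈ d.support then X v else 0 with hg
  have haev : ∀ (t : PIdx B' → ℝ) (p : MvPolynomial (PIdx B') ℝ), aeval t p = eval t p := by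
    intro t p
    rw [← coe_aeval_eq_eval]
    rfl
  have hterm_sub : ∀ u : PIdx B' →₀ ℕ, ∀ c : ℝ, u.support ⊆ d.support →
      aeval g (monomial u c) = monomial u c := by
    intro u c hsub
    rw [aeval_monomial]
    have : (u.prod fun v e => g v ^ e) = u.prod fun v e => (X v : MvPolynomial _ ℝ) ^ e := by
      apply Finsupp.prod_congr
      intro v hv
      simp only [hg]
      rw [if_pos (hsub hv)]
    rw [this, algebraMap_eq, ← monomial_eq]
  have hterm_nsub : ∀ u : PIdx B' →₀ ℕ, ∀ c : ℝ, ¬ u.support ⊆ d.support →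
      aeval g (monomial u c) = 0 := by
    intro u c hsub
    rw [aeval_monomial]
    obtain ⟨v0, hv0u, hv0d⟩ := Finset.not_subset.mp hsub
    have : (u.prod fun v e => g v ^ e) = 0 := by
      apply Finset.prod_eq_zero hv0u
      rw [hg]
      simp only [if_neg hv0d]
      exact zero_pow (Finsupp.mem_support_iff.mp hv0u)
    rw [this, mul_zero]
  have hcoeff : coeff d (aeval g Q.det) = coeff d Q.det := by
    conv_lhs => rw [← support_sum_monomial_coeff Q.det]
    rw [map_sum, coeff_sum]
    rw [Finset.sum_eq_single d]
    · rw [hterm_sub d _ subset_rfl]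
      simp [coeff_monomial]
    · intro u _ hu
      by_cases hsub : u.support ⊆ d.support
      · rw [hterm_sub u _ hsub]
        simp [coeff_monomial, hu]
      · rw [hterm_nsub u _ hsub, coeff_zero]
    · intro hnd
      exact absurd hd hnd
  have hφ0 : aeval g Q.det ≠ 0 := by
    intro h0
    rw [h0, coeff_zero] at hcoeff
    exact (mem_support_iff.mp hd) hcoeff.symm
  obtain ⟨t', ht'⟩ : ∃ t' : PIdx B' → ℝ, eval t' (aeval g Q.det) ≠ 0 := by
    by_contra hall
    push_neg at hall
    exact hφ0 (MvPolynomial.funext fun x => by rw [hall x, map_zero])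
  set t'' : PIdx B' → ℝ := fun v => if v ∈ d.support then t' v else 0 with ht''
  have hfun : (fun i => aeval t' (g i)) = t'' := by
    funext v
    simp only [hg, ht'']
    split_ifs with hv
    · simp
    · simp
  have hev : eval t'' Q.det = eval t' (aeval g Q.det) := by
    calc eval t'' Q.det = aeval t'' Q.det := (haev _ _).symm
      _ = aeval (fun i => aeval t' (g i)) Q.det := by rw [hfun]
      _ = aeval t' (bind₁ g Q.det) := (aeval_bind₁ _ _ _).symm
      _ = eval t' (aeval g Q.det) := by rw [← aeval_eq_bind₁, haev]
  -- assemble the sparse pattern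
  refine ⟨Matrix.of fun a j => decide (∃ v ∈ d.support, (v : Fin n × Fin m) = (a, j)), ?_, ?_, ?_⟩
  · intro a j haj
    simp only [Matrix.of_apply, decide_eq_true_eq] at haj
    obtain ⟨v, _, hv⟩ := haj
    have := v.2
    rw [hv] at this
    exact this
  · refine ⟨tA, fill B' t'', ⟨hA, ?_⟩, ?_⟩
    · intro a j haj
      simp only [Matrix.of_apply, decide_eq_false_iff_not] at haj
      push_neg at haj
      by_cases hb : B' a j = true
      · rw [fill_pos _ hb, ht'']
        have : (⟨(a, j), hb⟩ : PIdx B') ∉ d.support := fun hmem => haj _ hmem rfl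
        simp [this]
      · exact fill_neg _ hb
    · -- controllability
      have hdet : ((Matrix.of fun i (p : Fin n × Fin m) =>
          (tA ^ (p.1 : ℕ) * fill B' t'') i p.2).submatrix id σ).det ≠ 0 := by
        rw [← heval t'', hev]
        exact ht'
      unfold Controllable
      have hub : (Matrix.of fun i (p : Fin n × Fin m) =>
          (tA ^ (p.1 : ℕ) * fill B' t'') i p.2).rank ≤ n := by
        have := Matrix.rank_le_card_height (Matrix.of fun i (p : Fin n × Fin m) =>
          (tA ^ (p.1 : ℕ) * fill B' t'') i p.2)
        simpa using this
      have hlb : n ≤ (Matrix.of fun i (p : Fin n × Fin m) =>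
          (tA ^ (p.1 : ℕ) * fill B' t'') i p.2).rank := by
        set W := Matrix.of fun i (p : Fin n × Fin m) => (tA ^ (p.1 : ℕ) * fill B' t'') i p.2
        have h1 : (W.submatrix id σ).rank = n := by
          simpa using Matrix.rank_of_isUnit _ (Matrix.isUnit_iff_isUnit_det _ |>.mpr
            (isUnit_iff_ne_zero.mpr hdet))
        have h2 : (W.submatrix id σ).rank ≤ W.rank := by
          rw [Matrix.rank_eq_finrank_span_cols, Matrix.rank_eq_finrank_span_cols]
          refine Submodule.finrank_mono (Submodule.span_mono ?_)
          rintro x ⟨l, rfl⟩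
          exact ⟨σ l, rfl⟩
        omega
      omega
  · -- cardinality
    unfold norm0
    have hsubim : (Finset.univ.filter fun p : Fin n × Fin m =>
        (Matrix.of fun a j => decide (∃ v ∈ d.support, (v : Fin n × Fin m) = (a, j))) p.1 p.2
          = true) ⊆ d.support.image Subtype.val := by
      intro p hp
      simp only [Finset.mem_filter, Matrix.of_apply, decide_eq_true_eq] at hp
      obtain ⟨v, hv, hveq⟩ := hp.2
      exact Finset.mem_image.mpr ⟨v, hv, by rw [hveq]⟩
    calc _ ≤ (d.support.image Subtype.val).card :=
        Finset.card_le_card hsubim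
      _ ≤ d.support.card := Finset.card_image_le
      _ ≤ n := hdcard

lemma normw_nonneg {n m : ℕ} {B' B : Matrix (Fin n) (Fin m) Bool} {w : Fin n → Fin m → ℝ}
    (hK : InK B' B) (hw : ∀ i j, B i j = true → 0 ≤ w i j) : 0 ≤ normw B' w :=
  Finset.sum_nonneg fun p hp => hw p.1 p.2 (hK p.1 p.2 (Finset.mem_filter.mp hp).2)

lemma normw_le_wmax {n m : ℕ} {B' B : Matrix (Fin n) (Fin m) Bool} {w : Fin n → Fin m → ℝ}
    {wmax : ℝ} (hK : InK B' B) (hwmax : ∀ i j, B i j = true → w i j ≤ wmax) :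
    normw B' w ≤ wmax * (norm0 B' : ℝ) := by
  have := Finset.sum_le_card_nsmul
    (Finset.univ.filter fun p : Fin n × Fin m => B' p.1 p.2 = true)
    (fun p => w p.1 p.2) wmax
    (fun p hp => hwmax p.1 p.2 (hK p.1 p.2 (Finset.mem_filter.mp hp).2))
  rw [nsmul_eq_mul] at this
  unfold normw norm0
  linarith [this]

lemma normw_mono {n m : ℕ} {B'' B' B : Matrix (Fin n) (Fin m) Bool} {w : Fin n → Fin m → ℝ}
    (h1 : InK B'' B') (h2 : InK B' B) (hw : ∀ i j, B i j = true → 0 ≤ w i j) :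
    normw B'' w ≤ normw B' w := by
  apply Finset.sum_le_sum_of_subset_of_nonneg
  · intro p hp
    simp only [Finset.mem_filter, Finset.mem_univ, true_and] at hp ⊢
    exact h1 p.1 p.2 hp
  · intro p hp _
    exact hw p.1 p.2 (h2 p.1 p.2 (Finset.mem_filter.mp hp).2)

/-- Remark 3: under Assumptions 1-2 with `w_max = max_{(i,j) ∈ N(B)} w_{ij} > 0`, let
`γ = n * w_max` and let `N*` be the minimum of `‖B'‖₀` over `B' ∈ K(B)` with `(A, B')`
structurally controllable.  Then every `B*` minimizing `‖B'‖_w + γ * ‖B'‖₀` over all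
`B' ∈ K(B)` with `(A, B')` structurally controllable satisfies `‖B*‖₀ = N*` and
`‖B*‖_w = min {‖B'‖_w : B' ∈ K(B), (A, B') structurally controllable, ‖B'‖₀ = N*}`;
i.e. the `γ`-penalized problem finds a sparsest structurally controllable input pattern of
minimum total cost among the sparsest ones. -/
theorem penalized_solves_sparsest_min_cost {n m : ℕ} (A : Matrix (Fin n) (Fin n) Bool)
    (B : Matrix (Fin n) (Fin m) Bool) (w : Fin n → Fin m → ℝ) (wmax : ℝ)
    (hsc : StructCont A B) (hw : ∀ i j, B i j = true → 0 ≤ w i j)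
    (hwmax : IsGreatest {c : ℝ | ∃ i j, B i j = true ∧ w i j = c} wmax)
    (hwmaxpos : 0 < wmax)
    (Nstar : ℕ)
    (hNstar : IsLeast {c : ℕ | ∃ B' : Matrix (Fin n) (Fin m) Bool,
      InK B' B ∧ StructCont A B' ∧ norm0 B' = c} Nstar)
    (Bstar : Matrix (Fin n) (Fin m) Bool)
    (hBstar : InK Bstar B ∧ StructCont A Bstar)
    (hBstar_opt : ∀ B' : Matrix (Fin n) (Fin m) Bool, InK B' B → StructCont A B' →
      normw Bstar w + (n : ℝ) * wmax * (norm0 Bstar : ℝ) ≤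
        normw B' w + (n : ℝ) * wmax * (norm0 B' : ℝ)) :
    norm0 Bstar = Nstar ∧
      IsLeast {c : ℝ | ∃ B' : Matrix (Fin n) (Fin m) Bool,
        InK B' B ∧ StructCont A B' ∧ norm0 B' = Nstar ∧ normw B' w = c}
        (normw Bstar w) := by
  classical
  obtain ⟨hK, hS⟩ := hBstar
  have hw_le : ∀ i j, B i j = true → w i j ≤ wmax := fun i j hb => hwmax.2 ⟨i, j, hb, rfl⟩
  obtain ⟨B0, hB0K, hB0S, hB0card⟩ := hNstar.1
  obtain ⟨B'', hB''K', hB''S, hB''card⟩ := reduce A Bstar hS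
  have hB''K : InK B'' B := fun i j hij => hK i j (hB''K' i j hij)
  -- `norm0 Bstar ≤ n`
  have hcle : norm0 Bstar ≤ n := by
    by_cases hn : n = 0
    · subst hn
      have h0 : norm0 Bstar ≤ (Finset.univ : Finset (Fin 0 × Fin m)).card :=
        Finset.card_le_card (Finset.filter_subset _ _)
      simpa using h0
    · have hnpos : 0 < (n : ℝ) := by positivity
      have hγpos : 0 < (n : ℝ) * wmax := mul_pos hnpos hwmaxpos
      have h1 := hBstar_opt B'' hB''K hB''S
      have h2 : normw B'' w ≤ normw Bstar w := normw_mono hB''K' hK hw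
      have h3 : (norm0 Bstar : ℝ) ≤ (norm0 B'' : ℝ) := by
        have := mul_le_mul_iff_right₀ hγpos |>.mp (by linarith :
          (n : ℝ) * wmax * (norm0 Bstar : ℝ) ≤ (n : ℝ) * wmax * (norm0 B'' : ℝ))
        exact this
      have h4 : norm0 Bstar ≤ norm0 B'' := by exact_mod_cast h3
      exact le_trans h4 hB''card
  have hNle : Nstar ≤ norm0 Bstar := hNstar.2 ⟨Bstar, hK, hS, rfl⟩
  -- first claim
  have hmain : norm0 Bstar = Nstar := by
    by_contra hne
    have hlt : Nstar + 1 ≤ norm0 Bstar := by omega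
    have h3 := hBstar_opt B0 hB0K hB0S
    rw [hB0card] at h3
    have h4 : normw B0 w ≤ wmax * (Nstar : ℝ) := by
      have := normw_le_wmax hB0K hw_le
      rw [hB0card] at this
      exact this
    have h5 : 0 ≤ normw Bstar w := normw_nonneg hK hw
    have h6 : (Nstar : ℝ) + 1 ≤ (norm0 Bstar : ℝ) := by exact_mod_cast hlt
    have h7 : (norm0 Bstar : ℝ) ≤ (n : ℝ) := by exact_mod_cast hcle
    have h8 : (Nstar : ℝ) + 1 ≤ (n : ℝ) := le_trans h6 h7
    have key : (n:ℝ) * wmax * (Nstar:ℝ) + (n:ℝ) * wmax ≤ (n:ℝ) * wmax * (norm0 Bstar : ℝ) := by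
      calc (n:ℝ) * wmax * (Nstar:ℝ) + (n:ℝ) * wmax = (n:ℝ) * wmax * ((Nstar:ℝ) + 1) := by ring
        _ ≤ (n:ℝ) * wmax * (norm0 Bstar : ℝ) :=
          mul_le_mul_of_nonneg_left h6 (by positivity)
    have e5 : (n:ℝ) * wmax ≤ wmax * (Nstar:ℝ) := by linarith [h3, h4, h5, key]
    have e6 : wmax * (Nstar:ℝ) < wmax * (n:ℝ) :=
      mul_lt_mul_of_pos_left (by linarith : (Nstar:ℝ) < (n:ℝ)) hwmaxpos
    have e7 : (n:ℝ) * wmax = wmax * (n:ℝ) := mul_comm _ _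
    linarith
  refine ⟨hmain, ⟨⟨Bstar, hK, hS, hmain, rfl⟩, ?_⟩⟩
  rintro c ⟨B', hK', hS', hc', rfl⟩
  have := hBstar_opt B' hK' hS'
  rw [hmain, hc'] at this
  linarith
end
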